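/- arXiv:0803.2958 — 11 statements merged into one kernel-verified Lean document; each statement's English description precedes it below -/
import Mathlib

section
/- Let f be a convex function from an interval I ⊆ ℝ to ℝ, and let x₁, x₂, x₃ be three points from I. Then f(x₁) + f(x₂) + f(x₃) + 3·f((x₁+x₂+x₃)/3) ≥ 2·f((x₂+x₃)/2) + 2·f((x₃+x₁)/2) + 2·f((x₁+x₂)/2). -/
private lemma popoviciu_sorted (I : Set ℝ) (f : ℝ → ℝ) (hf : ConvexOn ℝ I f)
    (a b c : ℝ) (ha : a ∈ I) (hb : b ∈ I) (hc : c ∈ I)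
    (hab : a ≤ b) (hbc : b ≤ c) (hbm : b ≤ (a + b + c) / 3) :
    f a + f b + f c + 3 * f ((a + b + c) / 3) ≥
      2 * f ((b + c) / 2) + 2 * f ((a + c) / 2) + 2 * f ((a + b) / 2) := by
  have hm2 : (a + b + c) / 3 ∈ I := by
    have h1 : (1/2 : ℝ) • b + (1/2 : ℝ) • c ∈ I :=
      hf.1 hb hc (by norm_num) (by norm_num) (by norm_num)
    have h2 : (1/3 : ℝ) • a + (2/3 : ℝ) • ((1/2 : ℝ) • b + (1/2 : ℝ) • c) ∈ I :=
      hf.1 ha h1 (by norm_num) (by norm_num) (by norm_num)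
    have e : (1/3 : ℝ) • a + (2/3 : ℝ) • ((1/2 : ℝ) • b + (1/2 : ℝ) • c) = (a + b + c) / 3 := by
      simp only [smul_eq_mul]; ring
    rwa [e] at h2
  obtain ⟨m, hm3, hmI, hbm', hmc⟩ :
      ∃ m : ℝ, 3 * m = a + b + c ∧ m ∈ I ∧ b ≤ m ∧ m ≤ c := by
    exact ⟨(a + b + c) / 3, by ring, hm2, hbm, by linarith⟩
  have hgoal : (a + b + c) / 3 = m := by linarith
  rw [hgoal]
  rcases eq_or_lt_of_le hmc with heq | hmc'
  · have hca : a = c := by linarith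
    have hcb : b = c := by linarith
    rw [hca, hcb, ← heq, show (m + m) / 2 = m by ring]
    linarith
  · have hdne : c - m ≠ 0 := by intro h; linarith
    set s : ℝ := (c - b) / (2 * (c - m)) with hs
    set t : ℝ := (c - a) / (2 * (c - m)) with ht
    have hs0 : 0 ≤ s := by rw [hs]; apply div_nonneg <;> linarith
    have hs1 : s ≤ 1 := by rw [hs, div_le_one (by linarith)]; linarith
    have ht0 : 0 ≤ t := by rw [ht]; apply div_nonneg <;> linarith
    have ht1 : t ≤ 1 := by rw [ht, div_le_one (by linarith)]; linarith
    have hst : s + t = 3 / 2 := by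
      rw [hs, ht, ← add_div, div_eq_iff (by simpa using hdne)]
      linarith
    have h1 : f ((b + c) / 2) ≤ s * f m + (1 - s) * f c := by
      have key := hf.2 hmI hc hs0 (show (0:ℝ) ≤ 1 - s by linarith)
        (show s + (1 - s) = 1 by ring)
      simp only [smul_eq_mul] at key
      have harg : s * m + (1 - s) * c = (b + c) / 2 := by
        rw [hs]; field_simp; ring
      rwa [harg] at key
    have h2 : f ((a + c) / 2) ≤ t * f m + (1 - t) * f c := by
      have key := hf.2 hmI hc ht0 (show (0:ℝ) ≤ 1 - t by linarith)
        (show t + (1 - t) = 1 by ring)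
      simp only [smul_eq_mul] at key
      have harg : t * m + (1 - t) * c = (a + c) / 2 := by
        rw [ht]; field_simp; ring
      rwa [harg] at key
    have h3 : f ((a + b) / 2) ≤ (1/2) * f a + (1/2) * f b := by
      have key := hf.2 ha hb (show (0:ℝ) ≤ 1/2 by norm_num)
        (show (0:ℝ) ≤ 1/2 by norm_num) (show (1/2 : ℝ) + 1/2 = 1 by norm_num)
      simp only [smul_eq_mul] at key
      have harg : (1/2 : ℝ) * a + (1/2 : ℝ) * b = (a + b) / 2 := by ring
      rwa [harg] at key
    have hcomb : 2 * (s * f m + (1 - s) * f c) + 2 * (t * f m + (1 - t) * f c)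
        = 3 * f m + f c := by
      linear_combination (2 * f m - 2 * f c) * hst
    linarith
private lemma popoviciu_sorted' (I : Set ℝ) (f : ℝ → ℝ) (hf : ConvexOn ℝ I f)
    (a b c : ℝ) (ha : a ∈ I) (hb : b ∈ I) (hc : c ∈ I)
    (hab : a ≤ b) (hbc : b ≤ c) (hbm : (a + b + c) / 3 ≤ b) :
    f a + f b + f c + 3 * f ((a + b + c) / 3) ≥
      2 * f ((b + c) / 2) + 2 * f ((a + c) / 2) + 2 * f ((a + b) / 2) := by
  have hm2 : (a + b + c) / 3 ∈ I := by
    have h1 : (1/2 : ℝ) • b + (1/2 : ℝ) • c ∈ I :=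
      hf.1 hb hc (by norm_num) (by norm_num) (by norm_num)
    have h2 : (1/3 : ℝ) • a + (2/3 : ℝ) • ((1/2 : ℝ) • b + (1/2 : ℝ) • c) ∈ I :=
      hf.1 ha h1 (by norm_num) (by norm_num) (by norm_num)
    have e : (1/3 : ℝ) • a + (2/3 : ℝ) • ((1/2 : ℝ) • b + (1/2 : ℝ) • c) = (a + b + c) / 3 := by
      simp only [smul_eq_mul]; ring
    rwa [e] at h2
  obtain ⟨m, hm3, hmI, ham, hmb⟩ :
      ∃ m : ℝ, 3 * m = a + b + c ∧ m ∈ I ∧ a ≤ m ∧ m ≤ b := by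
    exact ⟨(a + b + c) / 3, by ring, hm2, by linarith, hbm⟩
  have hgoal : (a + b + c) / 3 = m := by linarith
  rw [hgoal]
  rcases eq_or_lt_of_le ham with heq | ham'
  · have hba : b = a := by linarith
    have hca : c = a := by linarith
    rw [hba, hca, heq, show (m + m) / 2 = m by ring]
    linarith
  · have hdne : m - a ≠ 0 := by intro h; linarith
    set s : ℝ := (b - a) / (2 * (m - a)) with hs
    set t : ℝ := (c - a) / (2 * (m - a)) with ht
    have hs0 : 0 ≤ s := by rw [hs]; apply div_nonneg <;> linarith
    have hs1 : s ≤ 1 := by rw [hs, div_le_one (by linarith)]; linarith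
    have ht0 : 0 ≤ t := by rw [ht]; apply div_nonneg <;> linarith
    have ht1 : t ≤ 1 := by rw [ht, div_le_one (by linarith)]; linarith
    have hst : s + t = 3 / 2 := by
      rw [hs, ht, ← add_div, div_eq_iff (by simpa using hdne)]
      linarith
    have h1 : f ((a + b) / 2) ≤ (1 - s) * f a + s * f m := by
      have key := hf.2 ha hmI (show (0:ℝ) ≤ 1 - s by linarith) hs0
        (show (1 - s) + s = 1 by ring)
      simp only [smul_eq_mul] at key
      have harg : (1 - s) * a + s * m = (a + b) / 2 := by
        rw [hs]; field_simp; ring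
      rwa [harg] at key
    have h2 : f ((a + c) / 2) ≤ (1 - t) * f a + t * f m := by
      have key := hf.2 ha hmI (show (0:ℝ) ≤ 1 - t by linarith) ht0
        (show (1 - t) + t = 1 by ring)
      simp only [smul_eq_mul] at key
      have harg : (1 - t) * a + t * m = (a + c) / 2 := by
        rw [ht]; field_simp; ring
      rwa [harg] at key
    have h3 : f ((b + c) / 2) ≤ (1/2) * f b + (1/2) * f c := by
      have key := hf.2 hb hc (show (0:ℝ) ≤ 1/2 by norm_num)
        (show (0:ℝ) ≤ 1/2 by norm_num) (show (1/2 : ℝ) + 1/2 = 1 by norm_num)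
      simp only [smul_eq_mul] at key
      have harg : (1/2 : ℝ) * b + (1/2 : ℝ) * c = (b + c) / 2 := by ring
      rwa [harg] at key
    have hcomb : 2 * ((1 - s) * f a + s * f m) + 2 * ((1 - t) * f a + t * f m)
        = f a + 3 * f m := by
      linear_combination (2 * f m - 2 * f a) * hst
    linarith

private lemma popoviciu_ord (I : Set ℝ) (f : ℝ → ℝ) (hf : ConvexOn ℝ I f)
    (a b c : ℝ) (ha : a ∈ I) (hb : b ∈ I) (hc : c ∈ I)
    (hab : a ≤ b) (hbc : b ≤ c) :
    f a + f b + f c + 3 * f ((a + b + c) / 3) ≥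
      2 * f ((b + c) / 2) + 2 * f ((a + c) / 2) + 2 * f ((a + b) / 2) := by
  rcases le_total b ((a + b + c) / 3) with h | h
  · exact popoviciu_sorted I f hf a b c ha hb hc hab hbc h
  · exact popoviciu_sorted' I f hf a b c ha hb hc hab hbc h

theorem popoviciu (I : Set ℝ) (f : ℝ → ℝ) (hf : ConvexOn ℝ I f)
    (x₁ x₂ x₃ : ℝ) (hx₁ : x₁ ∈ I) (hx₂ : x₂ ∈ I) (hx₃ : x₃ ∈ I) :
    f x₁ + f x₂ + f x₃ + 3 * f ((x₁ + x₂ + x₃) / 3) ≥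
      2 * f ((x₂ + x₃) / 2) + 2 * f ((x₃ + x₁) / 2) + 2 * f ((x₁ + x₂) / 2) := by
  rcases le_total x₁ x₂ with h12 | h12 <;> rcases le_total x₂ x₃ with h23 | h23 <;>
    rcases le_total x₁ x₃ with h13 | h13
  · have H := popoviciu_ord I f hf x₁ x₂ x₃ hx₁ hx₂ hx₃ h12 h23
    ring_nf at H ⊢; linarith
  · have H := popoviciu_ord I f hf x₁ x₂ x₃ hx₁ hx₂ hx₃ h12 h23
    ring_nf at H ⊢; linarith
  · have H := popoviciu_ord I f hf x₁ x₃ x₂ hx₁ hx₃ hx₂ h13 h23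
    ring_nf at H ⊢; linarith
  · have H := popoviciu_ord I f hf x₃ x₁ x₂ hx₃ hx₁ hx₂ h13 h12
    ring_nf at H ⊢; linarith
  · have H := popoviciu_ord I f hf x₂ x₁ x₃ hx₂ hx₁ hx₃ h12 h13
    ring_nf at H ⊢; linarith
  · have H := popoviciu_ord I f hf x₂ x₃ x₁ hx₂ hx₃ hx₁ h23 h13
    ring_nf at H ⊢; linarith
  · have H := popoviciu_ord I f hf x₂ x₁ x₃ hx₂ hx₁ hx₃ h12 h13
    ring_nf at H ⊢; linarith
  · have H := popoviciu_ord I f hf x₃ x₂ x₁ hx₃ hx₂ hx₁ h23 h12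
    ring_nf at H ⊢; linarith
end

section
/- Let f be convex on an interval I ⊆ ℝ, let x₁, x₂, x₃ ∈ I, and let w₁, w₂, w₃ be nonnegative reals with w₂+w₃ ≠ 0, w₃+w₁ ≠ 0, w₁+w₂ ≠ 0. Then w₁f(x₁) + w₂f(x₂) + w₃f(x₃) + (w₁+w₂+w₃)·f((w₁x₁+w₂x₂+w₃x₃)/(w₁+w₂+w₃)) ≥ (w₂+w₃)·f((w₂x₂+w₃x₃)/(w₂+w₃)) + (w₃+w₁)·f((w₃x₃+w₁x₁)/(w₃+w₁)) + (w₁+w₂)·f((w₁x₁+w₂x₂)/(w₁+w₂)). -/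
lemma wp_chord {I : Set ℝ} {f : ℝ → ℝ} (hf : ConvexOn ℝ I f) {a b y : ℝ}
    (ha : a ∈ I) (hb : b ∈ I) (h1 : a ≤ y) (h2 : y ≤ b) :
    (b - a) * f y ≤ (b - y) * f a + (y - a) * f b := by
  rcases eq_or_lt_of_le (h1.trans h2) with heq | hab
  · have hy : y = a := le_antisymm (heq ▸ h2) h1
    subst hy; rw [← heq]; ring_nf; linarith
  · have hba : (0:ℝ) < b - a := sub_pos.2 hab
    have ht1 : (0:ℝ) ≤ (b - y)/(b - a) := div_nonneg (by linarith) hba.le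
    have ht2 : (0:ℝ) ≤ (y - a)/(b - a) := div_nonneg (by linarith) hba.le
    have hsum : (b - y)/(b - a) + (y - a)/(b - a) = 1 := by field_simp; ring
    have h := hf.2 ha hb ht1 ht2 hsum
    simp only [smul_eq_mul] at h
    have harg : (b - y)/(b - a) * a + (y - a)/(b - a) * b = y := by
      field_simp; ring
    rw [harg] at h
    have h' := mul_le_mul_of_nonneg_left h hba.le
    have he : (b - a) * ((b - y)/(b - a) * f a + (y - a)/(b - a) * f b)
        = (b - y) * f a + (y - a) * f b := by field_simp
    linarith [he ▸ h']

lemma wp_mem {I : Set ℝ} {f : ℝ → ℝ} (hf : ConvexOn ℝ I f) {x y w v : ℝ}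
    (hx : x ∈ I) (hy : y ∈ I) (hw : 0 ≤ w) (hv : 0 ≤ v) (hwv : w + v ≠ 0) :
    (w * x + v * y) / (w + v) ∈ I := by
  have hp : (0:ℝ) < w + v := lt_of_le_of_ne (by linarith) (Ne.symm hwv)
  have := hf.1 hx hy (div_nonneg hw hp.le) (div_nonneg hv hp.le)
    (by field_simp)
  simpa [smul_eq_mul, div_mul_eq_mul_div, ← add_div] using this

lemma wp_jensen2 {I : Set ℝ} {f : ℝ → ℝ} (hf : ConvexOn ℝ I f) {x y w v : ℝ}
    (hx : x ∈ I) (hy : y ∈ I) (hw : 0 ≤ w) (hv : 0 ≤ v) (hwv : w + v ≠ 0) :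
    (w + v) * f ((w * x + v * y) / (w + v)) ≤ w * f x + v * f y := by
  have hp : (0:ℝ) < w + v := lt_of_le_of_ne (by linarith) (Ne.symm hwv)
  have h := hf.2 hx hy (div_nonneg hw hp.le) (div_nonneg hv hp.le)
    (by field_simp)
  simp only [smul_eq_mul] at h
  have harg : w/(w+v) * x + v/(w+v) * y = (w * x + v * y) / (w + v) := by
    field_simp
  rw [harg] at h
  have h' := mul_le_mul_of_nonneg_left h hp.le
  have he : (w + v) * (w/(w+v) * f x + v/(w+v) * f y) = w * f x + v * f y := by
    field_simp
  linarith [he ▸ h']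

lemma wp_key (I : Set ℝ) (f : ℝ → ℝ) (hf : ConvexOn ℝ I f)
    (x₁ x₂ x₃ : ℝ) (hx₁ : x₁ ∈ I) (hx₂ : x₂ ∈ I) (hx₃ : x₃ ∈ I)
    (w₁ w₂ w₃ : ℝ) (hw₁ : 0 ≤ w₁) (hw₂ : 0 ≤ w₂) (hw₃ : 0 ≤ w₃)
    (h23 : w₂ + w₃ ≠ 0) (h31 : w₃ + w₁ ≠ 0) (h12 : w₁ + w₂ ≠ 0)
    (hx12 : x₁ ≤ x₂) (hx23 : x₂ ≤ x₃) :
    w₁ * f x₁ + w₂ * f x₂ + w₃ * f x₃ +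
      (w₁ + w₂ + w₃) * f ((w₁ * x₁ + w₂ * x₂ + w₃ * x₃) / (w₁ + w₂ + w₃)) ≥
    (w₂ + w₃) * f ((w₂ * x₂ + w₃ * x₃) / (w₂ + w₃)) +
      (w₃ + w₁) * f ((w₃ * x₃ + w₁ * x₁) / (w₃ + w₁)) +
      (w₁ + w₂) * f ((w₁ * x₁ + w₂ * x₂) / (w₁ + w₂)) := by
  have h13 : w₁ + w₃ ≠ 0 := by rwa [add_comm] at h31
  have hp23 : (0:ℝ) < w₂ + w₃ := lt_of_le_of_ne (by linarith) (Ne.symm h23)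
  have hp13 : (0:ℝ) < w₁ + w₃ := lt_of_le_of_ne (by linarith) (Ne.symm h13)
  have hp12 : (0:ℝ) < w₁ + w₂ := lt_of_le_of_ne (by linarith) (Ne.symm h12)
  have hps : (0:ℝ) < w₁ + w₂ + w₃ := by linarith
  have hs : w₁ + w₂ + w₃ ≠ 0 := hps.ne'
  set m : ℝ := (w₁ * x₁ + w₂ * x₂ + w₃ * x₃) / (w₁ + w₂ + w₃) with hm_def
  set y₁ : ℝ := (w₂ * x₂ + w₃ * x₃) / (w₂ + w₃) with hy1_def
  set y₂ : ℝ := (w₃ * x₃ + w₁ * x₁) / (w₃ + w₁) with hy2_def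
  set y₃ : ℝ := (w₁ * x₁ + w₂ * x₂) / (w₁ + w₂) with hy3_def
  have hsm : (w₁ + w₂ + w₃) * m = w₁ * x₁ + w₂ * x₂ + w₃ * x₃ := by
    rw [hm_def]; field_simp
  have hbal : w₁ * (m - x₁) + w₂ * (m - x₂) + w₃ * (m - x₃) = 0 := by
    linear_combination hsm
  have hm1 : x₁ ≤ m := by
    rw [hm_def, le_div_iff₀ hps]
    nlinarith [mul_le_mul_of_nonneg_left hx12 hw₂,
      mul_le_mul_of_nonneg_left (hx12.trans hx23) hw₃]
  have hm3 : m ≤ x₃ := by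
    rw [hm_def, div_le_iff₀ hps]
    nlinarith [mul_le_mul_of_nonneg_left hx23 hw₂,
      mul_le_mul_of_nonneg_left (hx12.trans hx23) hw₁]
  have hy1I : y₁ ∈ I := wp_mem hf hx₂ hx₃ hw₂ hw₃ h23
  have hmI : m ∈ I := by
    have h := wp_mem hf hx₁ hy1I hw₁ (le_of_lt hp23) (by positivity)
    have he : (w₁ * x₁ + (w₂ + w₃) * y₁) / (w₁ + (w₂ + w₃)) = m := by
      rw [hy1_def, hm_def]; field_simp; ring
    rwa [he] at h
  -- coefficient identities
  have e1 : (w₂ + w₃) * (y₁ - m) = w₁ * (m - x₁) := by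
    rw [hy1_def, hm_def]; field_simp; ring
  have e2 : (w₂ + w₃) * (x₃ - y₁) = w₂ * (x₃ - x₂) := by
    rw [hy1_def]; field_simp; ring
  have e3 : (w₃ + w₁) * (y₂ - m) = w₂ * (m - x₂) := by
    rw [hy2_def, hm_def]; field_simp; ring
  have e4 : (w₃ + w₁) * (x₃ - y₂) = w₁ * (x₃ - x₁) := by
    rw [hy2_def]; field_simp; ring
  have e5 : (w₃ + w₁) * (m - y₂) = w₂ * (x₂ - m) := by linarith
  have e6 : (w₃ + w₁) * (y₂ - x₁) = w₃ * (x₃ - x₁) := by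
    rw [hy2_def]; field_simp; ring
  have e7 : (w₁ + w₂) * (m - y₃) = w₃ * (x₃ - m) := by
    rw [hy3_def, hm_def]; field_simp; ring
  have e8 : (w₁ + w₂) * (y₃ - x₁) = w₂ * (x₂ - x₁) := by
    rw [hy3_def]; field_simp; ring
  have hJ3 : (w₁ + w₂) * f y₃ ≤ w₁ * f x₁ + w₂ * f x₂ := by
    rw [hy3_def]; exact wp_jensen2 hf hx₁ hx₂ hw₁ hw₂ h12
  have hJ1 : (w₂ + w₃) * f y₁ ≤ w₂ * f x₂ + w₃ * f x₃ := by
    rw [hy1_def]; exact wp_jensen2 hf hx₂ hx₃ hw₂ hw₃ h23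
  clear_value m y₁ y₂ y₃
  clear hm_def hy1_def hy2_def hy3_def hsm
  rcases le_total x₂ m with hcase | hcase
  · -- x₂ ≤ m : use Jensen on y₃, chord on [m,x₃] for y₁ y₂
    have hJ := hJ3
    have hy1m : m ≤ y₁ := by
      by_contra hcon; push_neg at hcon
      have hq1 : (w₂ + w₃) * (y₁ - m) < 0 := mul_neg_of_pos_of_neg (by linarith) (by linarith)
      have hq2 : (0:ℝ) ≤ w₁ * (m - x₁) := mul_nonneg (by linarith) (by linarith)
      linarith [e1]
    have hy13 : y₁ ≤ x₃ := by
      by_contra hcon; push_neg at hcon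
      have hq1 : (w₂ + w₃) * (x₃ - y₁) < 0 := mul_neg_of_pos_of_neg (by linarith) (by linarith)
      have hq2 : (0:ℝ) ≤ w₂ * (x₃ - x₂) := mul_nonneg (by linarith) (by linarith)
      linarith [e2]
    have hy2m : m ≤ y₂ := by
      by_contra hcon; push_neg at hcon
      have hq1 : (w₃ + w₁) * (y₂ - m) < 0 := mul_neg_of_pos_of_neg (by linarith) (by linarith)
      have hq2 : (0:ℝ) ≤ w₂ * (m - x₂) := mul_nonneg (by linarith) (by linarith)
      linarith [e3]
    have hy23 : y₂ ≤ x₃ := by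
      by_contra hcon; push_neg at hcon
      have hq1 : (w₃ + w₁) * (x₃ - y₂) < 0 := mul_neg_of_pos_of_neg (by linarith) (by linarith)
      have hq2 : (0:ℝ) ≤ w₁ * (x₃ - x₁) := mul_nonneg (by linarith) (by linarith)
      linarith [e4]
    rcases eq_or_lt_of_le hm3 with hdeg | hm3'
    · -- m = x₃ degenerate
      have ht3 : w₃ * (m - x₃) = 0 := by rw [hdeg]; ring
      have hz1 : w₁ * (m - x₁) = 0 := by
        have a1 := mul_nonneg hw₁ (by linarith : (0:ℝ) ≤ m - x₁)
        have a2 := mul_nonneg hw₂ (by linarith : (0:ℝ) ≤ m - x₂)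
        linarith
      have hz2 : w₂ * (m - x₂) = 0 := by
        have a1 := mul_nonneg hw₁ (by linarith : (0:ℝ) ≤ m - x₁)
        have a2 := mul_nonneg hw₂ (by linarith : (0:ℝ) ≤ m - x₂)
        linarith
      have hy1e : y₁ = m := by
        have h0 : (w₂ + w₃) * (y₁ - m) = 0 := e1.trans hz1
        rcases mul_eq_zero.1 h0 with h | h
        · exact absurd h h23
        · linarith
      have hy2e : y₂ = m := by
        have h0 : (w₃ + w₁) * (y₂ - m) = 0 := e3.trans hz2
        rcases mul_eq_zero.1 h0 with h | h
        · exact absurd h h31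
        · linarith
      rw [hy1e, hy2e, ← hdeg]
      linarith
    · -- m < x₃
      have hc1 : (w₂ + w₃) * ((x₃ - m) * f y₁)
          ≤ (w₂ + w₃) * ((x₃ - y₁) * f m + (y₁ - m) * f x₃) :=
        mul_le_mul_of_nonneg_left (wp_chord hf hmI hx₃ hy1m hy13) hp23.le
      have hc2 : (w₃ + w₁) * ((x₃ - m) * f y₂)
          ≤ (w₃ + w₁) * ((x₃ - y₂) * f m + (y₂ - m) * f x₃) :=
        mul_le_mul_of_nonneg_left (wp_chord hf hmI hx₃ hy2m hy23) (by linarith)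
      have r1 : (w₂ + w₃) * ((x₃ - y₁) * f m) = w₂ * (x₃ - x₂) * f m := by
        linear_combination f m * e2
      have r2 : (w₂ + w₃) * ((y₁ - m) * f x₃) = w₁ * (m - x₁) * f x₃ := by
        linear_combination f x₃ * e1
      have r3 : (w₃ + w₁) * ((x₃ - y₂) * f m) = w₁ * (x₃ - x₁) * f m := by
        linear_combination f m * e4
      have r4 : (w₃ + w₁) * ((y₂ - m) * f x₃) = w₂ * (m - x₂) * f x₃ := by
        linear_combination f x₃ * e3
      have c1 : w₂ * (x₃ - x₂) * f m + w₁ * (x₃ - x₁) * f m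
          = (x₃ - m) * ((w₁ + w₂ + w₃) * f m) := by
        linear_combination f m * hbal
      have c2 : w₁ * (m - x₁) * f x₃ + w₂ * (m - x₂) * f x₃
          = (x₃ - m) * (w₃ * f x₃) := by
        linear_combination f x₃ * hbal
      have key : (x₃ - m) * ((w₂ + w₃) * f y₁ + (w₃ + w₁) * f y₂)
          ≤ (x₃ - m) * ((w₁ + w₂ + w₃) * f m + w₃ * f x₃) := by
        linarith [hc1, hc2, r1, r2, r3, r4, c1, c2]
      have key' : (w₂ + w₃) * f y₁ + (w₃ + w₁) * f y₂
          ≤ (w₁ + w₂ + w₃) * f m + w₃ * f x₃ :=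
        le_of_mul_le_mul_left (by linarith [key]) (by linarith : (0:ℝ) < x₃ - m)
      linarith
  · -- m ≤ x₂ : Jensen on y₁, chord on [x₁,m] for y₂ y₃
    have hJ := hJ1
    have hy2m : y₂ ≤ m := by
      by_contra hcon; push_neg at hcon
      have hq1 : (w₃ + w₁) * (m - y₂) < 0 := mul_neg_of_pos_of_neg (by linarith) (by linarith)
      have hq2 : (0:ℝ) ≤ w₂ * (x₂ - m) := mul_nonneg (by linarith) (by linarith)
      linarith [e5]
    have hy21 : x₁ ≤ y₂ := by
      by_contra hcon; push_neg at hcon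
      have hq1 : (w₃ + w₁) * (y₂ - x₁) < 0 := mul_neg_of_pos_of_neg (by linarith) (by linarith)
      have hq2 : (0:ℝ) ≤ w₃ * (x₃ - x₁) := mul_nonneg (by linarith) (by linarith)
      linarith [e6]
    have hy3m : y₃ ≤ m := by
      by_contra hcon; push_neg at hcon
      have hq1 : (w₁ + w₂) * (m - y₃) < 0 := mul_neg_of_pos_of_neg (by linarith) (by linarith)
      have hq2 : (0:ℝ) ≤ w₃ * (x₃ - m) := mul_nonneg (by linarith) (by linarith)
      linarith [e7]
    have hy31 : x₁ ≤ y₃ := by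
      by_contra hcon; push_neg at hcon
      have hq1 : (w₁ + w₂) * (y₃ - x₁) < 0 := mul_neg_of_pos_of_neg (by linarith) (by linarith)
      have hq2 : (0:ℝ) ≤ w₂ * (x₂ - x₁) := mul_nonneg (by linarith) (by linarith)
      linarith [e8]
    rcases eq_or_lt_of_le hm1 with hdeg | hm1'
    · -- x₁ = m degenerate
      have ht1 : w₁ * (m - x₁) = 0 := by rw [← hdeg]; ring
      have hz2 : w₂ * (x₂ - m) = 0 := by
        have a2 := mul_nonneg hw₂ (by linarith : (0:ℝ) ≤ x₂ - m)
        have a3 := mul_nonneg hw₃ (by linarith : (0:ℝ) ≤ x₃ - m)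
        linarith
      have hz3 : w₃ * (x₃ - m) = 0 := by
        have a2 := mul_nonneg hw₂ (by linarith : (0:ℝ) ≤ x₂ - m)
        have a3 := mul_nonneg hw₃ (by linarith : (0:ℝ) ≤ x₃ - m)
        linarith
      have hy2e : y₂ = m := by
        have h0 : (w₃ + w₁) * (m - y₂) = 0 := e5.trans hz2
        rcases mul_eq_zero.1 h0 with h | h
        · exact absurd h h31
        · linarith
      have hy3e : y₃ = m := by
        have h0 : (w₁ + w₂) * (m - y₃) = 0 := e7.trans hz3
        rcases mul_eq_zero.1 h0 with h | h
        · exact absurd h h12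
        · linarith
      rw [hy2e, hy3e, hdeg]
      linarith
    · -- x₁ < m
      have hc2 : (w₃ + w₁) * ((m - x₁) * f y₂)
          ≤ (w₃ + w₁) * ((m - y₂) * f x₁ + (y₂ - x₁) * f m) :=
        mul_le_mul_of_nonneg_left (wp_chord hf hx₁ hmI hy21 hy2m) (by linarith)
      have hc3 : (w₁ + w₂) * ((m - x₁) * f y₃)
          ≤ (w₁ + w₂) * ((m - y₃) * f x₁ + (y₃ - x₁) * f m) :=
        mul_le_mul_of_nonneg_left (wp_chord hf hx₁ hmI hy31 hy3m) hp12.le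
      have r1 : (w₃ + w₁) * ((m - y₂) * f x₁) = w₂ * (x₂ - m) * f x₁ := by
        linear_combination f x₁ * e5
      have r2 : (w₃ + w₁) * ((y₂ - x₁) * f m) = w₃ * (x₃ - x₁) * f m := by
        linear_combination f m * e6
      have r3 : (w₁ + w₂) * ((m - y₃) * f x₁) = w₃ * (x₃ - m) * f x₁ := by
        linear_combination f x₁ * e7
      have r4 : (w₁ + w₂) * ((y₃ - x₁) * f m) = w₂ * (x₂ - x₁) * f m := by
        linear_combination f m * e8
      have c1 : w₂ * (x₂ - m) * f x₁ + w₃ * (x₃ - m) * f x₁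
          = (m - x₁) * (w₁ * f x₁) := by
        linear_combination (- f x₁) * hbal
      have c2 : w₃ * (x₃ - x₁) * f m + w₂ * (x₂ - x₁) * f m
          = (m - x₁) * ((w₁ + w₂ + w₃) * f m) := by
        linear_combination (- f m) * hbal
      have key : (m - x₁) * ((w₃ + w₁) * f y₂ + (w₁ + w₂) * f y₃)
          ≤ (m - x₁) * (w₁ * f x₁ + (w₁ + w₂ + w₃) * f m) := by
        linarith [hc2, hc3, r1, r2, r3, r4, c1, c2]
      have key' : (w₃ + w₁) * f y₂ + (w₁ + w₂) * f y₃
          ≤ w₁ * f x₁ + (w₁ + w₂ + w₃) * f m :=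
        le_of_mul_le_mul_left (by linarith [key]) (by linarith : (0:ℝ) < m - x₁)
      linarith

theorem weighted_popoviciu (I : Set ℝ) (f : ℝ → ℝ) (hf : ConvexOn ℝ I f)
    (x₁ x₂ x₃ : ℝ) (hx₁ : x₁ ∈ I) (hx₂ : x₂ ∈ I) (hx₃ : x₃ ∈ I)
    (w₁ w₂ w₃ : ℝ) (hw₁ : 0 ≤ w₁) (hw₂ : 0 ≤ w₂) (hw₃ : 0 ≤ w₃)
    (h23 : w₂ + w₃ ≠ 0) (h31 : w₃ + w₁ ≠ 0) (h12 : w₁ + w₂ ≠ 0) :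
    w₁ * f x₁ + w₂ * f x₂ + w₃ * f x₃ +
      (w₁ + w₂ + w₃) * f ((w₁ * x₁ + w₂ * x₂ + w₃ * x₃) / (w₁ + w₂ + w₃)) ≥
    (w₂ + w₃) * f ((w₂ * x₂ + w₃ * x₃) / (w₂ + w₃)) +
      (w₃ + w₁) * f ((w₃ * x₃ + w₁ * x₁) / (w₃ + w₁)) +
      (w₁ + w₂) * f ((w₁ * x₁ + w₂ * x₂) / (w₁ + w₂)) := by
  have n23 : w₃ + w₂ ≠ 0 := fun h => h23 (by linarith)
  have n31 : w₁ + w₃ ≠ 0 := fun h => h31 (by linarith)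
  have n12 : w₂ + w₁ ≠ 0 := fun h => h12 (by linarith)
  rcases le_total x₁ x₂ with a12 | a12
  · rcases le_total x₂ x₃ with a23 | a23
    · -- x₁ ≤ x₂ ≤ x₃
      have H := wp_key I f hf x₁ x₂ x₃ hx₁ hx₂ hx₃ w₁ w₂ w₃ hw₁ hw₂ hw₃ h23 h31 h12 a12 a23
      ring_nf at H ⊢; linarith
    · rcases le_total x₁ x₃ with a13 | a13
      · -- x₁ ≤ x₃ ≤ x₂
        have H := wp_key I f hf x₁ x₃ x₂ hx₁ hx₃ hx₂ w₁ w₃ w₂ hw₁ hw₃ hw₂ n23 n12 n31 a13 a23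
        ring_nf at H ⊢; linarith
      · -- x₃ ≤ x₁ ≤ x₂
        have H := wp_key I f hf x₃ x₁ x₂ hx₃ hx₁ hx₂ w₃ w₁ w₂ hw₃ hw₁ hw₂ h12 h23 h31 a13 a12
        ring_nf at H ⊢; linarith
  · rcases le_total x₁ x₃ with a13 | a13
    · -- x₂ ≤ x₁ ≤ x₃
      have H := wp_key I f hf x₂ x₁ x₃ hx₂ hx₁ hx₃ w₂ w₁ w₃ hw₂ hw₁ hw₃ n31 n23 n12 a12 a13
      ring_nf at H ⊢; linarith
    · rcases le_total x₂ x₃ with a23 | a23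
      · -- x₂ ≤ x₃ ≤ x₁
        have H := wp_key I f hf x₂ x₃ x₁ hx₂ hx₃ hx₁ w₂ w₃ w₁ hw₂ hw₃ hw₁ h31 h12 h23 a23 a13
        ring_nf at H ⊢; linarith
      · -- x₃ ≤ x₂ ≤ x₁
        have H := wp_key I f hf x₃ x₂ x₁ hx₃ hx₂ hx₁ w₃ w₂ w₁ hw₃ hw₂ hw₁ n12 n31 n23 a23 a12
        ring_nf at H ⊢; linarith
end

section
/- Let f be convex on an interval I ⊆ ℝ and x₁, ..., xₙ ∈ I. Then ∑_{i=1}^n f(xᵢ) + n(n−2)·f((x₁+...+xₙ)/n) ≥ ∑_{j=1}^n (n−1)·f((∑_{i≠j} xᵢ)/(n−1)). -/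
open Finset

/-- Adding an affine function preserves convexity. -/
lemma convexOn_affine_add {I : Set ℝ} {f : ℝ → ℝ} (hf : ConvexOn ℝ I f) (m q : ℝ) :
    ConvexOn ℝ I (fun t => f t + (m * t + q)) := by
  refine ⟨hf.1, fun x hx y hy α β hα hβ hαβ => ?_⟩
  have h1 := hf.2 hx hy hα hβ hαβ
  simp only [smul_eq_mul] at *
  have h2 : m * (α * x + β * y) + q = α * (m * x + q) + β * (m * y + q) := by
    linear_combination (-q) * hαβ
  linarith

/-- Core combinatorial inequality. -/
lemma lemE {ι : Type*} [Fintype ι] (y : ι → ℝ) (hT : ∑ i, y i ≤ 0) :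
    ∑ j, max ((∑ i, y i) - y j) 0 ≤ ∑ i, max (y i) 0 := by
  classical
  set T := ∑ i, y i with hTdef
  set P := ∑ i, max (y i) 0 with hPdef
  have hP0 : 0 ≤ P := Finset.sum_nonneg (fun i _ => le_max_right _ _)
  set K := Finset.univ.filter (fun j => y j < T) with hK
  have hsplit : ∑ j, max (T - y j) 0 = ∑ j ∈ K, (T - y j) := by
    rw [← Finset.sum_filter_add_sum_filter_not Finset.univ (fun j => y j < T)]
    have h1 : ∑ j ∈ K, max (T - y j) 0 = ∑ j ∈ K, (T - y j) :=
      Finset.sum_congr rfl (fun j hj => max_eq_left (by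
        have := (Finset.mem_filter.mp hj).2; linarith))
    have h2 : ∑ j ∈ Finset.univ.filter (fun j => ¬ y j < T), max (T - y j) 0 = 0 :=
      Finset.sum_eq_zero (fun j hj => max_eq_right (by
        have := (Finset.mem_filter.mp hj).2; push_neg at this; linarith))
    rw [← hK] at *
    rw [h1, h2, add_zero]
  rw [hsplit]
  rcases K.eq_empty_or_nonempty with he | hne
  · simp [he, hP0]
  · have hcard : (1 : ℝ) ≤ (K.card : ℝ) := by
      have := Finset.card_pos.mpr hne
      exact_mod_cast this
    have hsum : ∑ j ∈ K, (T - y j) = (K.card : ℝ) * T - ∑ j ∈ K, y j := by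
      rw [Finset.sum_sub_distrib, Finset.sum_const, nsmul_eq_mul]
    have hKy : T - P ≤ ∑ j ∈ K, y j := by
      have hT2 : ∑ j ∈ K, y j + ∑ j ∈ Finset.univ.filter (fun j => ¬ y j < T), y j = T := by
        rw [hK, Finset.sum_filter_add_sum_filter_not]
      have h3 : ∑ j ∈ Finset.univ.filter (fun j => ¬ y j < T), y j ≤ P := by
        calc ∑ j ∈ Finset.univ.filter (fun j => ¬ y j < T), y j
            ≤ ∑ j ∈ Finset.univ.filter (fun j => ¬ y j < T), max (y j) 0 :=
              Finset.sum_le_sum (fun j _ => le_max_left _ _)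
          _ ≤ P := Finset.sum_le_sum_of_subset_of_nonneg (Finset.filter_subset _ _)
              (fun j _ _ => le_max_right _ _)
      linarith
    rw [hsum]
    nlinarith

/-- Karamata-type lemma for "monotone" configurations, by induction on the number
of distinct point values. -/
lemma lemC (I : Set ℝ) {ι : Type*} [Fintype ι] :
    ∀ (N : ℕ) (h : ℝ → ℝ) (p c : ι → ℝ) (M : ℝ),
      ConvexOn ℝ I h →
      (Finset.image p Finset.univ).card ≤ N →
      (∀ i, p i ∈ I) → M ∈ I → (∀ i, p i ≤ M) → (∃ i, p i = M) →
      (∀ i, h M ≤ h (p i)) →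
      (∑ i, c i) = 0 → (∀ s, 0 ≤ ∑ i, c i * max (s - p i) 0) →
      0 ≤ ∑ i, c i * h (p i) := by
  classical
  intro N
  induction N with
  | zero =>
    intro h p c M hconv hcard hpI hMI hpM hMat hmono hc hhinge
    have huniv : (Finset.univ : Finset ι) = ∅ :=
      Finset.image_eq_empty.mp (Finset.card_eq_zero.mp (Nat.le_zero.mp hcard))
    rw [show (∑ i, c i * h (p i)) = 0 by rw [huniv, Finset.sum_empty]]
  | succ N ih =>
    intro h p c M hconv hcard hpI hMI hpM hMat hmono hc hhinge
    by_cases hall : ∀ i j : ι, p i = p j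
    · rcases isEmpty_or_nonempty ι with hι | hι
      · simp
      · obtain ⟨i₀⟩ := hι
        have : ∑ i, c i * h (p i) = (∑ i, c i) * h (p i₀) := by
          rw [Finset.sum_mul]
          exact Finset.sum_congr rfl (fun i _ => by rw [hall i i₀])
        rw [this, hc, zero_mul]
    · push_neg at hall
      obtain ⟨i₁, j₁, hne⟩ := hall
      set V := Finset.image p Finset.univ with hV
      obtain ⟨iM, hiM⟩ := hMat
      have hMV : M ∈ V := hiM ▸ Finset.mem_image_of_mem p (Finset.mem_univ iM)
      have herase_ne : (V.erase M).Nonempty := by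
        rcases eq_or_ne (p i₁) M with e | e
        · exact ⟨p j₁, Finset.mem_erase.mpr ⟨by rw [← e]; exact fun hh => hne hh.symm,
            Finset.mem_image_of_mem p (Finset.mem_univ j₁)⟩⟩
        · exact ⟨p i₁, Finset.mem_erase.mpr ⟨e, Finset.mem_image_of_mem p (Finset.mem_univ i₁)⟩⟩
      set r := (V.erase M).max' herase_ne with hrdef
      have hrV : r ∈ V := Finset.mem_of_mem_erase (Finset.max'_mem _ _)
      obtain ⟨k, -, hk⟩ := Finset.mem_image.mp hrV
      have hrI : r ∈ I := hk ▸ hpI k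
      have hrM : r ≠ M := (Finset.mem_erase.mp (Finset.max'_mem _ herase_ne)).1
      have hrltM : r < M := lt_of_le_of_ne (hk ▸ hpM k) hrM
      have hler : ∀ i, p i ≠ M → p i ≤ r := fun i hi =>
        Finset.le_max' _ _ (Finset.mem_erase.mpr ⟨hi, Finset.mem_image_of_mem p (Finset.mem_univ i)⟩)
      set m := (h M - h r) / (M - r) with hm
      have hMr : M - r ≠ 0 := ne_of_gt (by linarith : (0:ℝ) < M - r)
      have hm0 : m ≤ 0 := by
        rw [hm]
        apply div_nonpos_of_nonpos_of_nonneg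
        · have := hmono k; rw [hk] at this; linarith
        · linarith
      set g : ℝ → ℝ := fun t => h t + (-m * t + (m * M - h M)) with hg
      have hgconv : ConvexOn ℝ I g := convexOn_affine_add hconv _ _
      have hgM : g M = 0 := by simp only [hg]; ring
      have hmMr : m * (M - r) = h M - h r := div_mul_cancel₀ _ hMr
      have hgr : g r = 0 := by simp only [hg]; linear_combination hmMr
      have hgnn : ∀ t, t ∈ I → t ≤ r → 0 ≤ g t := by
        intro t ht htr
        rcases eq_or_lt_of_le htr with e | lt
        · rw [e, hgr]
        · have hs := hgconv.slope_mono_adjacent ht hMI lt hrltM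
          rw [hgr, hgM] at hs
          have h3 : 0 < r - t := by linarith
          have h4 := mul_le_mul_of_nonneg_right hs h3.le
          rw [div_mul_cancel₀ _ (ne_of_gt h3)] at h4
          have h5 : (0 - 0) / (M - r) * (r - t) = 0 := by ring
          rw [h5] at h4
          linarith
      have hdecomp : ∑ i, c i * h (p i)
          = ∑ i, c i * g (p i) + m * (∑ i, c i * p i) + (h M - m * M) * (∑ i, c i) := by
        rw [Finset.mul_sum, Finset.mul_sum, ← Finset.sum_add_distrib, ← Finset.sum_add_distrib]
        exact Finset.sum_congr rfl (fun i _ => by simp only [hg]; ring)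
      have hsum_cp : ∑ i, c i * p i ≤ 0 := by
        have h5 := hhinge M
        have h6 : ∑ i, c i * max (M - p i) 0 = ∑ i, c i * (M - p i) :=
          Finset.sum_congr rfl (fun i _ => by rw [max_eq_left (sub_nonneg.mpr (hpM i))])
        have h7 : ∑ i, c i * (M - p i) = M * (∑ i, c i) - ∑ i, c i * p i := by
          rw [Finset.mul_sum, ← Finset.sum_sub_distrib]
          exact Finset.sum_congr rfl (fun i _ => by ring)
        rw [h6, h7, hc] at h5
        linarith
      have hmcp : 0 ≤ m * ∑ i, c i * p i := by
        have hmm := mul_nonneg (neg_nonneg.mpr hm0) (neg_nonneg.mpr hsum_cp)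
        rw [neg_mul_neg] at hmm
        exact hmm
      set p' : ι → ℝ := fun i => if p i = M then r else p i with hp'
      have hp'eq1 : ∀ i, p i = M → p' i = r := by
        intro i e; simp only [hp']; rw [if_pos e]
      have hp'eq2 : ∀ i, p i ≠ M → p' i = p i := by
        intro i e; simp only [hp']; rw [if_neg e]
      have hp'I : ∀ i, p' i ∈ I := by
        intro i; by_cases e : p i = M
        · rw [hp'eq1 i e]; exact hrI
        · rw [hp'eq2 i e]; exact hpI i
      have hp'le : ∀ i, p' i ≤ r := by
        intro i; by_cases e : p i = M
        · rw [hp'eq1 i e]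
        · rw [hp'eq2 i e]; exact hler i e
      have hgp' : ∀ i, g (p' i) = g (p i) := by
        intro i; by_cases e : p i = M
        · rw [hp'eq1 i e, e, hgr, hgM]
        · rw [hp'eq2 i e]
      have hp'at : p' k = r := by
        have hkM : p k ≠ M := by rw [hk]; exact hrM
        rw [hp'eq2 k hkM, hk]
      have hmono' : ∀ i, g r ≤ g (p' i) := fun i => by
        rw [hgr]; exact hgnn _ (hp'I i) (hp'le i)
      have hmax' : ∀ s, s ≤ r → ∀ i, max (s - p' i) 0 = max (s - p i) 0 := by
        intro s hs i
        by_cases e : p i = M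
        · rw [hp'eq1 i e, e]
          rw [max_eq_right (by linarith), max_eq_right (by linarith)]
        · rw [hp'eq2 i e]
      have hhinge'r : 0 ≤ ∑ i, c i * max (r - p' i) 0 := by
        have := hhinge r
        rw [show ∑ i, c i * max (r - p i) 0 = ∑ i, c i * max (r - p' i) 0 from
          Finset.sum_congr rfl (fun i _ => by rw [hmax' r le_rfl i])] at this
        exact this
      have hhinge' : ∀ s, 0 ≤ ∑ i, c i * max (s - p' i) 0 := by
        intro s
        rcases le_or_gt s r with hsr | hrs
        · have := hhinge s
          rw [show ∑ i, c i * max (s - p i) 0 = ∑ i, c i * max (s - p' i) 0 from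
            Finset.sum_congr rfl (fun i _ => by rw [hmax' s hsr i])] at this
          exact this
        · have heq : ∑ i, c i * max (s - p' i) 0
              = ∑ i, c i * max (r - p' i) 0 + (s - r) * ∑ i, c i := by
            rw [Finset.mul_sum, ← Finset.sum_add_distrib]
            refine Finset.sum_congr rfl (fun i _ => ?_)
            rw [max_eq_left (by have := hp'le i; linarith),
              max_eq_left (by have := hp'le i; linarith)]
            ring
          rw [heq, hc, mul_zero, add_zero]
          exact hhinge'r
      have hcard' : (Finset.image p' Finset.univ).card ≤ N := by
        have hsub : Finset.image p' Finset.univ ⊆ V.erase M := by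
          intro t ht
          obtain ⟨i, -, hi⟩ := Finset.mem_image.mp ht
          by_cases e : p i = M
          · rw [← hi, hp'eq1 i e]; exact Finset.max'_mem _ _
          · rw [← hi, hp'eq2 i e]
            exact Finset.mem_erase.mpr ⟨e, Finset.mem_image_of_mem p (Finset.mem_univ i)⟩
        calc (Finset.image p' Finset.univ).card ≤ (V.erase M).card :=
              Finset.card_le_card hsub
          _ = V.card - 1 := Finset.card_erase_of_mem hMV
          _ ≤ N := by omega
      have hfin := ih g p' c r hgconv hcard' hp'I hrI hp'le ⟨k, hp'at⟩ hmono' hc hhinge'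
      have : ∑ i, c i * g (p' i) = ∑ i, c i * g (p i) :=
        Finset.sum_congr rfl (fun i _ => by rw [hgp' i])
      rw [this] at hfin
      rw [hdecomp, hc, mul_zero, add_zero]
      linarith

/-- The Hardy–Littlewood–Pólya-type criterion: zero total mass, zero first moment,
and nonnegative "hinge" sums imply nonnegativity for every convex `f`. -/
lemma lemD (I : Set ℝ) {ι : Type*} [Fintype ι] (f : ℝ → ℝ) (hf : ConvexOn ℝ I f)
    (p c : ι → ℝ) (hp : ∀ i, p i ∈ I) (hc0 : ∑ i, c i = 0)
    (hc1 : ∑ i, c i * p i = 0)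
    (hhinge : ∀ s, 0 ≤ ∑ i, c i * max (p i - s) 0) :
    0 ≤ ∑ i, c i * f (p i) := by
  classical
  have hrev : ∀ s, 0 ≤ ∑ i, c i * max (s - p i) 0 := by
    intro s
    have heq : ∑ i, c i * max (s - p i) 0
        = ∑ i, c i * max (p i - s) 0 - (∑ i, c i * p i) + s * (∑ i, c i) := by
      rw [Finset.mul_sum, ← Finset.sum_sub_distrib, ← Finset.sum_add_distrib]
      refine Finset.sum_congr rfl (fun i _ => ?_)
      have : max (s - p i) 0 = max (p i - s) 0 - (p i - s) := by
        rcases le_total (p i) s with hle | hle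
        · rw [max_eq_left (by linarith), max_eq_right (by linarith)]; ring
        · rw [max_eq_right (by linarith), max_eq_left (by linarith)]; ring
      rw [this]; ring
    rw [heq, hc0, hc1, mul_zero, sub_zero, add_zero]
    exact hhinge s
  rcases isEmpty_or_nonempty ι with hι | hι
  · simp
  by_cases hall : ∀ i j : ι, p i = p j
  · obtain ⟨i₀⟩ := hι
    have : ∑ i, c i * f (p i) = (∑ i, c i) * f (p i₀) := by
      rw [Finset.sum_mul]
      exact Finset.sum_congr rfl (fun i _ => by rw [hall i i₀])
    rw [this, hc0, zero_mul]
  · push_neg at hall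
    obtain ⟨i₁, j₁, hne⟩ := hall
    set V := Finset.image p Finset.univ with hV
    have hVne : V.Nonempty := ⟨p i₁, Finset.mem_image_of_mem p (Finset.mem_univ i₁)⟩
    set M := V.max' hVne with hMdef
    obtain ⟨iM, -, hiM⟩ := Finset.mem_image.mp (Finset.max'_mem V hVne)
    rw [← hMdef] at hiM
    have hMI : M ∈ I := by rw [← hiM]; exact hp iM
    have hpM : ∀ i, p i ≤ M := fun i =>
      Finset.le_max' _ _ (Finset.mem_image_of_mem p (Finset.mem_univ i))
    have herase_ne : (V.erase M).Nonempty := by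
      rcases eq_or_ne (p i₁) M with e | e
      · exact ⟨p j₁, Finset.mem_erase.mpr ⟨by rw [← e]; exact fun hh => hne hh.symm,
          Finset.mem_image_of_mem p (Finset.mem_univ j₁)⟩⟩
      · exact ⟨p i₁, Finset.mem_erase.mpr ⟨e, Finset.mem_image_of_mem p (Finset.mem_univ i₁)⟩⟩
    set r := (V.erase M).max' herase_ne with hrdef
    have hrV : r ∈ V := Finset.mem_of_mem_erase (Finset.max'_mem _ _)
    obtain ⟨k, -, hk⟩ := Finset.mem_image.mp hrV
    have hrI : r ∈ I := hk ▸ hp k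
    have hrM : r ≠ M := (Finset.mem_erase.mp (Finset.max'_mem _ herase_ne)).1
    have hrltM : r < M := lt_of_le_of_ne (hk ▸ hpM k) hrM
    have hler : ∀ i, p i ≠ M → p i ≤ r := fun i hi =>
      Finset.le_max' _ _ (
        Finset.mem_erase.mpr ⟨hi, Finset.mem_image_of_mem p (Finset.mem_univ i)⟩)
    set m := (f M - f r) / (M - r) with hm
    have hMr : M - r ≠ 0 := ne_of_gt (by linarith : (0:ℝ) < M - r)
    set g : ℝ → ℝ := fun t => f t + (-m * t + (m * M - f M)) with hg
    have hgconv : ConvexOn ℝ I g := convexOn_affine_add hf _ _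
    have hgM : g M = 0 := by simp only [hg]; ring
    have hmMr : m * (M - r) = f M - f r := div_mul_cancel₀ _ hMr
    have hgr : g r = 0 := by simp only [hg]; linear_combination hmMr
    have hgnn : ∀ t, t ∈ I → t ≤ r → 0 ≤ g t := by
      intro t ht htr
      rcases eq_or_lt_of_le htr with e | lt
      · rw [e, hgr]
      · have hs := hgconv.slope_mono_adjacent ht hMI lt hrltM
        rw [hgr, hgM] at hs
        have h3 : 0 < r - t := by linarith
        have h4 := mul_le_mul_of_nonneg_right hs h3.le
        rw [div_mul_cancel₀ _ (ne_of_gt h3)] at h4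
        have h5 : (0 - 0) / (M - r) * (r - t) = 0 := by ring
        rw [h5] at h4
        linarith
    have hmono : ∀ i, g M ≤ g (p i) := by
      intro i
      rw [hgM]
      by_cases e : p i = M
      · rw [e, hgM]
      · exact hgnn _ (hp i) (hler i e)
    have hfin := lemC I V.card g p c M hgconv (le_of_eq rfl) hp hMI hpM ⟨iM, hiM⟩
      hmono hc0 hrev
    have hdecomp : ∑ i, c i * f (p i)
        = ∑ i, c i * g (p i) + m * (∑ i, c i * p i) + (f M - m * M) * (∑ i, c i) := by
      rw [Finset.mul_sum, Finset.mul_sum, ← Finset.sum_add_distrib, ← Finset.sum_add_distrib]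
      exact Finset.sum_congr rfl (fun i _ => by simp only [hg]; ring)
    rw [hdecomp, hc0, hc1, mul_zero, mul_zero, add_zero, add_zero]
    exact hfin

theorem cirtoaje_first (I : Set ℝ) (f : ℝ → ℝ) (hf : ConvexOn ℝ I f)
    (n : ℕ) (hn : 2 ≤ n) (x : Fin n → ℝ) (hx : ∀ i, x i ∈ I) :
    (∑ i, f (x i)) + (n : ℝ) * ((n : ℝ) - 2) * f ((∑ i, x i) / n) ≥
      ∑ j, ((n : ℝ) - 1) * f ((∑ i ∈ Finset.univ.erase j, x i) / ((n : ℝ) - 1)) := by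
  classical
  set N : ℝ := (n : ℝ) with hNdef
  have hN2 : (2 : ℝ) ≤ N := by rw [hNdef]; exact_mod_cast hn
  have hN0 : (0 : ℝ) < N := by linarith
  have hN1 : (0 : ℝ) < N - 1 := by linarith
  set S : ℝ := ∑ i, x i with hSdef
  set a : ℝ := S / N with hadef
  set b : Fin n → ℝ := fun j => (∑ i ∈ Finset.univ.erase j, x i) / (N - 1) with hbdef
  have herase_sum : ∀ j : Fin n, ∑ i ∈ Finset.univ.erase j, x i = S - x j := fun j =>
    Finset.sum_erase_eq_sub (Finset.mem_univ j)
  have hbval : ∀ j, (N - 1) * b j = S - x j := by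
    intro j
    rw [hbdef]
    simp only
    rw [herase_sum j, mul_div_cancel₀ _ (ne_of_gt hN1)]
  have haI : a ∈ I := by
    have hmem := hf.1.sum_mem (t := Finset.univ) (w := fun _ : Fin n => 1 / N) (z := x)
      (fun i _ => by positivity)
      (by simp [Finset.card_univ]; field_simp; rfl)
      (fun i _ => hx i)
    have : ∑ i : Fin n, (1 / N) • x i = a := by
      simp only [smul_eq_mul, hadef, hSdef]
      rw [← Finset.mul_sum, one_div_mul_eq_div]
    rwa [this] at hmem
  have hbI : ∀ j, b j ∈ I := by
    intro j
    have hcard : (Finset.univ.erase j).card = n - 1 := by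
      rw [Finset.card_erase_of_mem (Finset.mem_univ j), Finset.card_univ, Fintype.card_fin]
    have hcast : ((n - 1 : ℕ) : ℝ) = N - 1 := by
      rw [Nat.cast_sub (by omega)]; simp [hNdef]
    have hmem := hf.1.sum_mem (t := Finset.univ.erase j)
      (w := fun _ : Fin n => 1 / (N - 1)) (z := x)
      (fun i _ => by positivity)
      (by rw [Finset.sum_const, hcard, nsmul_eq_mul, hcast]; field_simp)
      (fun i _ => hx i)
    have : ∑ i ∈ Finset.univ.erase j, (1 / (N - 1)) • x i = b j := by
      simp only [smul_eq_mul, hbdef]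
      rw [← Finset.mul_sum, one_div_mul_eq_div]
    rwa [this] at hmem
  -- the configuration
  set p : Fin n ⊕ Fin n ⊕ Unit → ℝ := Sum.elim x (Sum.elim b (fun _ => a)) with hp
  set c : Fin n ⊕ Fin n ⊕ Unit → ℝ := Sum.elim (fun _ => 1) (Sum.elim (fun _ => -(N - 1)) (fun _ => N * (N - 2)))
    with hc
  have hpI : ∀ i : Fin n ⊕ Fin n ⊕ Unit, p i ∈ I := by
    rintro (i | j | u)
    · exact hx i
    · exact hbI j
    · exact haI
  have hsum_c : ∑ i : Fin n ⊕ Fin n ⊕ Unit, c i = 0 := by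
    simp only [hc, Fintype.sum_sum_type, Sum.elim_inl, Sum.elim_inr, Finset.sum_const,
      Finset.card_univ, Fintype.card_fin, Fintype.card_unit, nsmul_eq_mul, Nat.cast_one]
    ring
  have hb_sum : ∑ j, (N - 1) * b j = N * S - S := by
    rw [Finset.sum_congr rfl (fun j _ => hbval j), Finset.sum_sub_distrib,
      Finset.sum_const, Finset.card_univ, Fintype.card_fin, nsmul_eq_mul, ← hSdef, ← hNdef]
  have hsum_cp : ∑ i : Fin n ⊕ Fin n ⊕ Unit, c i * p i = 0 := by
    simp only [hc, hp, Fintype.sum_sum_type, Sum.elim_inl, Sum.elim_inr]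
    have h1 : ∑ j : Fin n, -(N - 1) * b j = -(N * S - S) := by
      rw [← hb_sum, ← Finset.sum_neg_distrib]
      exact Finset.sum_congr rfl (fun j _ => by ring)
    have h2 : ∑ i : Fin n, (1 : ℝ) * x i = S := by
      rw [hSdef]; exact Finset.sum_congr rfl (fun i _ => one_mul _)
    have h3 : ∑ u : Unit, N * (N - 2) * a = N * (N - 2) * a := by simp
    rw [h1, h2, h3, hadef]
    field_simp
    ring
  have hhinge : ∀ s, 0 ≤ ∑ i : Fin n ⊕ Fin n ⊕ Unit, c i * max (p i - s) 0 := by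
    intro s
    set y : Fin n → ℝ := fun i => x i - s with hy
    set T : ℝ := S - N * s with hT
    have hyT : ∑ i, y i = T := by
      rw [hy, hT, Finset.sum_sub_distrib, Finset.sum_const, Finset.card_univ,
        Fintype.card_fin, nsmul_eq_mul, ← hSdef, ← hNdef]
    have hkey : ∀ j, (N - 1) * max (b j - s) 0 = max (T - y j) 0 := by
      intro j
      rw [mul_max_of_nonneg _ _ (by linarith : (0:ℝ) ≤ N - 1), mul_zero]
      congr 1
      have := hbval j
      simp only [hy, hT]
      linarith [hbval j]
    have hsum_eq : ∑ i : Fin n ⊕ Fin n ⊕ Unit, c i * max (p i - s) 0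
        = (∑ i, max (y i) 0) - (∑ j, max (T - y j) 0) + N * (N - 2) * max (a - s) 0 := by
      simp only [hc, hp, Fintype.sum_sum_type, Sum.elim_inl, Sum.elim_inr]
      have e1 : ∑ i : Fin n, (1:ℝ) * max (x i - s) 0 = ∑ i, max (y i) 0 :=
        Finset.sum_congr rfl (fun i _ => by rw [one_mul, hy])
      have e2 : ∑ j : Fin n, -(N - 1) * max (b j - s) 0 = -(∑ j, max (T - y j) 0) := by
        rw [← Finset.sum_neg_distrib]
        exact Finset.sum_congr rfl (fun j _ => by rw [neg_mul, hkey j])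
      have e3 : ∑ u : Unit, N * (N - 2) * max (a - s) 0 = N * (N - 2) * max (a - s) 0 := by
        simp
      rw [e1, e2, e3]
      ring
    rw [hsum_eq]
    have hasT : a - s = T / N := by rw [hadef, hT]; field_simp
    rcases le_or_gt T 0 with hTle | hTpos
    · have hE := lemE y (by rw [hyT]; exact hTle)
      rw [hyT] at hE
      have hmax_a : max (a - s) 0 = 0 := max_eq_right (by
        rw [hasT]; exact div_nonpos_of_nonpos_of_nonneg hTle hN0.le)
      rw [hmax_a, mul_zero, add_zero]
      linarith
    · have hyT' : (∑ i, -(y i)) = -T := by rw [Finset.sum_neg_distrib, hyT]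
      have hE := lemE (fun i => -(y i)) (by rw [hyT']; linarith)
      have hE' : ∑ j, max (y j - T) 0 ≤ ∑ i, max (-(y i)) 0 := by
        have h1 : ∑ j, max ((∑ i, -(y i)) - -(y j)) 0 = ∑ j, max (y j - T) 0 := by
          refine Finset.sum_congr rfl (fun j _ => ?_)
          rw [hyT']
          congr 1; ring
        rw [h1] at hE
        exact hE
      have hA : ∑ i, max (y i) 0 = T + ∑ i, max (-(y i)) 0 := by
        rw [← hyT, ← Finset.sum_add_distrib]
        exact Finset.sum_congr rfl (fun i _ => by
          linarith [max_zero_sub_max_neg_zero_eq_self (y i)])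
      have hB : ∑ j, max (T - y j) 0 = (N - 1) * T + ∑ j, max (y j - T) 0 := by
        have e : ∀ j, max (T - y j) 0 = (T - y j) + max (y j - T) 0 := fun j => by
          have h0 := max_zero_sub_max_neg_zero_eq_self (T - y j)
          rw [show -(T - y j) = y j - T by ring] at h0
          linarith
        rw [Finset.sum_congr rfl (fun j _ => e j), Finset.sum_add_distrib,
          Finset.sum_sub_distrib, Finset.sum_const, Finset.card_univ, Fintype.card_fin,
          nsmul_eq_mul, ← hNdef, hyT]
        ring
      have hmax_a : max (a - s) 0 = T / N := by
        rw [hasT]; exact max_eq_left (by positivity)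
      rw [hA, hB, hmax_a]
      have hNN : N * (N - 2) * (T / N) = (N - 2) * T := by field_simp
      rw [hNN]
      linarith
  have hfin := lemD I f hf p c hpI hsum_c hsum_cp hhinge
  have hsum_f : ∑ i : Fin n ⊕ Fin n ⊕ Unit, c i * f (p i)
      = (∑ i, f (x i)) - (∑ j, (N - 1) * f (b j)) + N * (N - 2) * f a := by
    simp only [hc, hp, Fintype.sum_sum_type, Sum.elim_inl, Sum.elim_inr]
    have e1 : ∑ i : Fin n, (1:ℝ) * f (x i) = ∑ i, f (x i) :=
      Finset.sum_congr rfl (fun i _ => one_mul _)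
    have e2 : ∑ j : Fin n, -(N - 1) * f (b j) = -(∑ j, (N - 1) * f (b j)) := by
      rw [← Finset.sum_neg_distrib]
      exact Finset.sum_congr rfl (fun j _ => by ring)
    have e3 : ∑ u : Unit, N * (N - 2) * f a = N * (N - 2) * f a := by simp
    rw [e1, e2, e3]
    ring
  rw [hsum_f] at hfin
  rw [ge_iff_le]
  linarith
end

section
/- Let f be convex on an interval I ⊆ ℝ, let x₁, ..., xₙ ∈ I, and let m be an integer. Then C(n−2, m−1)·∑_{i=1}^n f(xᵢ) + C(n−2, m−2)·n·f((x₁+...+xₙ)/n) ≥ ∑_{1≤i₁<i₂<...<iₘ≤n} m·f((x_{i₁}+...+x_{iₘ})/m), where the right-hand sum ranges over all m-element subsets of {1,...,n} (and is empty if m ≤ 0 or m > n). -/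
open Finset


lemma pp_add_le (a b : ℝ) : max (a+b) 0 ≤ max a 0 + max b 0 :=
  max_le (add_le_add (le_max_left _ _) (le_max_left _ _)) (by positivity)

lemma psc_split {ι : Type*} [DecidableEq ι] {a : ι} {s : Finset ι} (ha : a ∉ s) (k : ℕ)
    (F : Finset ι → ℝ) :
    ∑ S ∈ (insert a s).powersetCard (k+1), F S
      = ∑ S ∈ s.powersetCard (k+1), F S + ∑ S ∈ s.powersetCard k, F (insert a S) := by
  rw [powersetCard_succ_insert ha, sum_union, sum_image]
  · intro S hS S' hS' hEq
    have h1 : a ∉ S := fun h => ha ((mem_powersetCard.1 hS).1 h)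
    have h2 : a ∉ S' := fun h => ha ((mem_powersetCard.1 hS').1 h)
    rw [← Finset.erase_insert h1, ← Finset.erase_insert h2, hEq]
  · rw [Finset.disjoint_right]
    rintro S hS hS'
    have : a ∈ S := by
      obtain ⟨T, hT, rfl⟩ := Finset.mem_image.1 hS
      exact Finset.mem_insert_self _ _
    exact ha ((mem_powersetCard.1 hS').1 this)

lemma dc {ι : Type*} [DecidableEq ι] (s : Finset ι) (k : ℕ) (y : ι → ℝ) :
    ∑ S ∈ s.powersetCard (k+1), ∑ i ∈ S, y i
      = ((s.card - 1).choose k : ℝ) * ∑ i ∈ s, y i := by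
  induction s using Finset.induction generalizing k with
  | empty => rw [Finset.powersetCard_eq_empty.2 (by simp)]; simp
  | @insert a s ha ih =>
    rw [psc_split ha]
    have hins : ∀ S ∈ s.powersetCard k, ∑ i ∈ insert a S, y i = y a + ∑ i ∈ S, y i := by
      intro S hS
      exact Finset.sum_insert (fun h => ha ((mem_powersetCard.1 hS).1 h))
    rw [Finset.sum_congr rfl hins, Finset.sum_add_distrib, Finset.sum_const,
      card_powersetCard, ih, Finset.sum_insert ha, Finset.card_insert_of_notMem ha]
    rcases Nat.eq_zero_or_pos k with rfl | hk
    · simp; ring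
    · obtain ⟨k', rfl⟩ := Nat.exists_eq_add_of_lt hk
      rw [ih]
      rcases s.eq_empty_or_nonempty with rfl | hs
      · simp
      · have hc : 1 ≤ s.card := Finset.card_pos.2 hs
        have hpas : (s.card + 1 - 1).choose (0+k'+1)
            = (s.card - 1).choose (0+k'+1) + (s.card - 1).choose (0+k') := by
          rw [show s.card + 1 - 1 = (s.card - 1) + 1 by omega, Nat.choose_succ_succ']
          exact Nat.add_comm _ _
        have h2 : (s.card).choose (0+k'+1)
            = (s.card - 1).choose (0+k') + (s.card - 1).choose (0+k'+1) := by
          rw [show s.card = (s.card - 1) + 1 by omega, Nat.choose_succ_succ']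
          congr 1 <;> congr 1 <;> omega
        rw [hpas, h2]
        push_cast
        rw [nsmul_eq_mul]
        push_cast
        ring

lemma zcase {ι : Type*} [DecidableEq ι] (s : Finset ι) (k : ℕ) (y : ι → ℝ) (t : ℝ)
    (hneg : ∀ i ∈ s, y i ≤ 0) (h : t + ∑ i ∈ s, y i ≤ 0) :
    ∑ S ∈ s.powersetCard k, max (t + ∑ i ∈ S, y i) 0
      ≤ ((s.card - 1).choose k : ℝ) * max t 0 := by
  rcases Nat.eq_zero_or_pos k with rfl | hk
  · simp [Finset.powersetCard_zero]
  rcases le_or_gt t 0 with ht | ht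
  · have h1 : ∀ S ∈ s.powersetCard k, max (t + ∑ i ∈ S, y i) 0 = 0 := by
      intro S hS
      have hSs := (mem_powersetCard.1 hS).1
      have : ∑ i ∈ S, y i ≤ 0 := sum_nonpos (fun i hi => hneg i (hSs hi))
      exact max_eq_right (by linarith)
    rw [Finset.sum_congr rfl h1, Finset.sum_const, smul_zero, max_eq_right ht]
    positivity
  · -- t > 0
    set W : ℝ := -(∑ i ∈ s, y i) with hWdef
    have hWt : t ≤ W := by simp only [hWdef]; linarith
    have hWpos : 0 < W := lt_of_lt_of_le ht hWt
    have hsne : s.Nonempty := by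
      by_contra hcon
      rw [not_nonempty_iff_eq_empty] at hcon
      subst hcon
      rw [Finset.sum_empty] at hWdef
      rw [hWdef] at hWpos
      norm_num at hWpos
    have hc1 : 1 ≤ s.card := card_pos.2 hsne
    have key : ∀ S ∈ s.powersetCard k, max (t + ∑ i ∈ S, y i) 0
        ≤ t + (t/W) * ∑ i ∈ S, y i := by
      intro S hS
      have hSs := (mem_powersetCard.1 hS).1
      have hys : ∑ i ∈ S, y i ≤ 0 := sum_nonpos (fun i hi => hneg i (hSs hi))
      have hsd : ∑ i ∈ s \ S, y i + ∑ i ∈ S, y i = ∑ i ∈ s, y i := Finset.sum_sdiff hSs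
      have hge : 0 ≤ W + ∑ i ∈ S, y i := by
        have : ∑ i ∈ s \ S, y i ≤ 0 :=
          sum_nonpos (fun i hi => hneg i (Finset.mem_sdiff.1 hi).1)
        simp only [hWdef]; linarith
      have hdiv1 : t / W ≤ 1 := (div_le_one hWpos).2 hWt
      have hdiv0 : 0 ≤ t / W := by positivity
      have htW : t / W * W = t := div_mul_cancel₀ t (ne_of_gt hWpos)
      apply max_le
      · nlinarith [mul_nonpos_of_nonneg_of_nonpos (by linarith : (0:ℝ) ≤ 1 - t/W) hys]
      · nlinarith [mul_nonneg hdiv0 hge]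
    calc ∑ S ∈ s.powersetCard k, max (t + ∑ i ∈ S, y i) 0
        ≤ ∑ S ∈ s.powersetCard k, (t + (t/W) * ∑ i ∈ S, y i) := sum_le_sum key
      _ = (s.card.choose k : ℝ) * t + (t/W) * ∑ S ∈ s.powersetCard k, ∑ i ∈ S, y i := by
          rw [Finset.sum_add_distrib, Finset.sum_const, ← Finset.mul_sum, card_powersetCard,
            nsmul_eq_mul]
      _ = ((s.card - 1).choose k : ℝ) * max t 0 := by
          obtain ⟨k', rfl⟩ := Nat.exists_eq_add_of_lt hk
          rw [show 0 + k' + 1 = k' + 1 by omega] at *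
          rw [dc]
          have hP : (s.card).choose (k'+1)
              = (s.card - 1).choose (k'+1) + (s.card - 1).choose k' := by
            rw [show s.card = (s.card - 1) + 1 by omega, Nat.choose_succ_succ',
              Nat.add_sub_cancel]
            exact Nat.add_comm _ _
          rw [hP, max_eq_left ht.le]
          have : ∑ i ∈ s, y i = -W := by simp [hWdef]
          rw [this]
          push_cast
          field_simp
          ring

lemma gclaim {ι : Type*} [DecidableEq ι] (c : ℕ) :
    ∀ (s : Finset ι), s.card ≤ c → ∀ (k : ℕ) (t : ℝ) (y : ι → ℝ),
    t + ∑ i ∈ s, y i ≤ 0 →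
    ∑ S ∈ s.powersetCard k, max (t + ∑ i ∈ S, y i) 0
      ≤ ((s.card - 1).choose k : ℝ) * max t 0
        + (if k = 0 then (0:ℝ) else ((s.card - 2).choose (k-1) : ℝ))
          * ∑ i ∈ s, max (y i) 0 := by
  induction c with
  | zero =>
    intro s hs k t y h
    have : s = ∅ := Finset.card_eq_zero.1 (Nat.le_zero.1 hs)
    subst this
    rcases Nat.eq_zero_or_pos k with rfl | hk
    · simp
    · rw [Finset.powersetCard_eq_empty.2 (by simpa using hk)]
      have h0 : (0:ℝ) ≤ max t 0 := le_max_right _ _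
      simp only [Finset.sum_empty, Finset.sum_const_zero, mul_zero]
      have h2 : (0:ℝ) ≤ (if k = 0 then (0:ℝ) else ((0 - 2).choose (k-1) : ℝ)) := by
        split <;> positivity
      have h3 : (0:ℝ) ≤ ((Finset.card (∅ : Finset ι) - 1).choose k : ℝ) := by positivity
      simp only [Finset.card_empty] at h3 ⊢
      nlinarith
  | succ c ih =>
    intro s hs k t y h
    have hY : (0:ℝ) ≤ ∑ i ∈ s, max (y i) 0 :=
      Finset.sum_nonneg (fun i _ => le_max_right _ _)
    have hP : (0:ℝ) ≤ max t 0 := le_max_right _ _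
    have hIf : (0:ℝ) ≤ (if k = 0 then (0:ℝ) else ((s.card - 2).choose (k-1) : ℝ)) := by
      split <;> positivity
    rcases Nat.eq_zero_or_pos k with rfl | hk
    · simp [Finset.powersetCard_zero]
    rcases lt_or_ge s.card (k+1) with hck | hck
    · rcases Nat.lt_or_ge s.card k with hlt | hge
      · rw [Finset.powersetCard_eq_empty.2 hlt]
        simp only [Finset.sum_empty]
        refine add_nonneg (mul_nonneg (by positivity) hP) (mul_nonneg ?_ hY)
        split <;> positivity
      · have hek : s.card = k := by omega
        rw [← hek, Finset.powersetCard_self, Finset.sum_singleton, max_eq_right h]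
        refine add_nonneg (mul_nonneg (by positivity) hP) (mul_nonneg ?_ hY)
        split <;> positivity
    · -- main case : k + 1 ≤ card
      have hsne : s.Nonempty := Finset.card_pos.1 (by omega)
      obtain ⟨j, hjs, hjmax⟩ := Finset.exists_max_image s y hsne
      have hsum_erase : ∑ i ∈ s.erase j, y i + y j = ∑ i ∈ s, y i :=
        Finset.sum_erase_add s y hjs
      by_cases hA : t + ∑ i ∈ s.erase j, y i ≤ 0
      · -- inductive case
        obtain ⟨k', rfl⟩ := Nat.exists_eq_succ_of_ne_zero (Nat.pos_iff_ne_zero.1 hk)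
        set E := s.erase j with hEdef
        have hjE : j ∉ E := Finset.notMem_erase j s
        have hEcard : E.card = s.card - 1 := Finset.card_erase_of_mem hjs
        have hEc : E.card ≤ c := by omega
        have hsplit : ∑ S ∈ s.powersetCard (k'+1), max (t + ∑ i ∈ S, y i) 0
            = ∑ S ∈ E.powersetCard (k'+1), max (t + ∑ i ∈ S, y i) 0
              + ∑ S ∈ E.powersetCard k', max (t + ∑ i ∈ insert j S, y i) 0 := by
          conv_lhs => rw [← Finset.insert_erase hjs]
          exact psc_split hjE k' _
        have hinner : ∀ S ∈ E.powersetCard k',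
            max (t + ∑ i ∈ insert j S, y i) 0 = max ((t + y j) + ∑ i ∈ S, y i) 0 := by
          intro S hS
          have hjS : j ∉ S := fun hmem => hjE ((mem_powersetCard.1 hS).1 hmem)
          rw [Finset.sum_insert hjS]
          ring_nf
        have ih1 := ih E hEc (k'+1) t y hA
        have ih2 := ih E hEc k' (t + y j) y (by linarith)
        rw [hsplit, Finset.sum_congr rfl hinner]
        -- numeric facts
        have hc2 : 2 ≤ s.card := by omega
        have hM : max (t + y j) 0 ≤ max t 0 + max (y j) 0 := pp_add_le t (y j)
        have hQ : (0:ℝ) ≤ max (y j) 0 := le_max_right _ _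
        have hY' : (0:ℝ) ≤ ∑ i ∈ E, max (y i) 0 :=
          Finset.sum_nonneg (fun i _ => le_max_right _ _)
        have hYsplit : max (y j) 0 + ∑ i ∈ E, max (y i) 0 = ∑ i ∈ s, max (y i) 0 :=
          Finset.add_sum_erase s (fun i => max (y i) 0) hjs
        have e1 : ((s.card - 1).choose (k'+1) : ℝ)
            = ((s.card - 2).choose k' : ℝ) + ((s.card - 2).choose (k'+1) : ℝ) := by
          rw [show s.card - 1 = (s.card - 2) + 1 by omega]
          push_cast [Nat.choose_succ_succ']
          ring
        have e2 : ((E.card - 2).choose k' : ℝ)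
              + (if k' = 0 then (0:ℝ) else ((E.card - 2).choose (k'-1) : ℝ))
            ≤ ((s.card - 2).choose k' : ℝ) := by
          rcases Nat.eq_zero_or_pos k' with rfl | hk'
          · simp
          · rw [if_neg (by omega)]
            have hc3 : 3 ≤ s.card := by omega
            obtain ⟨k'', rfl⟩ := Nat.exists_eq_succ_of_ne_zero (Nat.pos_iff_ne_zero.1 hk')
            have hstep : (s.card - 2).choose (k''+1)
                = (E.card - 2).choose k'' + (E.card - 2).choose (k''+1) := by
              rw [show s.card - 2 = (E.card - 2) + 1 by omega, Nat.choose_succ_succ']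
            rw [hstep, Nat.succ_sub_one]
            push_cast
            linarith
        -- reduce the ifs
        rw [if_neg (Nat.succ_ne_zero k'), Nat.succ_sub_one] at ih1 ⊢
        have hE1 : E.card - 1 = s.card - 2 := by omega
        rw [hE1] at ih1 ih2
        set A : ℝ := ((s.card - 2).choose (k'+1) : ℝ) with hAdef
        set B : ℝ := ((s.card - 2).choose k' : ℝ) with hBdef
        set C3 : ℝ := ((E.card - 2).choose k' : ℝ) with hC3def
        set ifv : ℝ := (if k' = 0 then (0:ℝ) else ((E.card - 2).choose (k'-1) : ℝ)) with hifdef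
        set P : ℝ := max t 0
        set Q : ℝ := max (y j) 0
        set M : ℝ := max (t + y j) 0
        set Y' : ℝ := ∑ i ∈ E, max (y i) 0
        have hB0 : (0:ℝ) ≤ B := by rw [hBdef]; positivity
        have hBM : B * M ≤ B * P + B * Q := by
          calc B * M ≤ B * (P + Q) := mul_le_mul_of_nonneg_left hM hB0
            _ = B * P + B * Q := by ring
        have hCY : C3 * Y' + ifv * Y' ≤ B * Y' := by
          calc C3 * Y' + ifv * Y' = (C3 + ifv) * Y' := by ring
            _ ≤ B * Y' := mul_le_mul_of_nonneg_right e2 hY'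
        have e1P : ((s.card - 1).choose (k'+1) : ℝ) * P = A * P + B * P := by
          rw [e1]; ring
        rw [← hYsplit]
        have hBQ : B * (Q + Y') = B * Q + B * Y' := by ring
        linarith [ih1, ih2, hBM, hCY, e1P, hBQ]
      · -- zcase
        have hyj : y j < 0 := by linarith
        have hneg : ∀ i ∈ s, y i ≤ 0 := fun i hi => le_of_lt (lt_of_le_of_lt (hjmax i hi) hyj)
        have hzero : ∑ i ∈ s, max (y i) 0 = 0 :=
          Finset.sum_eq_zero (fun i hi => max_eq_right (hneg i hi))
        rw [hzero, mul_zero, add_zero]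
        exact zcase s k y t hneg h


lemma secant {I : Set ℝ} {f : ℝ → ℝ} (hf : ConvexOn ℝ I f) {a b c : ℝ}
    (ha : a ∈ I) (hb : b ∈ I) (hc : c ∈ I) (hab : a < b) (hbc : b < c) (hfa : f a = 0) :
    f b / (b - a) * (c - a) ≤ f c := by
  have hs := hf.slope_mono_adjacent ha hc hab hbc
  rw [hfa, sub_zero] at hs
  have h1 : (0:ℝ) < b - a := by linarith
  have h2 : (0:ℝ) < c - b := by linarith
  rw [div_le_div_iff₀ h1 h2] at hs
  rw [div_mul_eq_mul_div, div_le_iff₀ h1]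
  nlinarith [hs]

lemma affine_sub_convex0 {I : Set ℝ} {f : ℝ → ℝ} (hf : ConvexOn ℝ I f) (d a : ℝ) :
    ConvexOn ℝ I (fun v => f v - d * (v - a)) := by
  refine ⟨hf.1, fun u hu v hv p q hp hq hpq => ?_⟩
  have h2 := hf.2 hu hv hp hq hpq
  simp only [smul_eq_mul] at *
  have e : p*u + q*v - a = p*(u-a) + q*(v-a) := by linear_combination a * hpq
  have e2 : d * ((p*u + q*v) - a) = p*(d*(u-a)) + q*(d*(v-a)) := by rw [e]; ring
  nlinarith [h2, e2]

lemma engine {ι : Type*} [DecidableEq ι] {I : Set ℝ} :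
    ∀ (r : ℕ) (f : ℝ → ℝ), ConvexOn ℝ I f → ∀ (s : Finset ι) (y α : ι → ℝ),
    (s.image y).card ≤ r →
    (∀ i ∈ s, y i ∈ I) →
    (∀ i ∈ s, 0 ≤ f (y i)) →
    (∀ i ∈ s, (∀ j ∈ s, y i ≤ y j) → f (y i) = 0) →
    (∀ u ∈ s, 0 ≤ ∑ i ∈ s, α i * max (y i - y u) 0) →
    0 ≤ ∑ i ∈ s, α i * f (y i) := by
  intro r
  induction r with
  | zero =>
    intro f hf s y α hcard hyI hf0 hmin hpos
    have : s.image y = ∅ := Finset.card_eq_zero.1 (Nat.le_zero.1 hcard)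
    have hs : s = ∅ := by
      rcases s.eq_empty_or_nonempty with rfl | hne
      · rfl
      · exact absurd (hne.image y) (by rw [this]; exact Finset.not_nonempty_empty)
    subst hs; simp
  | succ r ihr =>
    intro f hf s y α hcard hyI hf0 hmin hpos
    rcases s.eq_empty_or_nonempty with rfl | hsne
    · simp
    have himg : (s.image y).Nonempty := hsne.image y
    set a := (s.image y).min' himg with hadef
    obtain ⟨i₀, hi₀s, hi₀⟩ := Finset.mem_image.1 ((s.image y).min'_mem himg)
    rw [← hadef] at hi₀
    have hale : ∀ i ∈ s, a ≤ y i := fun i hi =>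
      Finset.min'_le _ _ (Finset.mem_image_of_mem y hi)
    have hfa : f a = 0 := by
      rw [← hi₀]
      exact hmin i₀ hi₀s (fun j hj => hi₀ ▸ hale j hj)
    set s₁ := s.filter (fun i => ¬ (y i = a)) with hs₁def
    have hsplitsum : ∀ g : ι → ℝ, ∑ i ∈ s, g i
        = ∑ i ∈ s.filter (fun i => y i = a), g i + ∑ i ∈ s₁, g i := by
      intro g
      rw [Finset.sum_filter_add_sum_filter_not]
    -- main split for f
    have htot : ∑ i ∈ s, α i * f (y i) = ∑ i ∈ s₁, α i * f (y i) := by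
      rw [hsplitsum (fun i => α i * f (y i))]
      have : ∑ i ∈ s.filter (fun i => y i = a), α i * f (y i) = 0 := by
        refine Finset.sum_eq_zero (fun i hi => ?_)
        obtain ⟨his, hia⟩ := Finset.mem_filter.1 hi
        rw [hia, hfa, mul_zero]
      rw [this, zero_add]
    rw [htot]
    rcases s₁.eq_empty_or_nonempty with h1e | h1ne
    · rw [h1e]; simp
    -- second smallest value b
    have himg1 : (s₁.image y).Nonempty := h1ne.image y
    set b := (s₁.image y).min' himg1 with hbdef
    obtain ⟨i₁, hi₁s, hi₁⟩ := Finset.mem_image.1 ((s₁.image y).min'_mem himg1)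
    rw [← hbdef] at hi₁
    have hble : ∀ i ∈ s₁, b ≤ y i := fun i hi =>
      Finset.min'_le _ _ (Finset.mem_image_of_mem y hi)
    have hs₁sub : s₁ ⊆ s := Finset.filter_subset _ s
    have hab : a < b := by
      have h1 : a ≤ b := hale i₁ (hs₁sub hi₁s) |>.trans_eq hi₁ |>.trans_eq rfl
      have h2 : y i₁ ≠ a := (Finset.mem_filter.1 hi₁s).2
      rcases h1.lt_or_eq with h | h
      · exact h
      · exact absurd (hi₁ ▸ h.symm) h2
    have hbI : b ∈ I := hi₁ ▸ hyI i₁ (hs₁sub hi₁s)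
    have haI : a ∈ I := hi₀ ▸ hyI i₀ hi₀s
    have hfb : 0 ≤ f b := hi₁ ▸ hf0 i₁ (hs₁sub hi₁s)
    set d := f b / (b - a) with hddef
    have hd : 0 ≤ d := div_nonneg hfb (by linarith)
    set f₁ := fun v => f v - d * (v - a) with hf₁def
    have hf₁ : ConvexOn ℝ I f₁ := affine_sub_convex0 hf d a
    -- decompose
    have hdecomp : ∑ i ∈ s₁, α i * f (y i)
        = ∑ i ∈ s₁, α i * f₁ (y i) + d * ∑ i ∈ s₁, α i * (y i - a) := by
      rw [Finset.mul_sum, ← Finset.sum_add_distrib]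
      refine Finset.sum_congr rfl (fun i hi => ?_)
      simp only [hf₁def]
      ring
    have hpos0 : 0 ≤ ∑ i ∈ s₁, α i * (y i - a) := by
      have heq : ∑ i ∈ s₁, α i * (y i - a) = ∑ i ∈ s, α i * max (y i - y i₀) 0 := by
        rw [hsplitsum (fun i => α i * max (y i - y i₀) 0)]
        have hz : ∑ i ∈ s.filter (fun i => y i = a), α i * max (y i - y i₀) 0 = 0 := by
          refine Finset.sum_eq_zero (fun i hi => ?_)
          obtain ⟨his, hia⟩ := Finset.mem_filter.1 hi
          rw [hia, hi₀, sub_self, max_self, mul_zero]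
        rw [hz, zero_add]
        refine Finset.sum_congr rfl (fun i hi => ?_)
        have : b ≤ y i := hble i hi
        rw [hi₀, max_eq_left (by linarith)]
      rw [heq]
      exact hpos i₀ hi₀s
    rw [hdecomp]
    have hmain : 0 ≤ ∑ i ∈ s₁, α i * f₁ (y i) := by
      refine ihr f₁ hf₁ s₁ y α ?_ ?_ ?_ ?_ ?_
      · -- card decreases
        have hsub : s₁.image y ⊆ (s.image y).erase a := by
          intro v hv
          obtain ⟨i, hi, rfl⟩ := Finset.mem_image.1 hv
          refine Finset.mem_erase.2 ⟨(Finset.mem_filter.1 hi).2, 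
            Finset.mem_image_of_mem y (hs₁sub hi)⟩
        have := Finset.card_le_card hsub
        have h2 : ((s.image y).erase a).card = (s.image y).card - 1 :=
          Finset.card_erase_of_mem (by rw [hadef]; exact (s.image y).min'_mem himg)
        have h3 : 0 < (s.image y).card := Finset.card_pos.2 himg
        omega
      · exact fun i hi => hyI i (hs₁sub hi)
      · intro i hi
        have hbyi : b ≤ y i := hble i hi
        rcases hbyi.lt_or_eq with hlt | heq
        · have hsec := secant hf haI hbI (hyI i (hs₁sub hi)) hab hlt hfa
          simp only [hf₁def, hddef]
          nlinarith [hsec]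
        · simp only [hf₁def, hddef, ← heq]
          have : b - a ≠ 0 := by linarith
          field_simp
          simp
      · intro i hi hmini
        have : y i = b := le_antisymm (hi₁ ▸ hmini i₁ hi₁s) (hble i hi)
        simp only [hf₁def, hddef, this]
        have hba : b - a ≠ 0 := by linarith
        field_simp
        simp
      · intro u hu
        have := hpos u (hs₁sub hu)
        rw [hsplitsum (fun i => α i * max (y i - y u) 0)] at this
        have hz : ∑ i ∈ s.filter (fun i => y i = a), α i * max (y i - y u) 0 = 0 := by
          refine Finset.sum_eq_zero (fun i hi => ?_)
          obtain ⟨his, hia⟩ := Finset.mem_filter.1 hi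
          have hbu : b ≤ y u := hble u hu
          rw [hia, max_eq_right (by linarith), mul_zero]
        rw [hz, zero_add] at this
        exact this
    nlinarith [mul_nonneg hd hpos0]

lemma affine_sub_convex {I : Set ℝ} {f : ℝ → ℝ} (hf : ConvexOn ℝ I f) (c d a : ℝ) :
    ConvexOn ℝ I (fun v => f v - (c + d * (v - a))) := by
  refine ⟨hf.1, fun u hu v hv p q hp hq hpq => ?_⟩
  have h2 := hf.2 hu hv hp hq hpq
  simp only [smul_eq_mul] at *
  have e : p*u + q*v - a = p*(u-a) + q*(v-a) := by linear_combination a * hpq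
  have e2 : c + d * ((p*u + q*v) - a) = p*(c + d*(u-a)) + q*(c + d*(v-a)) := by
    rw [e]; linear_combination (-c) * hpq
  nlinarith [h2, e2]

lemma secant2 {I : Set ℝ} {f : ℝ → ℝ} (hf : ConvexOn ℝ I f) {a b c : ℝ}
    (ha : a ∈ I) (hb : b ∈ I) (hc : c ∈ I) (hab : a < b) (hbc : b < c) :
    f a + (f b - f a) / (b - a) * (c - a) ≤ f c := by
  have hs := hf.slope_mono_adjacent ha hc hab hbc
  have h1 : (0:ℝ) < b - a := by linarith
  have h2 : (0:ℝ) < c - b := by linarith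
  rw [div_le_div_iff₀ h1 h2] at hs
  rw [div_mul_eq_mul_div, ← sub_nonneg]
  have : f c - (f a + (f b - f a) * (c - a) / (b - a))
      = ((f c - f b) * (b - a) - (f b - f a) * (c - b)) / (b - a) := by
    field_simp
    ring
  rw [this]
  exact div_nonneg (by linarith) h1.le

lemma criterion {ι : Type*} [DecidableEq ι] {I : Set ℝ} {f : ℝ → ℝ} (hf : ConvexOn ℝ I f)
    (s : Finset ι) (y α : ι → ℝ)
    (hyI : ∀ i ∈ s, y i ∈ I)
    (h1 : ∑ i ∈ s, α i = 0)
    (h2 : ∑ i ∈ s, α i * y i = 0)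
    (h3 : ∀ u : ℝ, 0 ≤ ∑ i ∈ s, α i * max (y i - u) 0) :
    0 ≤ ∑ i ∈ s, α i * f (y i) := by
  rcases s.eq_empty_or_nonempty with rfl | hsne
  · simp
  have himg : (s.image y).Nonempty := hsne.image y
  set a := (s.image y).min' himg with hadef
  obtain ⟨i₀, hi₀s, hi₀⟩ := Finset.mem_image.1 ((s.image y).min'_mem himg)
  rw [← hadef] at hi₀
  have hale : ∀ i ∈ s, a ≤ y i := fun i hi =>
    Finset.min'_le _ _ (Finset.mem_image_of_mem y hi)
  have haI : a ∈ I := hi₀ ▸ hyI i₀ hi₀s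
  by_cases hconst : ∀ i ∈ s, y i = a
  · have : ∑ i ∈ s, α i * f (y i) = (∑ i ∈ s, α i) * f a := by
      rw [Finset.sum_mul]
      exact Finset.sum_congr rfl (fun i hi => by rw [hconst i hi])
    rw [this, h1, zero_mul]
  · push_neg at hconst
    obtain ⟨i₁, hi₁s, hi₁⟩ := hconst
    have hbne : ((s.image y).erase a).Nonempty :=
      ⟨y i₁, Finset.mem_erase.2 ⟨hi₁, Finset.mem_image_of_mem y hi₁s⟩⟩
    set b := ((s.image y).erase a).min' hbne with hbdef
    have hbmem := ((s.image y).erase a).min'_mem hbne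
    rw [← hbdef] at hbmem
    obtain ⟨hbnea, hbimg⟩ := Finset.mem_erase.1 hbmem
    obtain ⟨i₂, hi₂s, hi₂⟩ := Finset.mem_image.1 hbimg
    have hab : a < b := by
      rcases (Finset.min'_le _ _ hbimg : a ≤ b).lt_or_eq with h | h
      · exact h
      · exact absurd h.symm hbnea
    have hbI : b ∈ I := hi₂ ▸ hyI i₂ hi₂s
    have hble : ∀ i ∈ s, y i ≠ a → b ≤ y i := by
      intro i hi hia
      exact Finset.min'_le _ _ (Finset.mem_erase.2 ⟨hia, Finset.mem_image_of_mem y hi⟩)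
    set d := (f b - f a) / (b - a) with hddef
    set g := fun v => f v - (f a + d * (v - a)) with hgdef
    have hgconv : ConvexOn ℝ I g := affine_sub_convex hf (f a) d a
    have hsum : ∑ i ∈ s, α i * f (y i) = ∑ i ∈ s, α i * g (y i) := by
      have : ∀ i ∈ s, α i * g (y i)
          = α i * f (y i) - ((f a - d * a) * α i + d * (α i * y i)) := by
        intro i hi
        simp only [hgdef]
        ring
      rw [Finset.sum_congr rfl this, Finset.sum_sub_distrib, Finset.sum_add_distrib,
        ← Finset.mul_sum, ← Finset.mul_sum, h1, h2, mul_zero, mul_zero]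
      ring
    rw [hsum]
    refine engine (s.image y).card g hgconv s y α le_rfl hyI ?_ ?_
      (fun u hu => h3 (y u))
    · intro i hi
      by_cases hia : y i = a
      · simp only [hgdef, hia]; ring_nf; simp
      · have hbi : b ≤ y i := hble i hi hia
        rcases hbi.lt_or_eq with hlt | heq
        · have := secant2 hf haI hbI (hyI i hi) hab hlt
          simp only [hgdef, hddef]
          linarith
        · simp only [hgdef, hddef, ← heq]
          have hba : b - a ≠ 0 := by have := hab; intro hc; apply absurd hc; linarith
          field_simp
          linarith
    · intro i hi hmini
      have hia : y i = a := le_antisymm (hi₀ ▸ hmini i₀ hi₀s) (hale i hi)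
      simp only [hgdef, hia]
      ring_nf


lemma pp_shift (v : ℝ) : max v 0 = v + max (-v) 0 := by
  rcases le_total v 0 with h | h
  · rw [max_eq_right h, max_eq_left (by linarith)]; ring
  · rw [max_eq_left h, max_eq_right (by linarith)]; ring

lemma pp_pull (k w u : ℝ) (hk : 0 < k) :
    k * max (w / k - u) 0 = max (w - k * u) 0 := by
  rw [mul_max_of_nonneg _ _ hk.le, mul_zero]
  congr 1
  field_simp


theorem zhao_popoviciu (I : Set ℝ) (f : ℝ → ℝ) (hf : ConvexOn ℝ I f)
    (n : ℕ) (hn : 2 ≤ n) (x : Fin n → ℝ) (hx : ∀ i, x i ∈ I) (m : ℤ) :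
    (if 1 ≤ m then ((n - 2).choose (m - 1).toNat : ℝ) else 0) * (∑ i, f (x i)) +
      (if 2 ≤ m then ((n - 2).choose (m - 2).toNat : ℝ) else 0) * (n : ℝ) *
        f ((∑ i, x i) / n) ≥
    (if 1 ≤ m then
        ∑ s ∈ Finset.univ.powersetCard m.toNat,
          (m : ℝ) * f ((∑ i ∈ s, x i) / (m : ℝ))
      else 0) := by
  by_cases hm1 : 1 ≤ m
  swap
  · rw [if_neg hm1, if_neg hm1, if_neg (by omega)]
    norm_num
  rw [if_pos hm1, if_pos hm1]
  set k := m.toNat with hkdef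
  have hk1 : 1 ≤ k := by omega
  have hmk : (m : ℝ) = (k : ℝ) := by
    have := Int.toNat_of_nonneg (show (0:ℤ) ≤ m by omega)
    exact_mod_cast this.symm
  have hm1t : (m - 1).toNat = k - 1 := by omega
  have hm2t : (m - 2).toNat = k - 2 := by omega
  rw [hmk, hm1t, hm2t]
  have hkR : (0:ℝ) < (k:ℝ) := by exact_mod_cast hk1
  have hnR : (0:ℝ) < (n:ℝ) := by positivity
  set A : ℝ := ((n - 2).choose (k-1) : ℝ) with hAdef
  set B : ℝ := (if 2 ≤ m then ((n - 2).choose (k - 2) : ℝ) else 0) with hBdef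
  have hB0 : 0 ≤ B := by rw [hBdef]; split <;> positivity
  set P := (Finset.univ : Finset (Fin n)).powersetCard k with hPdef
  set y : Unit ⊕ (Fin n ⊕ Finset (Fin n)) → ℝ :=
    Sum.elim (fun _ => (∑ i, x i)/(n:ℝ)) (Sum.elim x (fun S => (∑ i ∈ S, x i)/(k:ℝ)))
    with hydef
  set α : Unit ⊕ (Fin n ⊕ Finset (Fin n)) → ℝ :=
    Sum.elim (fun _ => B*(n:ℝ)) (Sum.elim (fun _ => A) (fun _ => -(k:ℝ))) with hαdef
  set sb : Finset (Unit ⊕ (Fin n ⊕ Finset (Fin n))) :=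
    (Finset.univ : Finset Unit).disjSum ((Finset.univ : Finset (Fin n)).disjSum P)
    with hsdef
  have hsum : ∀ F : Unit ⊕ (Fin n ⊕ Finset (Fin n)) → ℝ,
      ∑ i ∈ sb, F i = F (Sum.inl ()) + (∑ i, F (Sum.inr (Sum.inl i))
        + ∑ S ∈ P, F (Sum.inr (Sum.inr S))) := by
    intro F
    rw [hsdef, Finset.sum_disjSum, Finset.sum_disjSum]
    simp
  -- nat identities
  have hAB : A + B = ((n-1).choose (k-1) : ℝ) := by
    rcases Nat.lt_or_ge k 2 with hk2 | hk2
    · have hk1' : k = 1 := by omega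
      rw [hAdef, hBdef, if_neg (by omega), hk1']
      norm_num
    · rw [hAdef, hBdef, if_pos (by omega)]
      have hpas : (n-1).choose (k-1) = (n-2).choose (k-2) + (n-2).choose ((k-2)+1) := by
        rw [show n - 1 = (n-2)+1 by omega, show k - 1 = (k-2)+1 by omega,
          Nat.choose_succ_succ']
      rw [hpas, show (k-2)+1 = k-1 by omega]
      push_cast
      ring
  have hnk : (n : ℝ) * ((n-1).choose (k-1) : ℝ) = (k : ℝ) * ((n).choose k : ℝ) := by
    have h := Nat.add_one_mul_choose_eq (n-1) (k-1)
    rw [show n-1+1 = n by omega, show k-1+1 = k by omega] at h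
    exact_mod_cast h.trans (Nat.mul_comm _ _)
  have hdcx : ∀ z : Fin n → ℝ,
      ∑ S ∈ P, ∑ i ∈ S, z i = (((n:ℕ)-1).choose (k-1) : ℝ) * ∑ i, z i := by
    intro z
    have h := dc (Finset.univ : Finset (Fin n)) (k-1) z
    rw [show (k-1)+1 = k by omega, Finset.card_univ, Fintype.card_fin] at h
    exact h
  have hcardP : P.card = n.choose k := by
    rw [hPdef, card_powersetCard, Finset.card_univ, Fintype.card_fin]
  -- the key combinatorial bound
  have gc : ∀ z : Fin n → ℝ, (∑ i, z i) ≤ 0 →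
      ∑ S ∈ P, max (∑ i ∈ S, z i) 0 ≤ A * ∑ i, max (z i) 0 := by
    intro z hz
    have h := gclaim n (Finset.univ : Finset (Fin n)) (by simp) k 0 z (by simpa using hz)
    simp only [zero_add, max_self, mul_zero, if_neg (show ¬ k = 0 by omega),
      Finset.card_univ, Fintype.card_fin] at h
    rw [hPdef, hAdef]
    exact h
  -- hypotheses of the criterion
  have hyI : ∀ i ∈ sb, y i ∈ I := by
    rintro (u | j | S) hi
    · have hmem : (∑ i, (1/(n:ℝ)) • x i) ∈ I := by
        refine hf.1.sum_mem (fun i _ => by positivity) ?_ (fun i _ => hx i)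
        rw [Finset.sum_const, Finset.card_univ, Fintype.card_fin, nsmul_eq_mul]
        field_simp
      have : (∑ i, (1/(n:ℝ)) • x i) = (∑ i, x i)/(n:ℝ) := by
        rw [Finset.sum_div]
        exact Finset.sum_congr rfl (fun i _ => by rw [smul_eq_mul]; ring)
      simpa [hydef, ← this] using hmem
    · simpa [hydef] using hx j
    · have hS : S ∈ P := by
        rw [hsdef] at hi
        simpa using hi
      have hScard : S.card = k := (mem_powersetCard.1 hS).2
      have hmem : (∑ i ∈ S, (1/(k:ℝ)) • x i) ∈ I := by
        refine hf.1.sum_mem (fun i _ => by positivity) ?_ (fun i _ => hx i)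
        rw [Finset.sum_const, hScard, nsmul_eq_mul]
        field_simp
      have : (∑ i ∈ S, (1/(k:ℝ)) • x i) = (∑ i ∈ S, x i)/(k:ℝ) := by
        rw [Finset.sum_div]
        exact Finset.sum_congr rfl (fun i _ => by rw [smul_eq_mul]; ring)
      simpa [hydef, ← this] using hmem
  have h1 : ∑ i ∈ sb, α i = 0 := by
    rw [hsum α]
    simp only [hαdef, Sum.elim_inl, Sum.elim_inr, Finset.sum_const, Finset.card_univ,
      Fintype.card_fin, nsmul_eq_mul, hcardP]
    linear_combination (n:ℝ) * hAB + hnk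
  have h2 : ∑ i ∈ sb, α i * y i = 0 := by
    rw [hsum (fun i => α i * y i)]
    simp only [hαdef, hydef, Sum.elim_inl, Sum.elim_inr]
    have e1 : ∑ i, A * x i = A * ∑ i, x i := by rw [Finset.mul_sum]
    have e2 : ∑ S ∈ P, -(k:ℝ) * ((∑ i ∈ S, x i)/(k:ℝ)) = - ∑ S ∈ P, ∑ i ∈ S, x i := by
      rw [← Finset.sum_neg_distrib]
      refine Finset.sum_congr rfl (fun S _ => ?_)
      field_simp
    rw [e1, e2, hdcx x]
    field_simp
    linear_combination (∑ i, x i) * hAB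
  have h3 : ∀ u : ℝ, 0 ≤ ∑ i ∈ sb, α i * max (y i - u) 0 := by
    intro u
    rw [hsum (fun i => α i * max (y i - u) 0)]
    simp only [hαdef, hydef, Sum.elim_inl, Sum.elim_inr]
    have eS : ∑ S ∈ P, -(k:ℝ) * max ((∑ i ∈ S, x i)/(k:ℝ) - u) 0
        = - ∑ S ∈ P, max (∑ i ∈ S, (x i - u)) 0 := by
      rw [← Finset.sum_neg_distrib]
      refine Finset.sum_congr rfl (fun S hS => ?_)
      have hScard : S.card = k := (mem_powersetCard.1 hS).2
      have hsub : ∑ i ∈ S, (x i - u) = (∑ i ∈ S, x i) - (k:ℝ)*u := by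
        rw [Finset.sum_sub_distrib, Finset.sum_const, hScard, nsmul_eq_mul]
      rw [hsub, ← pp_pull (k:ℝ) _ u hkR]
      ring
    rw [eS]
    have hBn : 0 ≤ B*(n:ℝ) * max ((∑ i, x i)/(n:ℝ) - u) 0 :=
      mul_nonneg (mul_nonneg hB0 hnR.le) (le_max_right _ _)
    rcases le_total (∑ i, x i) ((n:ℝ)*u) with hc | hc
    · -- u at least the mean
      have h4 := gc (fun i => x i - u) (by
        rw [Finset.sum_sub_distrib, Finset.sum_const, Finset.card_univ, Fintype.card_fin,
          nsmul_eq_mul]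
        linarith)
      rw [← Finset.mul_sum]
      linarith [h4, hBn]
    · -- u at most the mean
      have e0 : max ((∑ i, x i)/(n:ℝ) - u) 0
          = ((∑ i, x i)/(n:ℝ) - u) + max (u - (∑ i, x i)/(n:ℝ)) 0 := by
        have h := pp_shift ((∑ i, x i)/(n:ℝ) - u)
        rw [show -((∑ i, x i)/(n:ℝ) - u) = u - (∑ i, x i)/(n:ℝ) by ring] at h
        exact h
      have e1 : ∀ i : Fin n, max (x i - u) 0 = (x i - u) + max (u - x i) 0 := by
        intro i
        have h := pp_shift (x i - u)
        rw [show -(x i - u) = u - x i by ring] at h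
        exact h
      have e2 : ∀ S ∈ P, max (∑ i ∈ S, (x i - u)) 0
          = (∑ i ∈ S, (x i - u)) + max (∑ i ∈ S, (u - x i)) 0 := by
        intro S _
        have h := pp_shift (∑ i ∈ S, (x i - u))
        rw [show -(∑ i ∈ S, (x i - u)) = ∑ i ∈ S, (u - x i) by
          rw [← Finset.sum_neg_distrib]; exact Finset.sum_congr rfl (fun i _ => by ring)] at h
        exact h
      have e2sum : ∑ S ∈ P, max (∑ i ∈ S, (x i - u)) 0
          = ∑ S ∈ P, ((∑ i ∈ S, (x i - u)) + max (∑ i ∈ S, (u - x i)) 0) :=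
        Finset.sum_congr rfl e2
      rw [e0, e2sum]
      simp only [e1]
      rw [Finset.sum_add_distrib]
      have h5 := gc (fun i => u - x i) (by
        rw [Finset.sum_sub_distrib, Finset.sum_const, Finset.card_univ, Fintype.card_fin,
          nsmul_eq_mul]
        linarith)
      have hBn' : 0 ≤ B*(n:ℝ) * max (u - (∑ i, x i)/(n:ℝ)) 0 :=
      mul_nonneg (mul_nonneg hB0 hnR.le) (le_max_right _ _)
      -- linear identity
      have hsx : ∑ i : Fin n, (x i - u) = (∑ i, x i) - (n:ℝ)*u := by
        rw [Finset.sum_sub_distrib, Finset.sum_const, Finset.card_univ, Fintype.card_fin,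
          nsmul_eq_mul]
      have hid : B*(n:ℝ) * ((∑ i, x i)/(n:ℝ) - u) + A * ∑ i : Fin n, (x i - u)
          - ∑ S ∈ P, ∑ i ∈ S, (x i - u) = 0 := by
        rw [hdcx (fun i => x i - u), hsx]
        field_simp
        linear_combination ((∑ i, x i) - (n:ℝ)*u) * hAB
      have hmulsum : ∑ i : Fin n, A * ((x i - u) + max (u - x i) 0)
          = A * ∑ i : Fin n, (x i - u) + A * ∑ i : Fin n, max (u - x i) 0 := by
        rw [Finset.mul_sum, Finset.mul_sum, ← Finset.sum_add_distrib]
        exact Finset.sum_congr rfl (fun i _ => by ring)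
      linarith [h5, hBn', hid, hmulsum]
  -- conclusion
  have hcrit := criterion hf sb y α hyI h1 h2 h3
  rw [hsum (fun i => α i * f (y i))] at hcrit
  simp only [hαdef, hydef, Sum.elim_inl, Sum.elim_inr] at hcrit
  rw [ge_iff_le]
  have eA : ∑ i, A * f (x i) = A * ∑ i, f (x i) := by rw [Finset.mul_sum]
  have eK : ∑ S ∈ P, -(k:ℝ) * f ((∑ i ∈ S, x i)/(k:ℝ))
      = - ∑ S ∈ P, (k:ℝ) * f ((∑ i ∈ S, x i)/(k:ℝ)) := by
    rw [← Finset.sum_neg_distrib]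
    exact Finset.sum_congr rfl (fun S _ => by ring)
  rw [eA, eK] at hcrit
  rw [hPdef] at hcrit
  linarith [hcrit]
end

section
/- Let f be convex on an interval I ⊆ ℝ, let x₁, ..., xₙ ∈ I, let w₁, ..., wₙ be nonnegative reals, and let m be an integer with 1 ≤ m ≤ n. Assume w₁+...+wₙ ≠ 0, and that w_{i₁}+...+w_{iₘ} ≠ 0 for every m-element subset {i₁ < ... < iₘ} of {1,...,n}. Then C(n−2, m−1)·∑_{i=1}^n wᵢ·f(xᵢ) + C(n−2, m−2)·(∑ wᵢ)·f((∑ wᵢxᵢ)/(∑ wᵢ)) ≥ ∑_{1≤i₁<...<iₘ≤n} (w_{i₁}+...+w_{iₘ})·f((w_{i₁}x_{i₁}+...+w_{iₘ}x_{iₘ})/(w_{i₁}+...+w_{iₘ})). -/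
open Finset


lemma count_mem (n m : ℕ) (hm : 1 ≤ m) (i : Fin n) :
    ((Finset.univ.powersetCard m : Finset (Finset (Fin n))).filter (fun s => i ∈ s)).card
      = (n-1).choose (m-1) := by
  have : ((Finset.univ.powersetCard m : Finset (Finset (Fin n))).filter (fun s => i ∈ s)).card
      = ((Finset.univ.erase i).powersetCard (m-1)).card := by
    apply Finset.card_bij (fun s _ => s.erase i)
    · intro s hs
      simp only [mem_filter, Finset.mem_powersetCard] at hs
      rw [Finset.mem_powersetCard]
      refine ⟨fun j hj => ?_, ?_⟩
      · rw [Finset.mem_erase] at hj ⊢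
        exact ⟨hj.1, Finset.mem_univ _⟩
      · rw [Finset.card_erase_of_mem hs.2, hs.1.2]
    · intro s hs t ht h
      simp only [mem_filter] at hs ht
      rw [← Finset.insert_erase hs.2, h, Finset.insert_erase ht.2]
    · intro t ht
      rw [Finset.mem_powersetCard] at ht
      have hit : i ∉ t := fun h => (Finset.mem_erase.1 (ht.1 h)).1 rfl
      refine ⟨insert i t, ?_, ?_⟩
      · simp only [mem_filter, Finset.mem_powersetCard]
        exact ⟨⟨Finset.subset_univ _, by rw [Finset.card_insert_of_notMem hit, ht.2]; omega⟩,
          Finset.mem_insert_self _ _⟩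
      · rw [Finset.erase_insert hit]
  rw [this, Finset.card_powersetCard, Finset.card_erase_of_mem (Finset.mem_univ _), Finset.card_univ,
    Fintype.card_fin]

lemma count_mem_notmem_le (n m : ℕ) (i j : Fin n) (hij : i ≠ j) :
    ((Finset.univ.powersetCard m : Finset (Finset (Fin n))).filter (fun s => i ∈ s ∧ j ∉ s)).card
      ≤ (n-2).choose (m-1) := by
  have h2 : (((Finset.univ.erase j).erase i).powersetCard (m-1)).card = (n-2).choose (m-1) := by
    rw [Finset.card_powersetCard, Finset.card_erase_of_mem, Finset.card_erase_of_mem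
      (Finset.mem_univ _), Finset.card_univ, Fintype.card_fin]
    · rfl
    · exact Finset.mem_erase.2 ⟨hij, Finset.mem_univ _⟩
  rw [← h2]
  apply Finset.card_le_card_of_injOn (fun s => s.erase i)
  · intro s hs
    simp only [Finset.coe_filter, Set.mem_setOf_eq, Finset.mem_powersetCard] at hs
    rw [Finset.mem_coe, Finset.mem_powersetCard]
    refine ⟨fun a ha => ?_, ?_⟩
    · rw [Finset.mem_erase] at ha ⊢
      refine ⟨ha.1, Finset.mem_erase.2 ⟨fun h => hs.2.2 (h ▸ ha.2), Finset.mem_univ _⟩⟩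
    · rw [Finset.card_erase_of_mem hs.2.1, hs.1.2]
  · intro s hs t ht h
    simp only [Finset.coe_filter, Set.mem_setOf_eq] at hs ht
    simp only [] at h
    rw [← Finset.insert_erase hs.2.1, h, Finset.insert_erase ht.2.1]

lemma sum_powersetCard_sum (n m : ℕ) (hm : 1 ≤ m) (v : Fin n → ℝ) :
    ∑ s ∈ Finset.univ.powersetCard m, ∑ i ∈ s, v i = ((n-1).choose (m-1) : ℝ) * ∑ i, v i := by
  have h1 : ∀ s ∈ Finset.univ.powersetCard m, ∑ i ∈ s, v i
      = ∑ i, if i ∈ s then v i else 0 := by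
    intro s _
    rw [Finset.sum_ite_mem, Finset.univ_inter]
  rw [Finset.sum_congr rfl h1, Finset.sum_comm]
  rw [Finset.mul_sum]
  apply Finset.sum_congr rfl
  intro i _
  rw [Finset.sum_ite, Finset.sum_const_zero, add_zero, Finset.sum_const, count_mem n m hm i,
    nsmul_eq_mul]

lemma pascal_cast (n m : ℕ) (hn : 2 ≤ n) (hm : 1 ≤ m) :
    ((n-1).choose (m-1) : ℝ)
      = ((n-2).choose (m-1) : ℝ) + (if 2 ≤ m then ((n-2).choose (m-2) : ℝ) else 0) := by
  rcases eq_or_lt_of_le hm with h1 | h2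
  · simp [← h1]
  · have hm2 : 2 ≤ m := h2
    rw [if_pos hm2]
    have e1 : n - 1 = (n-2) + 1 := by omega
    have e2 : m - 1 = (m-2) + 1 := by omega
    rw [e1, e2, Nat.choose_succ_succ]
    push_cast
    ring

lemma combC (n m : ℕ) (hn : 2 ≤ n) (hm1 : 1 ≤ m) (u : Fin n → ℝ) :
    ∑ s ∈ Finset.univ.powersetCard m, max (∑ i ∈ s, u i) 0
      ≤ ((n-2).choose (m-1) : ℝ) * ∑ i, max (u i) 0
        + (if 2 ≤ m then ((n-2).choose (m-2) : ℝ) else 0) * max (∑ i, u i) 0 := by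
  set C1 : ℝ := ((n-2).choose (m-1) : ℝ) with hC1
  set C2 : ℝ := (if 2 ≤ m then ((n-2).choose (m-2) : ℝ) else 0) with hC2
  have hC1nn : 0 ≤ C1 := Nat.cast_nonneg _
  have hC2nn : 0 ≤ C2 := by
    rw [hC2]; split <;> [exact Nat.cast_nonneg _; exact le_refl 0]
  have hPascal : ((n-1).choose (m-1) : ℝ) = C1 + C2 := pascal_cast n m hn hm1
  set F : Finset (Finset (Fin n)) :=
    (Finset.univ.powersetCard m).filter (fun s => 0 ≤ ∑ i ∈ s, u i) with hF
  set cN : Fin n → ℕ := fun i => (F.filter (fun s => i ∈ s)).card with hcN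
  -- Step 1
  have step1 : ∑ s ∈ Finset.univ.powersetCard m, max (∑ i ∈ s, u i) 0
      = ∑ s ∈ F, ∑ i ∈ s, u i := by
    rw [hF, Finset.sum_filter]
    apply Finset.sum_congr rfl
    intro s _
    split
    · exact max_eq_left ‹_›
    · exact max_eq_right (le_of_lt (lt_of_not_ge ‹_›))
  -- Step 2
  have step2 : ∑ s ∈ F, ∑ i ∈ s, u i = ∑ i, (cN i : ℝ) * u i := by
    have h1 : ∀ s ∈ F, ∑ i ∈ s, u i = ∑ i, if i ∈ s then u i else 0 := by
      intro s _
      rw [Finset.sum_ite_mem, Finset.univ_inter]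
    rw [Finset.sum_congr rfl h1, Finset.sum_comm]
    apply Finset.sum_congr rfl
    intro i _
    rw [Finset.sum_ite, Finset.sum_const_zero, add_zero, Finset.sum_const, nsmul_eq_mul]
  -- bounds
  have K1 : ∀ i, cN i ≤ (n-1).choose (m-1) := by
    intro i
    rw [← count_mem n m hm1 i]
    apply Finset.card_le_card
    intro s hs
    rw [Finset.mem_filter] at hs ⊢
    exact ⟨Finset.mem_of_mem_filter _ hs.1, hs.2⟩
  have K2 : ∀ i j, cN i ≤ cN j + (n-2).choose (m-1) := by
    intro i j
    rcases eq_or_ne i j with rfl | hij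
    · omega
    have hsub : F.filter (fun s => i ∈ s)
        ⊆ (F.filter (fun s => i ∈ s ∧ j ∈ s)) ∪ (F.filter (fun s => i ∈ s ∧ j ∉ s)) := by
      intro s hs
      simp only [Finset.mem_union, Finset.mem_filter] at hs ⊢
      tauto
    have h1 := (Finset.card_le_card hsub).trans (Finset.card_union_le _ _)
    have h2 : (F.filter (fun s => i ∈ s ∧ j ∈ s)).card ≤ (F.filter (fun s => j ∈ s)).card := by
      apply Finset.card_le_card
      intro s hs
      rw [Finset.mem_filter] at hs ⊢
      exact ⟨hs.1, hs.2.2⟩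
    have h3 : (F.filter (fun s => i ∈ s ∧ j ∉ s)).card ≤ (n-2).choose (m-1) := by
      refine le_trans (Finset.card_le_card ?_) (count_mem_notmem_le n m i j hij)
      intro s hs
      rw [Finset.mem_filter] at hs ⊢
      exact ⟨Finset.mem_of_mem_filter _ hs.1, hs.2⟩
    simp only [hcN]
    omega
  -- choose lam
  have hne : (Finset.univ : Finset (Fin n)).Nonempty := by
    rw [Finset.univ_nonempty_iff]
    exact Fin.pos_iff_nonempty.1 (by omega)
  obtain ⟨i0, _, hi0⟩ := Finset.exists_min_image Finset.univ cN hne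
  set lam : ℝ := min (cN i0 : ℝ) C2 with hlam
  have hlam1 : ∀ i, lam ≤ (cN i : ℝ) := fun i =>
    le_trans (min_le_left _ _) (Nat.cast_le.2 (hi0 i (Finset.mem_univ _)))
  have hlam2 : lam ≤ C2 := min_le_right _ _
  have hlam3 : 0 ≤ lam := le_min (Nat.cast_nonneg _) hC2nn
  have hlam4 : ∀ i, (cN i : ℝ) - lam ≤ C1 := by
    intro i
    rcases le_total (cN i0 : ℝ) C2 with h | h
    · rw [hlam, min_eq_left h]
      have h4 := K2 i i0
      have h5 : (cN i : ℝ) ≤ (cN i0 : ℝ) + ((n-2).choose (m-1) : ℝ) := by exact_mod_cast h4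
      rw [← hC1] at h5
      linarith
    · rw [hlam, min_eq_right h]
      have := K1 i
      have : (cN i : ℝ) ≤ ((n-1).choose (m-1) : ℝ) := by exact_mod_cast this
      linarith [hPascal]
  -- final
  rw [step1, step2]
  have key : ∑ i, (cN i : ℝ) * u i
      = (∑ i, ((cN i : ℝ) - lam) * u i) + lam * ∑ i, u i := by
    rw [Finset.mul_sum, ← Finset.sum_add_distrib]
    apply Finset.sum_congr rfl
    intro i _
    ring
  rw [key]
  apply add_le_add
  · rw [Finset.mul_sum]
    apply Finset.sum_le_sum
    intro i _
    rcases le_or_gt 0 (u i) with h | h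
    · rw [max_eq_left h]
      exact mul_le_mul_of_nonneg_right (by linarith [hlam4 i]) h
    · rw [max_eq_right (le_of_lt h)]
      rw [mul_zero]
      exact mul_nonpos_of_nonneg_of_nonpos (by linarith [hlam1 i]) (le_of_lt h)
  · calc lam * ∑ i, u i ≤ lam * max (∑ i, u i) 0 :=
          mul_le_mul_of_nonneg_left (le_max_left _ _) hlam3
      _ ≤ C2 * max (∑ i, u i) 0 :=
          mul_le_mul_of_nonneg_right hlam2 (le_max_right _ _)

lemma lemmaA {I : Set ℝ} {f : ℝ → ℝ} (hf : ConvexOn ℝ I f) {ι : Type*} [Fintype ι]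
    (y : ι → ℝ) (lam : ι → ℝ) (hy : ∀ i, y i ∈ I)
    (h0 : ∑ i, lam i = 0) (h1 : ∑ i, lam i * y i = 0)
    (h2 : ∀ t : ℝ, 0 ≤ ∑ i, lam i * max (y i - t) 0) :
    0 ≤ ∑ i, lam i * f (y i) := by
  rcases isEmpty_or_nonempty ι with hι | hι
  · simp
  set S : Finset ℝ := Finset.image y Finset.univ with hS
  set L : List ℝ := S.sort (· ≤ ·) with hL
  set k : ℕ := L.length with hk
  have hsorted : L.Pairwise (· < ·) := S.sortedLT_sort.pairwise
  have hkpos : 0 < k := by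
    rw [hk, hL, Finset.length_sort, hS]
    exact Finset.card_pos.2 ((Finset.univ_nonempty).image y)
  set E : ℕ → ℝ := fun j => L.getD j 0 with hE
  have hEget : ∀ j (h : j < k), E j = L.get ⟨j, h⟩ := by
    intro j h
    rw [hE]
    simp only [List.getD_eq_getElem L 0 h, List.get_eq_getElem]
  have hEmono : ∀ j1 j2, j1 < j2 → j2 < k → E j1 < E j2 := by
    intro j1 j2 h12 h2k
    rw [hEget j1 (lt_trans h12 h2k), hEget j2 h2k]
    exact hsorted.rel_get_of_lt h12
  have hEmono' : ∀ j1 j2, j1 ≤ j2 → j2 < k → E j1 ≤ E j2 := by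
    intro j1 j2 h12 h2k
    rcases eq_or_lt_of_le h12 with rfl | h
    · exact le_refl _
    · exact le_of_lt (hEmono _ _ h h2k)
  have hEI : ∀ j, j < k → E j ∈ I := by
    intro j h
    have : E j ∈ S := by
      rw [← Finset.mem_sort (α := ℝ) (· ≤ ·), ← hL, hEget j h]
      exact List.get_mem _ _
    rw [hS] at this
    obtain ⟨i, _, hi⟩ := Finset.mem_image.1 this
    exact hi ▸ hy i
  have hyr : ∀ i : ι, ∃ r, r < k ∧ y i = E r := by
    intro i
    have : y i ∈ L := by
      rw [hL, Finset.mem_sort (α := ℝ) (· ≤ ·), hS]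
      exact Finset.mem_image_of_mem y (Finset.mem_univ i)
    obtain ⟨r, hr, hre⟩ := List.mem_iff_getElem.1 this
    exact ⟨r, hr, by rw [hEget r hr]; simp [hre]⟩
  set d : ℕ → ℝ := fun j => (f (E (j+1)) - f (E j)) / (E (j+1) - E j) with hd
  set H : ℕ → ℝ := fun j => ∑ i, lam i * max (y i - E j) 0 with hH
  have hHnn : ∀ j, 0 ≤ H j := fun j => h2 (E j)
  set K : ℕ := k - 1 with hK
  -- pointwise decomposition
  have key : ∀ i : ι, f (y i)
      = f (E 0) + ∑ j ∈ Finset.range K, d j * (max (y i - E j) 0 - max (y i - E (j+1)) 0) := by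
    intro i
    obtain ⟨r, hrk, hre⟩ := hyr i
    rw [hre]
    have hrK : r ≤ K := by omega
    have hsplit : ∑ j ∈ Finset.range K, d j * (max (E r - E j) 0 - max (E r - E (j+1)) 0)
        = ∑ j ∈ Finset.range r, d j * (max (E r - E j) 0 - max (E r - E (j+1)) 0) := by
      symm
      apply Finset.sum_subset (Finset.range_subset_range.2 hrK)
      intro j hjK hjr
      rw [Finset.mem_range] at hjK hjr
      push_neg at hjr
      have e1 : max (E r - E j) 0 = 0 := max_eq_right (by linarith [hEmono' r j hjr (by omega)])
      have e2 : max (E r - E (j+1)) 0 = 0 :=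
        max_eq_right (by linarith [hEmono' r (j+1) (by omega) (by omega)])
      rw [e1, e2]
      ring
    rw [hsplit]
    have hterm : ∀ j ∈ Finset.range r,
        d j * (max (E r - E j) 0 - max (E r - E (j+1)) 0) = f (E (j+1)) - f (E j) := by
      intro j hj
      rw [Finset.mem_range] at hj
      have hj1k : j + 1 < k := by omega
      have e1 : max (E r - E j) 0 = E r - E j :=
        max_eq_left (by linarith [hEmono' j r (by omega) hrk])
      have e2 : max (E r - E (j+1)) 0 = E r - E (j+1) :=
        max_eq_left (by linarith [hEmono' (j+1) r (by omega) hrk])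
      have hne : E (j+1) - E j ≠ 0 := ne_of_gt (by linarith [hEmono j (j+1) (by omega) hj1k])
      rw [e1, e2, hd]
      field_simp
      ring
    rw [Finset.sum_congr rfl hterm, Finset.sum_range_sub (fun j => f (E j)) r]
    ring
  -- main computation
  have main : ∑ i, lam i * f (y i) = ∑ j ∈ Finset.range K, d j * (H j - H (j+1)) := by
    calc ∑ i, lam i * f (y i)
        = ∑ i, lam i * (f (E 0)
            + ∑ j ∈ Finset.range K, d j * (max (y i - E j) 0 - max (y i - E (j+1)) 0)) := by
          exact Finset.sum_congr rfl fun i _ => by rw [← key i]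
      _ = (∑ i, lam i) * f (E 0)
            + ∑ i, ∑ j ∈ Finset.range K,
               lam i * (d j * (max (y i - E j) 0 - max (y i - E (j+1)) 0)) := by
          rw [Finset.sum_mul, ← Finset.sum_add_distrib]
          exact Finset.sum_congr rfl fun i _ => by rw [mul_add, Finset.mul_sum]
      _ = ∑ j ∈ Finset.range K, ∑ i,
            lam i * (d j * (max (y i - E j) 0 - max (y i - E (j+1)) 0)) := by
          rw [h0, zero_mul, zero_add, Finset.sum_comm]
      _ = ∑ j ∈ Finset.range K, d j * (H j - H (j+1)) := by
          apply Finset.sum_congr rfl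
          intro j _
          rw [hH]
          simp only []
          rw [← Finset.sum_sub_distrib, Finset.mul_sum]
          apply Finset.sum_congr rfl
          intro i _
          ring
  rw [main]
  rcases Nat.eq_zero_or_pos K with hK0 | hKpos
  · rw [hK0]
    simp
  -- H 0 = 0 and H K = 0
  have hH0 : H 0 = 0 := by
    rw [hH]
    simp only []
    have : ∀ i : ι, max (y i - E 0) 0 = y i - E 0 := by
      intro i
      obtain ⟨r, hrk, hre⟩ := hyr i
      exact max_eq_left (by rw [hre]; linarith [hEmono' 0 r (by omega) hrk])
    rw [Finset.sum_congr rfl fun i _ => by rw [this i]]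
    have : ∑ i, lam i * (y i - E 0) = ∑ i, lam i * y i - (∑ i, lam i) * E 0 := by
      rw [Finset.sum_mul, ← Finset.sum_sub_distrib]
      exact Finset.sum_congr rfl fun i _ => by ring
    rw [this, h0, h1]
    ring
  have hHK : H K = 0 := by
    rw [hH]
    simp only []
    apply Finset.sum_eq_zero
    intro i _
    obtain ⟨r, hrk, hre⟩ := hyr i
    have : max (y i - E K) 0 = 0 :=
      max_eq_right (by rw [hre]; linarith [hEmono' r K (by omega) (by omega)])
    rw [this, mul_zero]
  -- Abel
  have abel : ∑ j ∈ Finset.range K, d j * (H j - H (j+1))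
      = ∑ j ∈ Finset.range (K-1), (d (j+1) - d j) * H (j+1) := by
    have e1 : ∑ j ∈ Finset.range K, d j * (H j - H (j+1))
        = ∑ j ∈ Finset.range K, d j * H j - ∑ j ∈ Finset.range K, d j * H (j+1) := by
      rw [← Finset.sum_sub_distrib]
      exact Finset.sum_congr rfl fun j _ => by ring
    obtain ⟨K', hKe⟩ : ∃ K', K = K' + 1 := ⟨K - 1, by omega⟩
    have hK' : K - 1 = K' := by omega
    rw [hK']
    have e2 : ∑ j ∈ Finset.range K, d j * H j
        = d 0 * H 0 + ∑ j ∈ Finset.range K', d (j+1) * H (j+1) := by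
      rw [hKe, Finset.sum_range_succ' (fun j => d j * H j) K']
      ring
    have e3 : ∑ j ∈ Finset.range K, d j * H (j+1)
        = ∑ j ∈ Finset.range K', d j * H (j+1) + d K' * H (K'+1) := by
      rw [hKe, Finset.sum_range_succ (fun j => d j * H (j+1)) K']
    have hHK' : H (K'+1) = 0 := by rw [← hKe]; exact hHK
    rw [e1, e2, e3, hH0, hHK', mul_zero, zero_add, mul_zero, add_zero,
      ← Finset.sum_sub_distrib]
    exact Finset.sum_congr rfl fun j _ => by ring
  rw [abel]
  apply Finset.sum_nonneg
  intro j hj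
  rw [Finset.mem_range] at hj
  have h1k : j + 1 < k := by omega
  have h2k : j + 2 < k := by omega
  have hdmono : d j ≤ d (j+1) := by
    rw [hd]
    simp only []
    have := hf.slope_mono_adjacent (hEI j (by omega)) (hEI (j+2) h2k)
      (hEmono j (j+1) (by omega) h1k) (hEmono (j+1) (j+2) (by omega) h2k)
    convert this using 3
  exact mul_nonneg (by linarith) (hHnn (j+1))

lemma div_mem_of_convex {α : Type*} (I : Set ℝ) (hI : Convex ℝ I) (t : Finset α)
    (w z : α → ℝ) (hw : ∀ i ∈ t, 0 ≤ w i) (hpos : 0 < ∑ i ∈ t, w i)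
    (hz : ∀ i ∈ t, z i ∈ I) : (∑ i ∈ t, w i * z i) / (∑ i ∈ t, w i) ∈ I := by
  have h := hI.centerMass_mem hw hpos hz
  rw [Finset.centerMass] at h
  simpa [smul_eq_mul, div_eq_inv_mul] using h

theorem weighted_zhao_popoviciu (I : Set ℝ) (f : ℝ → ℝ) (hf : ConvexOn ℝ I f)
    (n : ℕ) (hn : 2 ≤ n) (x : Fin n → ℝ) (hx : ∀ i, x i ∈ I)
    (w : Fin n → ℝ) (hw : ∀ i, 0 ≤ w i)
    (m : ℕ) (hm1 : 1 ≤ m) (hmn : m ≤ n)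
    (hwsum : ∑ i, w i ≠ 0)
    (hws : ∀ s ∈ Finset.univ.powersetCard m, ∑ i ∈ s, w i ≠ 0) :
    ((n - 2).choose (m - 1) : ℝ) * (∑ i, w i * f (x i)) +
      (if 2 ≤ m then ((n - 2).choose (m - 2) : ℝ) else 0) * (∑ i, w i) *
        f ((∑ i, w i * x i) / (∑ i, w i)) ≥
    ∑ s ∈ Finset.univ.powersetCard m,
      (∑ i ∈ s, w i) * f ((∑ i ∈ s, w i * x i) / (∑ i ∈ s, w i)) := by
  set C1 : ℝ := ((n - 2).choose (m - 1) : ℝ) with hC1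
  set C2 : ℝ := (if 2 ≤ m then ((n - 2).choose (m - 2) : ℝ) else 0) with hC2
  set W : ℝ := ∑ i, w i with hW
  have hWpos : 0 < W := lt_of_le_of_ne (Finset.sum_nonneg fun i _ => hw i) (Ne.symm hwsum)
  set b : ℝ := (∑ i, w i * x i) / W with hb
  set P : Finset (Finset (Fin n)) := Finset.univ.powersetCard m with hP
  have hWs : ∀ s ∈ P, 0 < ∑ i ∈ s, w i := fun s hs =>
    lt_of_le_of_ne (Finset.sum_nonneg fun i _ => hw i) (Ne.symm (hws s hs))
  have hbI : b ∈ I := div_mem_of_convex I hf.1 Finset.univ w x (fun i _ => hw i)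
    (lt_of_le_of_ne (Finset.sum_nonneg fun i _ => hw i) (Ne.symm hwsum)) (fun i _ => hx i)
  have hbsI : ∀ s ∈ P, (∑ i ∈ s, w i * x i) / (∑ i ∈ s, w i) ∈ I := fun s hs =>
    div_mem_of_convex I hf.1 s w x (fun i _ => hw i) (hWs s hs) (fun i _ => hx i)
  -- index type
  set lam : ((Fin n ⊕ Unit) ⊕ {s // s ∈ P}) → ℝ :=
    Sum.elim (Sum.elim (fun i => C1 * w i) (fun _ => C2 * W))
      (fun s => -(∑ i ∈ s.1, w i)) with hlam
  set yv : ((Fin n ⊕ Unit) ⊕ {s // s ∈ P}) → ℝ :=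
    Sum.elim (Sum.elim x (fun _ => b))
      (fun s => (∑ i ∈ s.1, w i * x i) / (∑ i ∈ s.1, w i)) with hyv
  have hPascal : ((n-1).choose (m-1) : ℝ) = C1 + C2 := pascal_cast n m hn hm1
  have hC1nn : 0 ≤ C1 := Nat.cast_nonneg _
  have hC2nn : 0 ≤ C2 := by rw [hC2]; split <;> [exact Nat.cast_nonneg _; exact le_refl 0]
  have hy : ∀ a, yv a ∈ I := by
    rintro ((i | u) | s)
    · exact hx i
    · exact hbI
    · exact hbsI s.1 s.2
  have h0 : ∑ a, lam a = 0 := by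
    rw [hlam]
    rw [Fintype.sum_sum_type, Fintype.sum_sum_type]
    simp only [Sum.elim_inl, Sum.elim_inr, Finset.univ_unique, Finset.sum_singleton]
    rw [Finset.sum_coe_sort P (fun s => -(∑ i ∈ s, w i)), Finset.sum_neg_distrib, hP,
      sum_powersetCard_sum n m hm1 w, ← Finset.mul_sum, ← hW, hPascal]
    ring
  have hXs : ∀ s ∈ P, (∑ i ∈ s, w i) * ((∑ i ∈ s, w i * x i) / (∑ i ∈ s, w i))
      = ∑ i ∈ s, w i * x i := fun s hs => by
    rw [mul_comm, div_mul_cancel₀ _ (hws s hs)]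
  have hXb : W * b = ∑ i, w i * x i := by
    rw [hb, mul_comm, div_mul_cancel₀ _ hwsum]
  have h1 : ∑ a, lam a * yv a = 0 := by
    rw [hlam, hyv]
    rw [Fintype.sum_sum_type, Fintype.sum_sum_type]
    simp only [Sum.elim_inl, Sum.elim_inr, Finset.univ_unique, Finset.sum_singleton]
    rw [Finset.sum_coe_sort P
      (fun s => -(∑ i ∈ s, w i) * ((∑ i ∈ s, w i * x i) / (∑ i ∈ s, w i)))]
    have e1 : ∑ s ∈ P, -(∑ i ∈ s, w i) * ((∑ i ∈ s, w i * x i) / (∑ i ∈ s, w i))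
        = -∑ s ∈ P, ∑ i ∈ s, w i * x i := by
      rw [← Finset.sum_neg_distrib]
      exact Finset.sum_congr rfl fun s hs => by rw [neg_mul, hXs s hs]
    rw [e1, hP, sum_powersetCard_sum n m hm1 (fun i => w i * x i)]
    have e2 : ∑ i, C1 * w i * x i = C1 * ∑ i, w i * x i := by
      rw [Finset.mul_sum]; exact Finset.sum_congr rfl fun i _ => by ring
    rw [e2]
    have e3 : C2 * W * b = C2 * ∑ i, w i * x i := by rw [mul_assoc, hXb]
    rw [e3, hPascal]
    ring
  have h2 : ∀ t : ℝ, 0 ≤ ∑ a, lam a * max (yv a - t) 0 := by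
    intro t
    set u : Fin n → ℝ := fun i => w i * (x i - t) with hu
    rw [hlam, hyv]
    rw [Fintype.sum_sum_type, Fintype.sum_sum_type]
    simp only [Sum.elim_inl, Sum.elim_inr, Finset.univ_unique, Finset.sum_singleton]
    rw [Finset.sum_coe_sort P
      (fun s => -(∑ i ∈ s, w i) * max ((∑ i ∈ s, w i * x i) / (∑ i ∈ s, w i) - t) 0)]
    have key : ∀ (c d : ℝ), 0 < c → c * max (d / c - t) 0 = max (d - c * t) 0 := by
      intro c d hc
      rw [mul_max_of_nonneg _ _ (le_of_lt hc), mul_zero, mul_sub, mul_div_cancel₀ _ (ne_of_gt hc)]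
    have e1 : ∀ s ∈ P, -(∑ i ∈ s, w i) * max ((∑ i ∈ s, w i * x i) / (∑ i ∈ s, w i) - t) 0
        = -(max (∑ i ∈ s, u i) 0) := by
      intro s hs
      rw [neg_mul, key _ _ (hWs s hs)]
      congr 2
      rw [hu, Finset.sum_mul, ← Finset.sum_sub_distrib]
      exact Finset.sum_congr rfl fun i _ => by ring
    rw [Finset.sum_congr rfl e1, Finset.sum_neg_distrib]
    have e2 : ∀ i, C1 * w i * max (x i - t) 0 = C1 * max (u i) 0 := by
      intro i
      rw [hu, mul_assoc, mul_max_of_nonneg _ _ (hw i), mul_zero]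
    rw [Finset.sum_congr rfl (fun i _ => e2 i), ← Finset.mul_sum]
    have e3 : C2 * W * max (b - t) 0 = C2 * max (∑ i, u i) 0 := by
      rw [mul_assoc, key W _ hWpos]
      congr 2
      rw [hu, hW, Finset.sum_mul, ← Finset.sum_sub_distrib]
      exact Finset.sum_congr rfl fun i _ => by ring
    rw [e3]
    have := combC n m hn hm1 u
    rw [← hC1, ← hC2, ← hP] at this
    linarith
  have final := lemmaA hf yv lam hy h0 h1 h2
  rw [hlam, hyv] at final
  rw [Fintype.sum_sum_type, Fintype.sum_sum_type] at final
  simp only [Sum.elim_inl, Sum.elim_inr, Finset.univ_unique, Finset.sum_singleton] at final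
  rw [Finset.sum_coe_sort P
    (fun s => -(∑ i ∈ s, w i) * f ((∑ i ∈ s, w i * x i) / (∑ i ∈ s, w i)))] at final
  have e4 : ∀ s ∈ P, (-(∑ i ∈ s, w i)) * f ((∑ i ∈ s, w i * x i) / (∑ i ∈ s, w i))
      = -((∑ i ∈ s, w i) * f ((∑ i ∈ s, w i * x i) / (∑ i ∈ s, w i))) := fun s hs => by ring
  rw [Finset.sum_congr rfl e4, Finset.sum_neg_distrib] at final
  have e2 : ∑ i, C1 * w i * f (x i) = C1 * ∑ i, w i * f (x i) := by
    rw [Finset.mul_sum]; exact Finset.sum_congr rfl fun i _ => by ring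
  rw [e2] at final
  linarith [final]
end

section
/- Let f be a convex function from an interval I ⊆ ℝ to ℝ, and let x₁, ..., xₙ be finitely many points of I. Then there exist real constants u and v and nonnegative reals a₁, ..., aₙ such that f(t) = v·t + u + ∑_{i=1}^n aᵢ·|t − xᵢ| holds for every t ∈ {x₁, x₂, ..., xₙ}. -/
open Finset

private lemma key_lemma (I : Set ℝ) (f : ℝ → ℝ) (hf : ConvexOn ℝ I f) (X : Finset ℝ)
    (hX : ∀ t ∈ X, t ∈ I) :
    ∀ S : Finset ℝ, S ⊆ X → S.Nonempty →
      ∃ (u v : ℝ) (b : ℝ → ℝ), (∀ t, 0 ≤ b t) ∧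
        (∀ z ∈ S, f z = v * z + u + ∑ t ∈ S, b t * |z - t|) ∧
        (∀ z ∈ X, ∀ w ∈ S, (∀ t ∈ S, t ≤ w) → w ≤ z →
          f w + (v + ∑ t ∈ S, b t) * (z - w) ≤ f z) := by
  intro S
  induction S using Finset.strongInduction with
  | _ S IH =>
    intro hSX hS
    set M := S.max' hS with hMdef
    have hMS : M ∈ S := S.max'_mem hS
    by_cases hS' : (S.erase M).Nonempty
    · -- inductive step
      set S' := S.erase M with hS'def
      have hsub : S' ⊆ X := fun t ht => hSX (Finset.erase_subset _ _ ht)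
      obtain ⟨u, v, b, hb0, heq, hinv⟩ := IH S' (Finset.erase_ssubset hMS) hsub hS'
      set y := S'.max' hS' with hydef
      have hyS' : y ∈ S' := S'.max'_mem hS'
      have hyM : y < M := by
        have h1 : y ≤ M := Finset.le_max' S y (Finset.erase_subset _ _ hyS')
        have h2 : y ≠ M := Finset.ne_of_mem_erase hyS'
        exact lt_of_le_of_ne h1 h2
      set s := v + ∑ t ∈ S', b t with hsdef
      set d := f M - f y - s * (M - y) with hddef
      have hd : 0 ≤ d := by
        have := hinv M (hSX hMS) y hyS' (fun t ht => Finset.le_max' S' t ht) hyM.le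
        simp only [hddef]; linarith
      set c := d / (2 * (M - y)) with hcdef
      have hMy : (0:ℝ) < M - y := by linarith
      have hc : 0 ≤ c := div_nonneg hd (by linarith)
      have hcd : 2 * c * (M - y) = d := by
        field_simp [hcdef]
        have hcM : 2 * c * (M - y) = c * (2 * (M - y)) := by ring
        rw [hcM, hcdef, div_mul_cancel₀ _ (ne_of_gt (by linarith : (0:ℝ) < 2 * (M - y)))]
      set b' : ℝ → ℝ := fun t => if t = M then 0 else if t = y then b y + c else b t with hb'def
      have hb'0 : ∀ t, 0 ≤ b' t := by
        intro t
        simp only [hb'def]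
        split
        · exact le_refl 0
        · split
          · exact add_nonneg (hb0 y) hc
          · exact hb0 t
      -- sum decomposition
      have hsumA : ∀ g : ℝ → ℝ, ∑ t ∈ S, b' t * g t = (∑ t ∈ S', b t * g t) + c * g y := by
        intro g
        rw [← Finset.add_sum_erase _ _ hMS]
        have h1 : b' M = 0 := by simp [hb'def]
        rw [h1, zero_mul, zero_add]
        rw [← Finset.add_sum_erase _ (fun t => b' t * g t) hyS',
            ← Finset.add_sum_erase _ (fun t => b t * g t) hyS']
        have h2 : b' y = b y + c := by
          simp [hb'def, ne_of_lt hyM]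
        rw [h2]
        have h3 : ∑ t ∈ S'.erase y, b' t * g t = ∑ t ∈ S'.erase y, b t * g t := by
          apply Finset.sum_congr rfl
          intro t ht
          have ht1 : t ≠ y := Finset.ne_of_mem_erase ht
          have ht2 : t ≠ M := Finset.ne_of_mem_erase (Finset.mem_of_mem_erase ht)
          simp only [hb'def, if_neg ht2, if_neg ht1]
        rw [h3]; ring
      have hsum0 : ∑ t ∈ S, b' t = (∑ t ∈ S', b t) + c := by
        have := hsumA (fun _ => 1)
        simpa using this
      refine ⟨u - c * y, v + c, b', hb'0, ?_, ?_⟩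
      · intro z hz
        rw [hsumA (fun t => |z - t|)]
        by_cases hzM : z = M
        · subst hzM
          have hyle : ∀ t ∈ S', t ≤ y := fun t ht => Finset.le_max' S' t ht
          have hMsum : ∑ t ∈ S', b t * |M - t| =
              (∑ t ∈ S', b t * |y - t|) + (∑ t ∈ S', b t) * (M - y) := by
            rw [Finset.sum_mul]
            rw [← Finset.sum_add_distrib]
            apply Finset.sum_congr rfl
            intro t ht
            have := hyle t ht
            rw [abs_of_nonneg (by linarith), abs_of_nonneg (by linarith)]
            ring
          have hfy := heq y hyS'
          rw [hMsum, abs_of_nonneg hMy.le]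
          simp only [hddef, hsdef] at hcd ⊢
          linarith [hfy]
        · have hzS' : z ∈ S' := Finset.mem_erase.mpr ⟨hzM, hz⟩
          have hzy : z ≤ y := Finset.le_max' S' z hzS'
          have := heq z hzS'
          rw [abs_of_nonpos (by linarith)]
          linarith
      · intro z hz w hw hmax hwz
        have hwM : w = M := le_antisymm (Finset.le_max' S w hw) (hmax M hMS)
        subst hwM
        rw [hsum0]
        have hs' : (v + c + ((∑ t ∈ S', b t) + c)) * (M - y) = f M - f y := by
          have : (v + c + ((∑ t ∈ S', b t) + c)) * (M - y)
              = s * (M - y) + 2 * c * (M - y) := by simp only [hsdef]; ring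
          rw [this, hcd]; simp only [hddef]; ring
        rcases eq_or_lt_of_le hwz with h | h
        · subst h; simp
        · have hslope := hf.slope_mono_adjacent (hX y (hsub hyS')) (hX z hz) hyM h
          have h1 : (f M - f y) / (M - y) ≤ (f z - f M) / (z - M) := hslope
          have h2 : v + c + ((∑ t ∈ S', b t) + c) = (f M - f y) / (M - y) := by
            rw [eq_div_iff (ne_of_gt hMy)]; exact hs'
          rw [h2]
          have hzM : (0:ℝ) < z - M := by linarith
          have h3 := (div_le_div_iff₀ hMy hzM).mp h1
          have h4 : (f M - f y) / (M - y) * (z - M) ≤ f z - f M := by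
            rw [div_mul_eq_mul_div, div_le_iff₀ hMy]
            nlinarith
          linarith
    · -- base case : S = {M}
      have hSM : ∀ z ∈ S, z = M := by
        intro z hz
        by_contra h
        exact hS' ⟨z, Finset.mem_erase.mpr ⟨h, hz⟩⟩
      set T := X.filter (fun z => M < z) with hTdef
      by_cases hT : T.Nonempty
      · set v := (T.image (fun z => (f z - f M) / (z - M))).min' (hT.image _) with hvdef
        refine ⟨f M - v * M, v, 0, fun t => le_refl 0, ?_, ?_⟩
        · intro z hz
          rw [hSM z hz]
          simp
        · intro z hz w hw hmax hwz
          rw [hSM w hw] at hwz ⊢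
          simp only [Pi.zero_apply, Finset.sum_const_zero, add_zero]
          rcases eq_or_lt_of_le hwz with h | h
          · subst h; simp
          · have hzT : z ∈ T := Finset.mem_filter.mpr ⟨hz, h⟩
            have hv : v ≤ (f z - f M) / (z - M) :=
              Finset.min'_le _ _ (Finset.mem_image_of_mem _ hzT)
            have hzM : (0:ℝ) < z - M := by linarith
            have := (le_div_iff₀ hzM).mp hv
            linarith
      · refine ⟨f M - 0 * M, 0, 0, fun t => le_refl 0, ?_, ?_⟩
        · intro z hz
          rw [hSM z hz]
          simp
        · intro z hz w hw hmax hwz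
          rw [hSM w hw] at hwz ⊢
          rcases eq_or_lt_of_le hwz with h | h
          · subst h; simp
          · exact absurd ⟨z, Finset.mem_filter.mpr ⟨hz, h⟩⟩ hT

theorem abs_interpolation (I : Set ℝ) (f : ℝ → ℝ) (hf : ConvexOn ℝ I f)
    (n : ℕ) (hn : 1 ≤ n) (x : Fin n → ℝ) (hx : ∀ i, x i ∈ I) :
    ∃ (u v : ℝ) (a : Fin n → ℝ), (∀ i, 0 ≤ a i) ∧
      ∀ j, f (x j) = v * x j + u + ∑ i, a i * |x j - x i| := by
  set X : Finset ℝ := Finset.image x Finset.univ with hXdef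
  have hX : ∀ t ∈ X, t ∈ I := by
    intro t ht
    obtain ⟨i, _, rfl⟩ := Finset.mem_image.mp ht
    exact hx i
  have hXne : X.Nonempty := by
    exact ⟨x ⟨0, Nat.lt_of_lt_of_le Nat.zero_lt_one hn⟩, Finset.mem_image_of_mem x (Finset.mem_univ _)⟩
  obtain ⟨u, v, b, hb0, heq, _⟩ := key_lemma I f hf X hX X (le_refl _) hXne
  set N : ℝ → ℕ := fun t => #{i | x i = t} with hNdef
  refine ⟨u, v, fun i => b (x i) / N (x i), ?_, ?_⟩
  · intro i
    exact div_nonneg (hb0 _) (Nat.cast_nonneg _)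
  · intro j
    have hxj : x j ∈ X := Finset.mem_image_of_mem x (Finset.mem_univ _)
    rw [heq (x j) hxj]
    congr 1
    have hcomp := Finset.sum_comp (s := Finset.univ) (fun t => b t / N t * |x j - t|) x
    rw [hcomp]
    apply Finset.sum_congr rfl
    intro t ht
    obtain ⟨i, _, rfl⟩ := Finset.mem_image.mp ht
    have hN : N (x i) ≠ 0 := by
      simp only [hNdef, ← Finset.card_ne_zero, ne_eq]
      intro h
      rw [Finset.card_eq_zero, Finset.filter_eq_empty_iff] at h
      exact h (Finset.mem_univ i) rfl
    rw [nsmul_eq_mul]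
    field_simp
    rfl
end

section
/- Let f be convex on an interval I ⊆ ℝ, and let x₁, ..., xₙ, y₁, ..., yₙ be 2n points of I. Assume that for every t ∈ {x₁,...,xₙ, y₁,...,yₙ} we have ∑_{i=1}^n |xᵢ − t| ≥ ∑_{i=1}^n |yᵢ − t|. Then ∑_{i=1}^n f(xᵢ) ≥ ∑_{i=1}^n f(yᵢ). -/
private lemma abel_id (K : ℕ) (c A : ℕ → ℝ) :
    ∑ j ∈ Finset.range (K+1), c j * (A (j+1) - A j) =
      c K * A (K+1) - c 0 * A 0 - ∑ j ∈ Finset.range K, (c (j+1) - c j) * A (j+1) := by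
  induction K with
  | zero => simp; ring
  | succ K ih =>
    rw [Finset.sum_range_succ, ih, Finset.sum_range_succ]
    ring

private lemma abel_bound (K : ℕ) (c A : ℕ → ℝ)
    (hc : ∀ j, j + 1 < K → c j ≤ c (j+1))
    (hA : ∀ j, j ≤ K → A j ≤ 0) (hA0 : A 0 = 0) (hAK : A K = 0) :
    0 ≤ ∑ j ∈ Finset.range K, c j * (A (j+1) - A j) := by
  cases K with
  | zero => simp
  | succ K =>
    rw [abel_id, hA0, hAK]
    have hle : ∑ j ∈ Finset.range K, (c (j+1) - c j) * A (j+1) ≤ 0 := by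
      apply Finset.sum_nonpos
      intro j hj
      rw [Finset.mem_range] at hj
      exact mul_nonpos_of_nonneg_of_nonpos (by linarith [hc j (by omega)])
        (hA (j+1) (by omega))
    linarith

theorem karamata_symmetric (I : Set ℝ) (f : ℝ → ℝ) (hf : ConvexOn ℝ I f)
    (n : ℕ) (hn : 1 ≤ n) (x y : Fin n → ℝ)
    (hx : ∀ i, x i ∈ I) (hy : ∀ i, y i ∈ I)
    (h : ∀ t ∈ Set.range x ∪ Set.range y,
      ∑ i, |x i - t| ≥ ∑ i, |y i - t|) :
    ∑ i, f (x i) ≥ ∑ i, f (y i) := by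
  classical
  set s : Finset ℝ := (Finset.univ.image x) ∪ (Finset.univ.image y) with hs
  have hsmem : ∀ t ∈ s, t ∈ Set.range x ∪ Set.range y := by
    intro t ht
    simp only [hs, Finset.mem_union, Finset.mem_image, Finset.mem_univ, true_and] at ht
    rcases ht with ⟨i, hi⟩ | ⟨i, hi⟩
    · exact Or.inl ⟨i, hi⟩
    · exact Or.inr ⟨i, hi⟩
  have hsI : ∀ t ∈ s, t ∈ I := by
    intro t ht
    rcases hsmem t ht with ⟨i, rfl⟩ | ⟨i, rfl⟩
    · exact hx i
    · exact hy i
  have hxs : ∀ i, x i ∈ s := by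
    intro i
    simp [hs, Finset.mem_union, Finset.mem_image]
  have hys : ∀ i, y i ∈ s := by
    intro i
    simp [hs, Finset.mem_union, Finset.mem_image]
  set L : List ℝ := s.sort (· ≤ ·) with hL
  set m : ℕ := L.length with hm
  set e : ℕ → ℝ := fun j => L.getD j 0 with he
  have heget : ∀ j (hj : j < m), e j = L.get ⟨j, hj⟩ := by
    intro j hj
    simp [he, List.getD, List.getElem?_eq_getElem hj, List.get_eq_getElem]
  have heS : ∀ j, j < m → e j ∈ s := by
    intro j hj
    rw [heget j hj, ← Finset.mem_sort (α := ℝ) (· ≤ ·)]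
    exact List.get_mem _ _
  have hm1 : 1 ≤ m := by
    by_contra hc
    have h0 : m = 0 := by omega
    have : x ⟨0, hn⟩ ∈ s := hxs _
    rw [← Finset.mem_sort (α := ℝ) (· ≤ ·), ← hL] at this
    rw [List.length_eq_zero_iff] at h0
    simp [h0] at this
  have hmono : ∀ i j, i < j → j < m → e i < e j := by
    intro i j hij hj
    rw [heget i (lt_trans hij hj), heget j hj]
    exact (Finset.sortedLT_sort s).pairwise.rel_get_of_lt (by exact hij)
  have hmono' : ∀ i j, i ≤ j → j < m → e i ≤ e j := by
    intro i j hij hj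
    rcases eq_or_lt_of_le hij with rfl | hlt
    · exact le_rfl
    · exact (hmono i j hlt hj).le
  have hmem : ∀ p ∈ s, ∃ k, k < m ∧ e k = p := by
    intro p hp
    rw [← Finset.mem_sort (α := ℝ) (· ≤ ·), ← hL, List.mem_iff_get] at hp
    obtain ⟨⟨k, hk⟩, hkp⟩ := hp
    exact ⟨k, hk, by rw [heget k hk]; exact hkp⟩
  have hemin : ∀ p ∈ s, e 0 ≤ p := by
    intro p hp
    obtain ⟨k, hk, rfl⟩ := hmem p hp
    exact hmono' 0 k (Nat.zero_le _) hk
  have hemax : ∀ p ∈ s, p ≤ e (m - 1) := by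
    intro p hp
    obtain ⟨k, hk, rfl⟩ := hmem p hp
    exact hmono' k (m-1) (by omega) (by omega)
  -- equal sums
  have hsum : ∑ i, x i = ∑ i, y i := by
    have exmax : ∀ (z : Fin n → ℝ), (∀ i, z i ∈ s) →
        ∑ i, |z i - e (m-1)| = n * e (m-1) - ∑ i, z i := by
      intro z hz
      have hzt : ∀ i : Fin n, |z i - e (m-1)| = e (m-1) - z i := by
        intro i
        rw [abs_sub_comm, abs_of_nonneg (by linarith [hemax _ (hz i)])]
      simp_rw [hzt]
      rw [Finset.sum_sub_distrib, Finset.sum_const, Finset.card_univ, Fintype.card_fin,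
        nsmul_eq_mul]
    have exmin : ∀ (z : Fin n → ℝ), (∀ i, z i ∈ s) →
        ∑ i, |z i - e 0| = ∑ i, z i - n * e 0 := by
      intro z hz
      have hzt : ∀ i : Fin n, |z i - e 0| = z i - e 0 := by
        intro i
        rw [abs_of_nonneg (by linarith [hemin _ (hz i)])]
      simp_rw [hzt]
      rw [Finset.sum_sub_distrib, Finset.sum_const, Finset.card_univ, Fintype.card_fin,
        nsmul_eq_mul]
    have h1 := h (e (m-1)) (hsmem _ (heS _ (by omega)))
    have h2 := h (e 0) (hsmem _ (heS 0 (by omega)))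
    rw [exmax x hxs, exmax y hys] at h1
    rw [exmin x hxs, exmin y hys] at h2
    linarith
  -- the deficiency function
  set A : ℕ → ℝ := fun j => (∑ i, min (x i) (e j)) - ∑ i, min (y i) (e j) with hA
  have hminid : ∀ a t : ℝ, min a t = (a + t - |a - t|)/2 := by
    intro a t
    have h1 : min a t + max a t = a + t := min_add_max a t
    have h2 : max a t - min a t = |a - t| := (max_sub_min_eq_abs a t).trans (abs_sub_comm t a)
    linarith
  have hminsum : ∀ (z : Fin n → ℝ) (t : ℝ),
      ∑ i, min (z i) t = (∑ i, z i + n * t - ∑ i, |z i - t|)/2 := by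
    intro z t
    simp_rw [hminid]
    rw [← Finset.sum_div, Finset.sum_sub_distrib, Finset.sum_add_distrib, Finset.sum_const,
      Finset.card_univ, Fintype.card_fin, nsmul_eq_mul]
  have hAle : ∀ j, j < m → A j ≤ 0 := by
    intro j hj
    have ht := h (e j) (hsmem _ (heS j hj))
    simp only [hA]
    rw [hminsum x (e j), hminsum y (e j), hsum]
    linarith
  have hA0 : A 0 = 0 := by
    have hz : ∀ (z : Fin n → ℝ), (∀ i, z i ∈ s) → ∑ i, min (z i) (e 0) = n * e 0 := by
      intro z hz
      have : ∀ i : Fin n, min (z i) (e 0) = e 0 := fun i => min_eq_right (hemin _ (hz i))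
      simp_rw [this]
      rw [Finset.sum_const, Finset.card_univ, Fintype.card_fin, nsmul_eq_mul]
    simp only [hA]
    rw [hz x hxs, hz y hys, sub_self]
  have hAK : A (m-1) = 0 := by
    have hz : ∀ (z : Fin n → ℝ), (∀ i, z i ∈ s) → ∑ i, min (z i) (e (m-1)) = ∑ i, z i := by
      intro z hz
      exact Finset.sum_congr rfl fun i _ => min_eq_left (hemax _ (hz i))
    simp only [hA]
    rw [hz x hxs, hz y hys, hsum, sub_self]
  -- slopes
  set σ : ℕ → ℝ := fun j => (f (e (j+1)) - f (e j)) / (e (j+1) - e j) with hσ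
  set K : ℕ := m - 1 with hK
  have hKm : K + 1 = m := by omega
  have hσmono : ∀ j, j + 1 < K → σ j ≤ σ (j+1) := by
    intro j hj
    have h1 : e j < e (j+1) := hmono j (j+1) (by omega) (by omega)
    have h2 : e (j+1) < e (j+2) := hmono (j+1) (j+2) (by omega) (by omega)
    have := hf.slope_mono_adjacent (hsI _ (heS j (by omega))) (hsI _ (heS (j+2) (by omega))) h1 h2
    simpa [hσ] using this
  -- representation of f at the node points
  have hrep : ∀ p ∈ s, f p = f (e 0) +
      ∑ j ∈ Finset.range K, σ j * (min p (e (j+1)) - min p (e j)) := by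
    intro p hp
    obtain ⟨k, hk, rfl⟩ := hmem p hp
    have hterm : ∀ j ∈ Finset.range K, σ j * (min (e k) (e (j+1)) - min (e k) (e j))
        = if j < k then f (e (j+1)) - f (e j) else 0 := by
      intro j hj
      rw [Finset.mem_range] at hj
      by_cases hjk : j < k
      · rw [if_pos hjk]
        have h1 : e j < e (j+1) := hmono j (j+1) (by omega) (by omega)
        have h2 : e (j+1) ≤ e k := hmono' (j+1) k (by omega) hk
        rw [min_eq_right h2, min_eq_right (h1.le.trans h2), hσ]
        exact div_mul_cancel₀ _ (sub_ne_zero.mpr h1.ne')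
      · rw [if_neg hjk]
        have h3 : e k ≤ e j := hmono' k j (by omega) (by omega)
        have h4 : e k ≤ e (j+1) := hmono' k (j+1) (by omega) (by omega)
        rw [min_eq_left h4, min_eq_left h3, sub_self, mul_zero]
    rw [Finset.sum_congr rfl hterm, ← Finset.sum_filter]
    have hfe : (Finset.range K).filter (· < k) = Finset.range k := by
      ext j
      simp only [Finset.mem_filter, Finset.mem_range]
      omega
    rw [hfe, Finset.sum_range_sub (fun j => f (e j)) k]
    ring
  -- summed representation
  have hsumrep : ∀ (z : Fin n → ℝ), (∀ i, z i ∈ s) →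
      ∑ i, f (z i) = n * f (e 0) + ∑ j ∈ Finset.range K, σ j *
        ((∑ i, min (z i) (e (j+1))) - ∑ i, min (z i) (e j)) := by
    intro z hz
    calc ∑ i, f (z i)
        = ∑ i : Fin n, (f (e 0) +
            ∑ j ∈ Finset.range K, σ j * (min (z i) (e (j+1)) - min (z i) (e j))) :=
          Finset.sum_congr rfl fun i _ => hrep _ (hz i)
      _ = n * f (e 0) + ∑ i : Fin n, ∑ j ∈ Finset.range K,
            σ j * (min (z i) (e (j+1)) - min (z i) (e j)) := by
          rw [Finset.sum_add_distrib, Finset.sum_const, Finset.card_univ, Fintype.card_fin,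
            nsmul_eq_mul]
      _ = n * f (e 0) + ∑ j ∈ Finset.range K, σ j *
            ((∑ i, min (z i) (e (j+1))) - ∑ i, min (z i) (e j)) := by
          rw [Finset.sum_comm]
          congr 1
          refine Finset.sum_congr rfl fun j _ => ?_
          rw [mul_sub, Finset.mul_sum, Finset.mul_sum, ← Finset.sum_sub_distrib]
          exact Finset.sum_congr rfl fun i _ => mul_sub _ _ _
  have hfinal : ∑ i, f (x i) - ∑ i, f (y i)
      = ∑ j ∈ Finset.range K, σ j * (A (j+1) - A j) := by
    rw [hsumrep x hxs, hsumrep y hys, add_sub_add_left_eq_sub, ← Finset.sum_sub_distrib]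
    exact Finset.sum_congr rfl fun j _ => by simp only [hA]; ring
  have hbound := abel_bound K σ A hσmono (fun j hj => hAle j (by omega)) hA0 (by
    rw [hK]; exact hAK)
  linarith
end

section
/- Let f be convex on an interval I ⊆ ℝ, let z₁, ..., z_N be N points of I, and let w₁, ..., w_N be reals satisfying ∑_{k=1}^N wₖ = 0 and ∑_{k=1}^N wₖ·|zₖ − t| ≥ 0 for every t ∈ {z₁, ..., z_N}. Then ∑_{k=1}^N wₖ·f(zₖ) ≥ 0. -/
lemma wks_max_half (a : ℝ) : max a 0 = (a + |a|) / 2 := by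
  rcases le_total a 0 with h | h
  · rw [max_eq_right h, abs_of_nonpos h]; ring
  · rw [max_eq_left h, abs_of_nonneg h]; ring

lemma wks_repr (I : Set ℝ) (f : ℝ → ℝ) (hf : ConvexOn ℝ I f)
    (m : ℕ) (L : ℕ → ℝ) (hmem : ∀ i, i < m → L i ∈ I)
    (hmono : ∀ i j, i < j → j < m → L i < L j)
    (d : ℕ → ℝ) (hd : ∀ i, d i = (f (L (i+1)) - f (L i)) / (L (i+1) - L i)) :
    ∀ j, j < m → f (L j) = f (L 0) + d 0 * (L j - L 0)
      + ∑ i ∈ Finset.Ico 1 (m-1), (d i - d (i-1)) * max (L j - L i) 0 := by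
  have hle : ∀ i j, i ≤ j → j < m → L i ≤ L j := by
    intro i j hij hj
    rcases eq_or_lt_of_le hij with rfl | h
    · exact le_rfl
    · exact (hmono i j h hj).le
  intro j
  induction j with
  | zero =>
    intro _
    have hz : ∀ i ∈ Finset.Ico 1 (m-1), (d i - d (i-1)) * max (L 0 - L i) 0 = 0 := by
      intro i hi
      simp only [Finset.mem_Ico] at hi
      have h1 : L 0 < L i := hmono 0 i hi.1 (by omega)
      rw [max_eq_right (by linarith), mul_zero]
    rw [Finset.sum_congr rfl hz]
    simp
  | succ j ih =>
    intro hj1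
    have hj : j < m := by omega
    have hLlt : L j < L (j+1) := hmono j (j+1) (by omega) hj1
    have hstep : f (L (j+1)) = f (L j) + d j * (L (j+1) - L j) := by
      rw [hd j, div_mul_cancel₀ _ (by linarith : L (j+1) - L j ≠ 0)]
      ring
    have hterm : ∀ i ∈ Finset.Ico 1 (m-1),
        (d i - d (i-1)) * max (L (j+1) - L i) 0
        = (d i - d (i-1)) * max (L j - L i) 0
          + (if i ∈ Finset.Ico 1 (j+1) then (d i - d (i-1)) * (L (j+1) - L j) else 0) := by
      intro i hi
      simp only [Finset.mem_Ico] at hi ⊢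
      by_cases hij : i ≤ j
      · have h1 : L i ≤ L j := hle i j hij hj
        rw [if_pos ⟨hi.1, by omega⟩, max_eq_left (by linarith), max_eq_left (by linarith)]
        ring
      · have h1 : L (j+1) ≤ L i := hle (j+1) i (by omega) (by omega)
        rw [if_neg (by omega), max_eq_right (by linarith), max_eq_right (by linarith)]
        ring
    have htel : ∑ i ∈ Finset.Ico 1 (j+1), (d i - d (i-1)) = d j - d 0 := by
      rw [Finset.sum_Ico_eq_sum_range]
      simp only [Nat.add_sub_cancel]
      have : ∀ i, d (1 + i) - d (1 + i - 1) = d (i+1) - d i := by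
        intro i; congr 2 <;> omega
      rw [Finset.sum_congr rfl (fun i _ => this i)]
      exact Finset.sum_range_sub d j
    have hsub : Finset.Ico 1 (j+1) ⊆ Finset.Ico 1 (m-1) := by
      apply Finset.Ico_subset_Ico le_rfl; omega
    rw [hstep, ih hj, Finset.sum_congr rfl hterm, Finset.sum_add_distrib,
      Finset.sum_ite_mem, Finset.inter_eq_right.mpr hsub, ← Finset.sum_mul, htel]
    ring

theorem weighted_karamata_symmetric (I : Set ℝ) (f : ℝ → ℝ) (hf : ConvexOn ℝ I f)
    (N : ℕ) (hN : 1 ≤ N) (z : Fin N → ℝ) (hz : ∀ k, z k ∈ I)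
    (w : Fin N → ℝ) (hw0 : ∑ k, w k = 0)
    (h : ∀ t ∈ Set.range z, ∑ k, w k * |z k - t| ≥ 0) :
    ∑ k, w k * f (z k) ≥ 0 := by
  classical
  set s : Finset ℝ := Finset.image z Finset.univ with hs
  have hs0 : s.Nonempty := ⟨z ⟨0, hN⟩, Finset.mem_image_of_mem z (Finset.mem_univ _)⟩
  set m := s.card with hmdef
  have hm : 0 < m := Finset.card_pos.2 hs0
  set e := s.orderIsoOfFin rfl with he
  set L : ℕ → ℝ := fun i => (e ⟨min i (m-1), by omega⟩ : ℝ) with hL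
  have hLs : ∀ i, L i ∈ s := fun i => (e _).2
  have hLz : ∀ i, L i ∈ Set.range z := by
    intro i
    have := hLs i
    rw [hs, Finset.mem_image] at this
    obtain ⟨k, _, hk⟩ := this
    exact ⟨k, hk⟩
  have hmemI : ∀ i, i < m → L i ∈ I := by
    intro i _
    obtain ⟨k, hk⟩ := hLz i
    rw [← hk]; exact hz k
  have hmono : ∀ i j, i < j → j < m → L i < L j := by
    intro i j hij hj
    have h1 : min i (m-1) < min j (m-1) := by omega
    have : (⟨min i (m-1), by omega⟩ : Fin m) < ⟨min j (m-1), by omega⟩ := h1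
    exact_mod_cast (e.lt_iff_lt.mpr this)
  have hle : ∀ i j, i ≤ j → j < m → L i ≤ L j := by
    intro i j hij hj
    rcases eq_or_lt_of_le hij with rfl | hlt
    · exact le_rfl
    · exact (hmono i j hlt hj).le
  -- every z k is some L j
  have hsurj : ∀ k, ∃ j, j < m ∧ L j = z k := by
    intro k
    have hzk : z k ∈ s := Finset.mem_image_of_mem z (Finset.mem_univ _)
    set u : s := ⟨z k, hzk⟩ with hu
    refine ⟨(e.symm u : Fin m), (e.symm u).2, ?_⟩
    have hmin : min ((e.symm u : Fin m) : ℕ) (m-1) = ((e.symm u : Fin m) : ℕ) := by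
      have := (e.symm u).2; omega
    rw [hL]
    simp only [hmin]
    have : (⟨((e.symm u : Fin m) : ℕ), by omega⟩ : Fin m) = e.symm u := by
      apply Fin.ext; rfl
    rw [this, OrderIso.apply_symm_apply]
  choose J hJm hJz using hsurj
  -- bounds
  have hlow : ∀ k, L 0 ≤ z k := fun k => (hJz k) ▸ hle 0 (J k) (Nat.zero_le _) (hJm k)
  have hhigh : ∀ k, z k ≤ L (m-1) := fun k => (hJz k) ▸ hle (J k) (m-1) (by have := hJm k; omega) (by omega)
  -- sum of w z = 0
  set S := ∑ k, w k * z k with hS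
  have hS0 : S = 0 := by
    have h1 := h (L 0) (hLz 0)
    have h2 := h (L (m-1)) (hLz (m-1))
    have e1 : ∑ k, w k * |z k - L 0| = S - L 0 * ∑ k, w k := by
      rw [Finset.mul_sum, ← Finset.sum_sub_distrib]
      apply Finset.sum_congr rfl
      intro k _
      rw [abs_of_nonneg (by linarith [hlow k])]
      ring
    have e2 : ∑ k, w k * |z k - L (m-1)| = L (m-1) * ∑ k, w k - S := by
      rw [Finset.mul_sum, ← Finset.sum_sub_distrib]
      apply Finset.sum_congr rfl
      intro k _
      rw [abs_of_nonpos (by linarith [hhigh k])]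
      ring
    rw [e1, hw0] at h1
    rw [e2, hw0] at h2
    linarith
  -- W nonneg at every point of range z
  have hW : ∀ t ∈ Set.range z, 0 ≤ ∑ k, w k * max (z k - t) 0 := by
    intro t ht
    have h1 := h t ht
    have e1 : ∑ k, w k * max (z k - t) 0
        = ((S - t * ∑ k, w k) + ∑ k, w k * |z k - t|) / 2 := by
      rw [hS, Finset.mul_sum, ← Finset.sum_sub_distrib, ← Finset.sum_add_distrib,
        Finset.sum_div]
      apply Finset.sum_congr rfl
      intro k _
      rw [wks_max_half]
      ring
    rw [e1, hw0, hS0]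
    linarith
  -- slopes
  set d : ℕ → ℝ := fun i => (f (L (i+1)) - f (L i)) / (L (i+1) - L i) with hd
  have hdmono : ∀ i ∈ Finset.Ico 1 (m-1), 0 ≤ d i - d (i-1) := by
    intro i hi
    simp only [Finset.mem_Ico] at hi
    have h1 : L (i-1) < L i := hmono (i-1) i (by omega) (by omega)
    have h2 : L i < L (i+1) := hmono i (i+1) (by omega) (by omega)
    have key := hf.slope_mono_adjacent (hmemI (i-1) (by omega)) (hmemI (i+1) (by omega)) h1 h2
    have hi1 : (i-1) + 1 = i := by omega
    have : d (i-1) ≤ d i := by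
      rw [hd]; simp only [hi1]; exact key
    linarith
  have hrepr := wks_repr I f hf m L hmemI hmono d (fun i => rfl)
  -- compute
  have hmain : ∑ k, w k * f (z k)
      = ∑ i ∈ Finset.Ico 1 (m-1), (d i - d (i-1)) * ∑ k, w k * max (z k - L i) 0 := by
    have e1 : ∀ k : Fin N, w k * f (z k)
        = w k * f (L 0) + (d 0 * (w k * z k - w k * L 0))
          + ∑ i ∈ Finset.Ico 1 (m-1), (d i - d (i-1)) * (w k * max (z k - L i) 0) := by
      intro k
      have := hrepr (J k) (hJm k)
      rw [hJz k] at this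
      rw [this, mul_add, mul_add, Finset.mul_sum]
      congr 1
      · ring
      · apply Finset.sum_congr rfl; intro i _; ring
    rw [Finset.sum_congr rfl (fun k _ => e1 k), Finset.sum_add_distrib,
      Finset.sum_add_distrib, ← Finset.sum_mul, hw0, Finset.sum_comm]
    have e2 : ∑ k, d 0 * (w k * z k - w k * L 0) = d 0 * (S - L 0 * ∑ k, w k) := by
      rw [← Finset.mul_sum, Finset.sum_sub_distrib, ← Finset.sum_mul, hS]
      ring
    rw [e2, hw0, hS0]
    simp only [zero_mul, mul_zero, sub_zero, zero_add]
    apply Finset.sum_congr rfl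
    intro i _
    rw [Finset.mul_sum]
  rw [ge_iff_le, hmain]
  apply Finset.sum_nonneg
  intro i hi
  exact mul_nonneg (hdmono i hi) (hW (L i) (hLz i))
end

section
/- Let n ≥ 1, let a₁, ..., aₙ be nonnegative reals, let S be a finite set, and for each s ∈ S let r_s : ℝⁿ → ℝ be a linear functional and b_s ≥ 0 a real. Define f : ℝⁿ → ℝ by f(x) = ∑_{u=1}^n a_u·|x_u| − ∑_{s∈S} b_s·|r_s(x)|. Then the following are equivalent: (1) f(x) ≥ 0 for every x ∈ ℝⁿ with x₁+...+xₙ = 0; (2) f(eᵢ − eⱼ) ≥ 0 for any two distinct indices i, j ∈ {1,...,n}. -/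
lemma decomp_zero_sum (n : ℕ) :
    ∀ N (x : Fin n → ℝ), (Finset.univ.filter fun u => x u ≠ 0).card ≤ N →
    (∑ u, x u) = 0 →
    ∃ (m : ℕ) (c : Fin m → ℝ) (I J : Fin m → Fin n),
      (∀ k, 0 ≤ c k) ∧ (∀ k, I k ≠ J k) ∧
      (∀ u, x u = ∑ k, c k * (((Pi.single (I k) 1 - Pi.single (J k) 1 : Fin n → ℝ)) u)) ∧
      (∀ u, |x u| = ∑ k, c k * |((Pi.single (I k) 1 - Pi.single (J k) 1 : Fin n → ℝ)) u|) := by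
  intro N
  induction N with
  | zero =>
    intro x hcard _
    have hx : ∀ u, x u = 0 := by
      intro u
      by_contra hu
      have : u ∈ Finset.univ.filter fun u => x u ≠ 0 := by simp [hu]
      have := Finset.card_pos.mpr ⟨u, this⟩
      omega
    exact ⟨0, Fin.elim0, Fin.elim0, Fin.elim0, fun k => k.elim0, fun k => k.elim0,
      fun u => by simp [hx u], fun u => by simp [hx u]⟩
  | succ N ih =>
    intro x hcard hsum
    by_cases hx0 : ∀ u, x u = 0
    · exact ⟨0, Fin.elim0, Fin.elim0, Fin.elim0, fun k => k.elim0, fun k => k.elim0,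
        fun u => by simp [hx0 u], fun u => by simp [hx0 u]⟩
    push_neg at hx0
    obtain ⟨v, hv⟩ := hx0
    have hi : ∃ i, 0 < x i := by
      by_contra hno
      push_neg at hno
      have : ∀ u ∈ Finset.univ, (0:ℝ) ≤ -x u := fun u _ => by linarith [hno u]
      have hz := (Finset.sum_eq_zero_iff_of_nonneg this).mp (by simp [hsum])
      exact hv (by linarith [hz v (Finset.mem_univ v)])
    have hj : ∃ j, x j < 0 := by
      by_contra hno
      push_neg at hno
      have : ∀ u ∈ Finset.univ, (0:ℝ) ≤ x u := fun u _ => hno u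
      have hz := (Finset.sum_eq_zero_iff_of_nonneg this).mp hsum
      exact hv (hz v (Finset.mem_univ v))
    obtain ⟨i, hip⟩ := hi
    obtain ⟨j, hjn⟩ := hj
    have hij : i ≠ j := fun h => by rw [h] at hip; linarith
    set t : ℝ := min (x i) (-(x j)) with ht_def
    have ht : 0 < t := lt_min hip (by linarith)
    have hti : t ≤ x i := min_le_left _ _
    have htj : t ≤ -(x j) := min_le_right _ _
    set g : Fin n → ℝ := Pi.single i 1 - Pi.single j 1 with hg_def
    have hgi : g i = 1 := by simp [hg_def, Pi.single_eq_of_ne hij]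
    have hgj : g j = -1 := by simp [hg_def, Pi.single_eq_of_ne hij.symm]
    have hgu : ∀ u, u ≠ i → u ≠ j → g u = 0 := by
      intro u hui huj
      simp [hg_def, Pi.single_eq_of_ne hui, Pi.single_eq_of_ne huj]
    set x' : Fin n → ℝ := fun u => x u - t * g u with hx'_def
    have hsum' : (∑ u, x' u) = 0 := by
      have hgsum : (∑ u, g u) = 0 := by
        simp [hg_def, Finset.sum_sub_distrib, Finset.sum_pi_single']
      simp [hx'_def, Finset.sum_sub_distrib, ← Finset.mul_sum, hgsum, hsum]
    -- support shrinks
    have hsub : (Finset.univ.filter fun u => x' u ≠ 0) ⊆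
        (Finset.univ.filter fun u => x u ≠ 0) := by
      intro u hu
      simp only [Finset.mem_filter, Finset.mem_univ, true_and] at hu ⊢
      intro hxu
      apply hu
      have hui : u ≠ i := fun h => by rw [h] at hxu; linarith
      have huj : u ≠ j := fun h => by rw [h] at hxu; linarith
      simp [hx'_def, hxu, hgu u hui huj]
    have hcard' : (Finset.univ.filter fun u => x' u ≠ 0).card ≤ N := by
      rcases min_cases (x i) (-(x j)) with ⟨he, _⟩ | ⟨he, _⟩
      · -- t = x i, so x' i = 0
        have hx'i : x' i = 0 := by simp only [hx'_def, hgi, mul_one]; rw [ht_def, he]; ring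
        have hsub2 : (Finset.univ.filter fun u => x' u ≠ 0) ⊆
            ((Finset.univ.filter fun u => x u ≠ 0).erase i) := by
          intro u hu
          refine Finset.mem_erase.mpr ⟨?_, hsub hu⟩
          intro h; subst h
          simp only [Finset.mem_filter] at hu; exact hu.2 hx'i
        have hmem : i ∈ Finset.univ.filter fun u => x u ≠ 0 := by
          simp; linarith
        have := Finset.card_le_card hsub2
        rw [Finset.card_erase_of_mem hmem] at this
        omega
      · have hx'j : x' j = 0 := by
          simp only [hx'_def, hgj, mul_neg_one]; rw [ht_def, he]; ring
        have hsub2 : (Finset.univ.filter fun u => x' u ≠ 0) ⊆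
            ((Finset.univ.filter fun u => x u ≠ 0).erase j) := by
          intro u hu
          refine Finset.mem_erase.mpr ⟨?_, hsub hu⟩
          intro h; subst h
          simp only [Finset.mem_filter] at hu; exact hu.2 hx'j
        have hmem : j ∈ Finset.univ.filter fun u => x u ≠ 0 := by
          simp; intro h; linarith
        have := Finset.card_le_card hsub2
        rw [Finset.card_erase_of_mem hmem] at this
        omega
    obtain ⟨m, c, I, J, hc, hIJ, hrep, habs⟩ := ih x' hcard' hsum'
    refine ⟨m + 1, Fin.cons t c, Fin.cons i I, Fin.cons j J, ?_, ?_, ?_, ?_⟩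
    · intro k
      refine Fin.cases ?_ ?_ k
      · exact ht.le
      · intro k'; exact hc k'
    · intro k
      refine Fin.cases ?_ ?_ k
      · exact hij
      · intro k'; exact hIJ k'
    · intro u
      rw [Fin.sum_univ_succ]
      simp only [Fin.cons_zero, Fin.cons_succ]
      have := hrep u
      simp only [hx'_def] at this
      rw [← hg_def]
      linarith [this]
    · intro u
      rw [Fin.sum_univ_succ]
      simp only [Fin.cons_zero, Fin.cons_succ]
      rw [← hg_def, ← habs u]
      -- |x u| = t * |g u| + |x' u|
      rcases eq_or_ne u i with rfl | hui
      · have hx'i : x' u = x u - t := by simp [hx'_def, hgi]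
        rw [hgi, hx'i, abs_of_pos hip, abs_of_nonneg (by linarith : (0:ℝ) ≤ x u - t)]
        simp
      rcases eq_or_ne u j with rfl | huj
      · have hx'j : x' u = x u + t := by simp [hx'_def, hgj]
        rw [hgj, hx'j, abs_of_neg hjn, abs_neg, abs_one,
          abs_of_nonpos (by linarith : x u + t ≤ 0)]
        ring
      · have : x' u = x u := by simp [hx'_def, hgu u hui huj]
        rw [hgu u hui huj, this]
        simp

theorem abs_criterion_zero_sum (n : ℕ) (hn : 1 ≤ n)
    (a : Fin n → ℝ) (ha : ∀ u, 0 ≤ a u)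
    (S : Type) [Fintype S] (r : S → (Fin n → ℝ) →ₗ[ℝ] ℝ)
    (b : S → ℝ) (hb : ∀ s, 0 ≤ b s)
    (f : (Fin n → ℝ) → ℝ)
    (hfdef : ∀ x, f x = (∑ u, a u * |x u|) - ∑ s, b s * |r s x|) :
    (∀ x : Fin n → ℝ, ∑ u, x u = 0 → 0 ≤ f x) ↔
      (∀ i j : Fin n, i ≠ j →
        0 ≤ f (Pi.single i (1 : ℝ) - Pi.single j (1 : ℝ))) := by
  constructor
  · intro h i j hij
    apply h
    simp [Finset.sum_sub_distrib, Finset.sum_pi_single']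
  · intro h x hx
    obtain ⟨m, c, I, J, hc, hIJ, hrep, habs⟩ :=
      decomp_zero_sum n (Finset.univ.filter fun u => x u ≠ 0).card x le_rfl hx
    set g : Fin m → Fin n → ℝ := fun k => Pi.single (I k) 1 - Pi.single (J k) 1 with hg_def
    have hxeq : x = ∑ k, c k • g k := by
      funext u
      rw [hrep u]
      simp [Finset.sum_apply, hg_def]
    have hA : (∑ u, a u * |x u|) = ∑ k, c k * (∑ u, a u * |g k u|) := by
      simp_rw [habs, Finset.mul_sum]
      rw [Finset.sum_comm]
      refine Finset.sum_congr rfl fun k _ => ?_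
      exact Finset.sum_congr rfl fun u _ => by simp only [hg_def]; ring
    have hr : ∀ s, r s x = ∑ k, c k * r s (g k) := by
      intro s
      rw [hxeq, map_sum]
      exact Finset.sum_congr rfl fun k _ => by rw [map_smul]; simp
    have hBle : (∑ s, b s * |r s x|) ≤ ∑ k, c k * (∑ s, b s * |r s (g k)|) := by
      have step : ∀ s, b s * |r s x| ≤ ∑ k, c k * (b s * |r s (g k)|) := by
        intro s
        have hre : (∑ k, c k * (b s * |r s (g k)|)) = b s * ∑ k, c k * |r s (g k)| := by
          rw [Finset.mul_sum]
          exact Finset.sum_congr rfl fun k _ => by ring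
        rw [hre]
        apply mul_le_mul_of_nonneg_left _ (hb s)
        calc |r s x| = |∑ k, c k * r s (g k)| := by rw [hr s]
          _ ≤ ∑ k, |c k * r s (g k)| := Finset.abs_sum_le_sum_abs _ _
          _ = ∑ k, c k * |r s (g k)| := by
              exact Finset.sum_congr rfl fun k _ => by
                rw [abs_mul, abs_of_nonneg (hc k)]
      calc (∑ s, b s * |r s x|) ≤ ∑ s, ∑ k, c k * (b s * |r s (g k)|) :=
            Finset.sum_le_sum fun s _ => step s
        _ = ∑ k, c k * (∑ s, b s * |r s (g k)|) := by
            rw [Finset.sum_comm]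
            exact Finset.sum_congr rfl fun k _ => by rw [Finset.mul_sum]
    have hfg : ∀ k, 0 ≤ f (g k) := fun k => h (I k) (J k) (hIJ k)
    have key : 0 ≤ ∑ k, c k * f (g k) :=
      Finset.sum_nonneg fun k _ => mul_nonneg (hc k) (hfg k)
    rw [hfdef]
    have expand : (∑ k, c k * f (g k)) =
        (∑ k, c k * (∑ u, a u * |g k u|)) - ∑ k, c k * (∑ s, b s * |r s (g k)|) := by
      rw [← Finset.sum_sub_distrib]
      exact Finset.sum_congr rfl fun k _ => by rw [hfdef]; ring
    rw [expand] at key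
    rw [hA]
    linarith
end

section
/- Let n ≥ 0, let a₁, ..., aₙ and a be nonnegative reals, let S be a finite set, and for each s ∈ S let r_s : ℝⁿ → ℝ be a linear functional and b_s ≥ 0. Define g : ℝⁿ → ℝ by g(x) = ∑_{u=1}^n a_u·|x_u| + a·|x₁+x₂+...+xₙ| − ∑_{s∈S} b_s·|r_s(x)|. Then the following are equivalent: (1) g(x) ≥ 0 for every x ∈ ℝⁿ; (2) g(eᵢ) ≥ 0 for every i ∈ {1,...,n}, and g(eᵢ − eⱼ) ≥ 0 for any two distinct i, j ∈ {1,...,n}. -/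
open Finset

private lemma R_add {n : ℕ} {S : Type} [Fintype S]
    (r : S → (Fin n → ℝ) →ₗ[ℝ] ℝ) (b : S → ℝ) (hb : ∀ s, 0 ≤ b s)
    (x y : Fin n → ℝ) :
    ∑ s, b s * |r s (x + y)| ≤ (∑ s, b s * |r s x|) + ∑ s, b s * |r s y| := by
  rw [← Finset.sum_add_distrib]
  apply Finset.sum_le_sum
  intro s _
  rw [← mul_add]
  refine mul_le_mul_of_nonneg_left ?_ (hb s)
  rw [map_add]
  exact abs_add_le _ _

private lemma R_smul {n : ℕ} {S : Type} [Fintype S]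
    (r : S → (Fin n → ℝ) →ₗ[ℝ] ℝ) (b : S → ℝ) {t : ℝ} (ht : 0 ≤ t)
    (x : Fin n → ℝ) :
    ∑ s, b s * |r s (t • x)| = t * ∑ s, b s * |r s x| := by
  rw [Finset.mul_sum]
  refine Finset.sum_congr rfl fun s _ => ?_
  rw [map_smul, smul_eq_mul, abs_mul, abs_of_nonneg ht]
  ring

private lemma single_eq_ite {n : ℕ} (i : Fin n) :
    (Pi.single i (1:ℝ)) = fun j => if i = j then (1:ℝ) else 0 := by
  ext j
  simp [Pi.single_apply, eq_comm]

private lemma key_base {n : ℕ} {S : Type} [Fintype S]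
    (a : Fin n → ℝ) (a' : ℝ)
    (r : S → (Fin n → ℝ) →ₗ[ℝ] ℝ) (b : S → ℝ) (hb : ∀ s, 0 ≤ b s)
    (h1 : ∀ i : Fin n, ∑ s, b s * |r s (Pi.single i 1)| ≤ a i + a')
    (x : Fin n → ℝ) (hx : ∀ u, 0 ≤ x u) :
    ∑ s, b s * |r s x| ≤ (∑ u, a u * |x u|) + a' * (∑ u, x u) := by
  have step1 : ∑ s, b s * |r s x| ≤ ∑ u, x u * ∑ s, b s * |r s (Pi.single u 1)| := by
    calc ∑ s, b s * |r s x|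
        ≤ ∑ s, b s * ∑ u, x u * |r s (Pi.single u 1)| := by
          apply Finset.sum_le_sum
          intro s _
          refine mul_le_mul_of_nonneg_left ?_ (hb s)
          rw [LinearMap.pi_apply_eq_sum_univ (r s) x]
          refine (Finset.abs_sum_le_sum_abs _ _).trans ?_
          apply Finset.sum_le_sum
          intro u _
          rw [smul_eq_mul, abs_mul, abs_of_nonneg (hx u), single_eq_ite]
      _ = ∑ u, x u * ∑ s, b s * |r s (Pi.single u 1)| := by
          simp_rw [Finset.mul_sum]
          rw [Finset.sum_comm]
          exact Finset.sum_congr rfl fun u _ => Finset.sum_congr rfl fun s _ => by ring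
  refine step1.trans ?_
  have step2 : ∑ u, x u * ∑ s, b s * |r s (Pi.single u 1)| ≤ ∑ u, x u * (a u + a') := by
    apply Finset.sum_le_sum
    intro u _
    exact mul_le_mul_of_nonneg_left (h1 u) (hx u)
  refine step2.trans ?_
  rw [Finset.mul_sum, ← Finset.sum_add_distrib]
  apply le_of_eq
  refine Finset.sum_congr rfl fun u _ => ?_
  rw [abs_of_nonneg (hx u)]
  ring

private lemma key {n : ℕ} {S : Type} [Fintype S]
    (a : Fin n → ℝ) (a' : ℝ)
    (r : S → (Fin n → ℝ) →ₗ[ℝ] ℝ) (b : S → ℝ) (hb : ∀ s, 0 ≤ b s)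
    (h1 : ∀ i : Fin n, ∑ s, b s * |r s (Pi.single i 1)| ≤ a i + a')
    (h2 : ∀ i j : Fin n, i ≠ j →
      ∑ s, b s * |r s (Pi.single i 1 - Pi.single j 1)| ≤ a i + a j) :
    ∀ N : ℕ, ∀ x : Fin n → ℝ, (univ.filter (fun u => x u ≠ 0)).card ≤ N →
      0 ≤ ∑ u, x u →
      ∑ s, b s * |r s x| ≤ (∑ u, a u * |x u|) + a' * (∑ u, x u) := by
  intro N
  induction N with
  | zero =>
    intro x hcard _
    have hx : ∀ u, 0 ≤ x u := by
      intro u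
      by_contra h
      have : u ∈ univ.filter (fun u => x u ≠ 0) := by
        simp only [mem_filter, mem_univ, true_and]
        intro h0; rw [h0] at h; exact h le_rfl
      have := Finset.card_pos.mpr ⟨u, this⟩
      omega
    exact key_base a a' r b hb h1 x hx
  | succ N ih =>
    intro x hcard hσ
    by_cases hx : ∀ u, 0 ≤ x u
    · exact key_base a a' r b hb h1 x hx
    push_neg at hx
    obtain ⟨j, hj⟩ := hx
    have hex : ∃ i, 0 < x i := by
      by_contra h
      push_neg at h
      have : ∑ u, x u < 0 := by
        have := Finset.sum_lt_sum (f := x) (g := fun _ => (0:ℝ))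
          (fun u _ => h u) ⟨j, Finset.mem_univ j, hj⟩
        simpa using this
      linarith
    obtain ⟨i, hi⟩ := hex
    have hij : i ≠ j := fun h => by rw [h] at hi; linarith
    set t : ℝ := min (x i) (-(x j)) with ht_def
    have ht : 0 < t := lt_min hi (by linarith)
    have hti : t ≤ x i := min_le_left _ _
    have htj : t ≤ -(x j) := min_le_right _ _
    set v : Fin n → ℝ := Pi.single i 1 - Pi.single j 1 with hv_def
    set x' : Fin n → ℝ := x - t • v with hx'_def
    have hvi : v i = 1 := by simp [hv_def, Pi.single_apply, hij]
    have hvj : v j = -1 := by simp [hv_def, Pi.single_apply, hij.symm]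
    have hvu : ∀ u, u ≠ i → u ≠ j → v u = 0 := by
      intro u hui huj
      simp [hv_def, Pi.single_apply, hui, huj]
    have hx'i : x' i = x i - t := by simp [hx'_def, hvi]
    have hx'j : x' j = x j + t := by
      simp only [hx'_def, Pi.sub_apply, Pi.smul_apply, smul_eq_mul, hvj]; ring
    have hx'u : ∀ u, u ≠ i → u ≠ j → x' u = x u := by
      intro u hui huj
      simp [hx'_def, hvu u hui huj]
    -- one of x' i, x' j is zero
    have hzero : x' i = 0 ∨ x' j = 0 := by
      rcases min_cases (x i) (-(x j)) with ⟨h, _⟩ | ⟨h, _⟩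
      · left; rw [hx'i, ht_def, h]; ring
      · right; rw [hx'j, ht_def, h]; ring
    -- card decreases
    have hcard' : (univ.filter (fun u => x' u ≠ 0)).card ≤ N := by
      obtain ⟨k, hk_mem, hk_zero⟩ :
          ∃ k, k ∈ univ.filter (fun u => x u ≠ 0) ∧ x' k = 0 := by
        rcases hzero with h | h
        · exact ⟨i, by simp [ne_of_gt hi], h⟩
        · exact ⟨j, by simp [ne_of_lt hj], h⟩
      have hsub : univ.filter (fun u => x' u ≠ 0) ⊆
          (univ.filter (fun u => x u ≠ 0)).erase k := by
        intro u hu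
        simp only [mem_filter, mem_univ, true_and] at hu
        rw [Finset.mem_erase]
        constructor
        · rintro rfl; exact hu hk_zero
        · simp only [mem_filter, mem_univ, true_and]
          by_cases hui : u = i
          · subst hui; exact ne_of_gt hi
          by_cases huj : u = j
          · subst huj; exact ne_of_lt hj
          · rw [← hx'u u hui huj]; exact hu
      have := Finset.card_le_card hsub
      have h2' := Finset.card_erase_of_mem hk_mem
      omega
    -- sum preserved
    have hσ' : ∑ u, x' u = ∑ u, x u := by
      simp only [hx'_def, Pi.sub_apply, Pi.smul_apply, smul_eq_mul,
        Finset.sum_sub_distrib, ← Finset.mul_sum]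
      have : ∑ u, v u = 0 := by
        simp [hv_def, Finset.sum_sub_distrib, Pi.single_apply]
      rw [this]; ring
    -- abs values
    have habs_i : |x i| = |x' i| + t := by
      rw [hx'i, abs_of_nonneg (by linarith), abs_of_nonneg (by linarith)]
      ring
    have habs_j : |x j| = |x' j| + t := by
      rw [hx'j, abs_of_nonpos (by linarith), abs_of_nonpos (by linarith)]
      ring
    -- abs sum identity
    have habs_sum : ∑ u, a u * |x u| = (∑ u, a u * |x' u|) + t * a i + t * a j := by
      have split : ∀ f : Fin n → ℝ,
          ∑ u, f u = f i + (f j + ∑ u ∈ (univ.erase i).erase j, f u) := by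
        intro f
        rw [← Finset.add_sum_erase _ f (mem_univ i),
          ← Finset.add_sum_erase _ f (by simp [hij.symm] : j ∈ univ.erase i)]
      rw [split (fun u => a u * |x u|), split (fun u => a u * |x' u|)]
      have : ∑ u ∈ (univ.erase i).erase j, a u * |x u|
          = ∑ u ∈ (univ.erase i).erase j, a u * |x' u| := by
        refine Finset.sum_congr rfl fun u hu => ?_
        simp only [Finset.mem_erase] at hu
        rw [hx'u u hu.2.1 hu.1]
      rw [this, habs_i, habs_j]
      ring
    -- main chain
    have hxsplit : x = x' + t • v := by
      simp [hx'_def]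
    have step := R_add r b hb x' (t • v)
    rw [← hxsplit] at step
    have hRv : ∑ s, b s * |r s (t • v)| = t * ∑ s, b s * |r s v| :=
      R_smul r b ht.le v
    have hIH := ih x' hcard' (by rw [hσ']; exact hσ)
    have hv2 := h2 i j hij
    calc ∑ s, b s * |r s x|
        ≤ (∑ s, b s * |r s x'|) + ∑ s, b s * |r s (t • v)| := step
      _ ≤ ((∑ u, a u * |x' u|) + a' * (∑ u, x' u)) + t * (a i + a j) := by
          rw [hRv]
          exact add_le_add hIH (mul_le_mul_of_nonneg_left hv2 ht.le)
      _ = (∑ u, a u * |x u|) + a' * (∑ u, x u) := by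
          rw [habs_sum, hσ']
          ring

theorem abs_criterion_all (n : ℕ)
    (a : Fin n → ℝ) (ha : ∀ u, 0 ≤ a u) (a' : ℝ) (ha' : 0 ≤ a')
    (S : Type) [Fintype S] (r : S → (Fin n → ℝ) →ₗ[ℝ] ℝ)
    (b : S → ℝ) (hb : ∀ s, 0 ≤ b s)
    (g : (Fin n → ℝ) → ℝ)
    (hgdef : ∀ x, g x = (∑ u, a u * |x u|) + a' * |∑ u, x u| - ∑ s, b s * |r s x|) :
    (∀ x : Fin n → ℝ, 0 ≤ g x) ↔
      ((∀ i : Fin n, 0 ≤ g (Pi.single i (1 : ℝ))) ∧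
       (∀ i j : Fin n, i ≠ j →
         0 ≤ g (Pi.single i (1 : ℝ) - Pi.single j (1 : ℝ)))) := by
  constructor
  · intro h
    exact ⟨fun i => h _, fun i j _ => h _⟩
  rintro ⟨hg1, hg2⟩
  -- extract h1
  have h1 : ∀ i : Fin n, ∑ s, b s * |r s (Pi.single i 1)| ≤ a i + a' := by
    intro i
    have := hg1 i
    rw [hgdef] at this
    have e1 : ∑ u, a u * |(Pi.single i (1:ℝ) : Fin n → ℝ) u| = a i := by
      rw [Finset.sum_eq_single i]
      · simp
      · intro u _ hu; simp [Pi.single_apply, hu]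
      · simp
    have e2 : ∑ u, (Pi.single i (1:ℝ) : Fin n → ℝ) u = 1 := by
      simp [Pi.single_apply]
    rw [e1, e2] at this
    simp only [abs_one, mul_one, sub_nonneg] at this
    exact this
  have h2 : ∀ i j : Fin n, i ≠ j →
      ∑ s, b s * |r s (Pi.single i 1 - Pi.single j 1)| ≤ a i + a j := by
    intro i j hij
    have := hg2 i j hij
    rw [hgdef] at this
    have e1 : ∑ u, a u * |(Pi.single i (1:ℝ) - Pi.single j 1 : Fin n → ℝ) u| = a i + a j := by
      have split : ∀ f : Fin n → ℝ,
          ∑ u, f u = f i + (f j + ∑ u ∈ (univ.erase i).erase j, f u) := by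
        intro f
        rw [← Finset.add_sum_erase _ f (mem_univ i),
          ← Finset.add_sum_erase _ f (by simp [hij.symm] : j ∈ univ.erase i)]
      rw [split]
      have hz : ∑ u ∈ (univ.erase i).erase j,
          a u * |(Pi.single i (1:ℝ) - Pi.single j 1 : Fin n → ℝ) u| = 0 := by
        apply Finset.sum_eq_zero
        intro u hu
        simp only [Finset.mem_erase] at hu
        simp [Pi.single_apply, hu.1, hu.2.1]
      rw [hz]
      simp [Pi.single_apply, hij, hij.symm]
    have e2 : ∑ u, (Pi.single i (1:ℝ) - Pi.single j 1 : Fin n → ℝ) u = 0 := by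
      simp [Pi.single_apply, Finset.sum_sub_distrib]
    rw [e1, e2] at this
    simp only [abs_zero, mul_zero, add_zero, sub_nonneg] at this
    exact this
  intro x
  rw [hgdef]
  rw [sub_nonneg]
  rcases le_or_gt 0 (∑ u, x u) with hσ | hσ
  · rw [abs_of_nonneg hσ]
    exact key a a' r b hb h1 h2 _ x le_rfl hσ
  · have hσ' : 0 ≤ ∑ u, (-x) u := by
      simp only [Pi.neg_apply, Finset.sum_neg_distrib]
      linarith
    have := key a a' r b hb h1 h2 _ (-x) le_rfl hσ'
    have eR : ∑ s, b s * |r s (-x)| = ∑ s, b s * |r s x| := by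
      refine Finset.sum_congr rfl fun s _ => ?_
      rw [map_neg, abs_neg]
    have ea : ∑ u, a u * |(-x) u| = ∑ u, a u * |x u| := by
      refine Finset.sum_congr rfl fun u _ => ?_
      rw [Pi.neg_apply, abs_neg]
    have eσ : ∑ u, (-x) u = -∑ u, x u := by
      simp [Finset.sum_neg_distrib]
    rw [eR, ea, eσ] at this
    rw [abs_of_neg hσ]
    linarith
end

section
/- Let n ≥ 0, let a₁, ..., aₙ and a be nonnegative reals, let S be a finite set, and for each s ∈ S let r_{s,1}, ..., r_{s,n} be nonnegative reals and b_s ≥ 0 a real. Assume aᵢ + a ≥ ∑_{s∈S} b_s·r_{s,i} for every i ∈ {1,...,n}, and aᵢ + aⱼ ≥ ∑_{s∈S} b_s·|r_{s,i} − r_{s,j}| for any two distinct i, j ∈ {1,...,n}. Then for any reals y₁, ..., yₙ we have ∑_{i=1}^n aᵢ·|yᵢ| + a·|∑_{v=1}^n y_v| − ∑_{s∈S} b_s·|∑_{v=1}^n r_{s,v}·y_v| ≥ 0. -/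
theorem abs_sum_nonneg (n : ℕ)
    (a : Fin n → ℝ) (ha : ∀ i, 0 ≤ a i) (a' : ℝ) (ha' : 0 ≤ a')
    (S : Type) [Fintype S] (r : S → Fin n → ℝ) (hr : ∀ s i, 0 ≤ r s i)
    (b : S → ℝ) (hb : ∀ s, 0 ≤ b s)
    (h1 : ∀ i : Fin n, a i + a' ≥ ∑ s, b s * r s i)
    (h2 : ∀ i j : Fin n, i ≠ j → a i + a j ≥ ∑ s, b s * |r s i - r s j|)
    (y : Fin n → ℝ) :
    (∑ i, a i * |y i|) + a' * |∑ v, y v| - (∑ s, b s * |∑ v, r s v * y v|) ≥ 0 := by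
  rcases Nat.eq_zero_or_pos n with hn | hn
  · subst hn; simp
  set ε : S → ℝ := fun s => if 0 ≤ ∑ v, r s v * y v then 1 else -1 with hε
  have hεabs : ∀ s, |ε s| = 1 := by
    intro s; simp only [hε]; split <;> simp
  have hεmul : ∀ s, ε s * (∑ v, r s v * y v) = |∑ v, r s v * y v| := by
    intro s; simp only [hε]; split
    · rw [abs_of_nonneg ‹_›]; ring
    · rw [abs_of_neg (lt_of_not_ge ‹_›)]; ring
  set c : Fin n → ℝ := fun v => ∑ s, b s * ε s * r s v with hc
  have hbound1 : ∀ i, |c i| ≤ a i + a' := by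
    intro i
    calc |c i| ≤ ∑ s, |b s * ε s * r s i| := Finset.abs_sum_le_sum_abs _ _
      _ = ∑ s, b s * r s i := by
          apply Finset.sum_congr rfl; intro s _
          rw [abs_mul, abs_mul, hεabs, abs_of_nonneg (hb s), abs_of_nonneg (hr s i)]
          ring
      _ ≤ a i + a' := h1 i
  have hbound2 : ∀ i j, |c i - c j| ≤ a i + a j := by
    intro i j
    rcases eq_or_ne i j with rfl | hij
    · simp only [sub_self, abs_zero]
      have := ha i; linarith
    calc |c i - c j| = |∑ s, (b s * ε s * r s i - b s * ε s * r s j)| := by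
            rw [← Finset.sum_sub_distrib]
      _ ≤ ∑ s, |b s * ε s * r s i - b s * ε s * r s j| := Finset.abs_sum_le_sum_abs _ _
      _ = ∑ s, b s * |r s i - r s j| := by
            apply Finset.sum_congr rfl; intro s _
            rw [show b s * ε s * r s i - b s * ε s * r s j
                  = (b s * ε s) * (r s i - r s j) by ring,
              abs_mul, abs_mul, hεabs, abs_of_nonneg (hb s)]
            ring
      _ ≤ a i + a j := h2 i j hij
  have hne : (Finset.univ : Finset (Fin n)).Nonempty := ⟨⟨0, hn⟩, Finset.mem_univ _⟩
  set t : ℝ := max (-a') (Finset.univ.sup' hne (fun v => c v - a v)) with ht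
  have htle : t ≤ a' := by
    apply max_le (by linarith)
    apply Finset.sup'_le
    intro v _
    have := (abs_le.mp (hbound1 v)).2
    linarith
  have htge : -a' ≤ t := le_max_left _ _
  have htv : ∀ v, |c v - t| ≤ a v := by
    intro v
    rw [abs_le]
    constructor
    · rcases max_cases (-a') (Finset.univ.sup' hne (fun v => c v - a v)) with
        ⟨heq, _⟩ | ⟨heq, _⟩
      · have := (abs_le.mp (hbound1 v)).1
        rw [ht, heq]; linarith
      · rw [ht, heq]
        obtain ⟨w, _, hw⟩ := Finset.exists_mem_eq_sup' hne (fun v => c v - a v)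
        rw [hw]
        have := (abs_le.mp (hbound2 w v)).2
        linarith
    · have h := Finset.le_sup' (fun v => c v - a v) (Finset.mem_univ v)
      have h' := le_max_right (-a') (Finset.univ.sup' hne (fun v => c v - a v))
      rw [ht]
      linarith
  have key : (∑ s, b s * |∑ v, r s v * y v|) = ∑ v, c v * y v := by
    calc (∑ s, b s * |∑ v, r s v * y v|)
        = ∑ s, ∑ v, b s * ε s * r s v * y v := by
          apply Finset.sum_congr rfl; intro s _
          rw [← hεmul s, Finset.mul_sum, Finset.mul_sum]
          apply Finset.sum_congr rfl; intro v _; ring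
      _ = ∑ v, ∑ s, b s * ε s * r s v * y v := Finset.sum_comm
      _ = ∑ v, c v * y v := by
          apply Finset.sum_congr rfl; intro v _
          rw [hc, Finset.sum_mul]
  rw [key]
  have expand : ∑ v, c v * y v = t * (∑ v, y v) + ∑ v, (c v - t) * y v := by
    rw [Finset.mul_sum, ← Finset.sum_add_distrib]
    apply Finset.sum_congr rfl; intro v _; ring
  have h1' : t * (∑ v, y v) ≤ a' * |∑ v, y v| := by
    calc t * (∑ v, y v) ≤ |t * (∑ v, y v)| := le_abs_self _
      _ = |t| * |∑ v, y v| := abs_mul _ _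
      _ ≤ a' * |∑ v, y v| := by
          apply mul_le_mul_of_nonneg_right _ (abs_nonneg _)
          rw [abs_le]; exact ⟨by linarith, htle⟩
  have h2' : ∑ v, (c v - t) * y v ≤ ∑ v, a v * |y v| := by
    apply Finset.sum_le_sum
    intro v _
    calc (c v - t) * y v ≤ |(c v - t) * y v| := le_abs_self _
      _ = |c v - t| * |y v| := abs_mul _ _
      _ ≤ a v * |y v| := mul_le_mul_of_nonneg_right (htv v) (abs_nonneg _)
  have := expand
  linarith [expand, h1', h2']
end
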